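/- arXiv:2006.15765 — 13 statements merged into one kernel-verified Lean document; each statement's English description precedes it below -/
import Mathlib

section
/- For every j = 1,…,m, the trace of the bilinear form A_j with respect to the inner product Q|_𝔭 equals d_j(1−κ_j); that is, for any Q-orthonormal basis (v_1,…,v_n) of 𝔭 one has ∑_{l=1}^n A_j(v_l, v_l) = d_j(1−κ_j). -/
/-!
Take a `Q`-orthonormal basis `(e_a)` of `𝔨_j`, so that `π_j = ∑_a Q(·, e_a) e_a` and
`B(e_a, e_a) = -1`. By invariance of `B`, `∑_l A_j(v_l, v_l) = ∑_{l,a} Q(ad(v_l)² e_a, e_a)` equals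
`-∑_a ∑_l Q(ad(e_a)² v_l, v_l)`, and the inner sum is the `𝔭`-part of `tr ad(e_a)² = B(e_a, e_a)`.
Since `ad(e_a)²` preserves `𝔭` and maps `𝔨` into the ideal `𝔨_j`, the remaining part of that trace
is the trace of `ad(e_a)²` on `𝔨_j`, that is `κ_j B(e_a, e_a)`. So each `a` contributes `1 - κ_j`.
-/

open LinearMap (BilinForm)
open Module

namespace LinearMap.BilinForm

variable {R V : Type*} [CommRing R] [AddCommGroup V] [Module R V]
  {ι : Type*} [Fintype ι] (Q : BilinForm R V)

/-- The `Q`-orthogonal projection onto the span of a `Q`-orthonormal family `w`. -/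
def orthoProj (w : ι → V) : V →ₗ[R] V := ∑ i, (Q.flip (w i)).smulRight (w i)

variable {Q}

theorem orthoProj_apply (w : ι → V) (x : V) : Q.orthoProj w x = ∑ i, Q x (w i) • w i := by
  simp [orthoProj]

theorem trace_orthoProj_comp [Free R V] [Module.Finite R V] (w : ι → V) (g : V →ₗ[R] V) :
    trace R V (Q.orthoProj w ∘ₗ g) = ∑ i, Q (g (w i)) (w i) := by
  have hcomp : Q.orthoProj w ∘ₗ g = ∑ i, (Q.flip (w i) ∘ₗ g).smulRight (w i) := by
    ext x
    simp [orthoProj_apply]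
  simp [hcomp]

variable [DecidableEq ι] {w : ι → V}

theorem orthoProj_apply_of_mem_span (hw : ∀ i k, Q (w i) (w k) = if i = k then 1 else 0)
    {x : V} (hx : x ∈ Submodule.span R (Set.range w)) :
    Q.orthoProj w x = x := by
  obtain ⟨c, rfl⟩ := Submodule.mem_span_range_iff_exists_fun R |>.mp hx
  simp [orthoProj_apply, hw]

theorem eq_orthoProj (hw : ∀ i k, Q (w i) (w k) = if i = k then 1 else 0) {P : V →ₗ[R] V}
    (hP : ∀ x, P x ∈ Submodule.span R (Set.range w))
    (horth : ∀ x i, Q (x - P x) (w i) = 0) : P = Q.orthoProj w := by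
  ext x
  rw [← orthoProj_apply_of_mem_span hw (hP x), orthoProj_apply, orthoProj_apply]
  refine Finset.sum_congr rfl fun i _ => ?_
  have := horth x i
  rw [map_sub, LinearMap.sub_apply, sub_eq_zero] at this
  rw [this]

theorem orthoProj_basis_eq_id {n : Type*} [Fintype n] [DecidableEq n] (b : Basis n R V)
    (hb : ∀ i k, Q (b i) (b k) = if i = k then 1 else 0) : Q.orthoProj b = LinearMap.id :=
  LinearMap.ext fun x => orthoProj_apply_of_mem_span hb (b.mem_span x)

theorem trace_eq_trace_orthoProj_comp {W : Type*} [AddCommGroup W] [Module R W] [Free R V]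
    [Module.Finite R V] [Free R W] [Module.Finite R W] {n : Type*} [Fintype n] [DecidableEq n]
    (φ : W →ₗ[R] V) (b : Basis n R W)
    (hb : ∀ i k, Q (φ (b i)) (φ (b k)) = if i = k then 1 else 0)
    {f : W →ₗ[R] W} {g : V →ₗ[R] V} (hfg : g ∘ₗ φ = φ ∘ₗ f) :
    trace R W f = trace R V (Q.orthoProj (φ ∘ b) ∘ₗ g) := by
  have hΦ : orthoProj (Q.compl₁₂ φ φ) b = LinearMap.id := orthoProj_basis_eq_id b hb
  rw [← LinearMap.id_comp f, ← hΦ, trace_orthoProj_comp, trace_orthoProj_comp]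
  refine Finset.sum_congr rfl fun i _ => ?_
  change Q (φ (f (b i))) (φ (b i)) = Q (g (φ (b i))) (φ (b i))
  rw [← LinearMap.comp_apply g φ, hfg, LinearMap.comp_apply]

theorem exists_basis_orthonormal {W : Type*} [AddCommGroup W] [Module ℝ W]
    [FiniteDimensional ℝ W] {Φ : BilinForm ℝ W} (hsymm : Φ.IsSymm) (hpos : ∀ x, x ≠ 0 → 0 < Φ x x) :
    ∃ b : Basis (Fin (finrank ℝ W)) ℝ W, ∀ i k, Φ (b i) (b k) = if i = k then 1 else 0 := by
  let c : InnerProductSpace.Core ℝ W :=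
    { inner x y := Φ x y
      conj_inner_symm x y := by simpa using hsymm.eq y x
      re_inner_nonneg x := by
        rcases eq_or_ne x 0 with rfl | hx
        · simp
        · simpa using (hpos x hx).le
      add_left x y z := by simp
      smul_left x y r := by simp
      definite x hx := by
        by_contra h
        exact (hpos x h).ne' (by simpa using hx) }
  let : NormedAddCommGroup W := c.toNormedAddCommGroup
  let : InnerProductSpace ℝ W := InnerProductSpace.ofCore c.toCore
  exact ⟨(stdOrthonormalBasis ℝ W).toBasis, fun i k => by
    rw [OrthonormalBasis.coe_toBasis]
    exact orthonormal_iff_ite.mp (stdOrthonormalBasis ℝ W).orthonormal i k⟩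

end LinearMap.BilinForm

open LinearMap.BilinForm LieAlgebra
open LinearMap (trace)

section CartanDecomposition

variable {𝔤 : Type*} [LieRing 𝔤] [LieAlgebra ℝ 𝔤]
  {𝔭 : Submodule ℝ 𝔤} {𝔨 : LieSubalgebra ℝ 𝔤} {Q : BilinForm ℝ 𝔤}

/-- Both sides equal `B(⁅X, z⁆, ⁅X, z⁆)`, by invariance of the Killing form `B`. -/
theorem apply_lie_lie_eq_neg_apply_lie_lie (hkp : ∀ x ∈ 𝔨, ∀ y ∈ 𝔭, ⁅x, y⁆ ∈ 𝔭)
    (hpp : ∀ x ∈ 𝔭, ∀ y ∈ 𝔭, ⁅x, y⁆ ∈ 𝔨)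
    (hQpp : ∀ x ∈ 𝔭, ∀ y ∈ 𝔭, Q x y = killingForm ℝ 𝔤 x y)
    (hQkk : ∀ x ∈ 𝔨, ∀ y ∈ 𝔨, Q x y = -(killingForm ℝ 𝔤 x y))
    {X z : 𝔤} (hX : X ∈ 𝔭) (hz : z ∈ 𝔨) :
    Q ⁅X, ⁅X, z⁆⁆ z = -Q ⁅z, ⁅z, X⁆⁆ X := by
  have hzX : ⁅z, X⁆ ∈ 𝔭 := hkp z hz X hX
  have hXz : ⁅X, z⁆ ∈ 𝔭 := by simpa only [← lie_skew X z, neg_mem_iff] using hzX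
  have hinv := LieModule.traceForm_apply_lie_apply' ℝ 𝔤 𝔤
  rw [hQkk _ (hpp X hX _ hXz) z hz, hQpp _ (hkp z hz _ hzX) X hX, hinv X, hinv z,
    ← lie_skew z X]
  simp only [map_neg, LinearMap.neg_apply, neg_neg]

theorem killingForm_eq_sum_add_trace_orthoProj_comp [FiniteDimensional ℝ 𝔤]
    (hcompl : Codisjoint 𝔭 𝔨.toSubmodule)
    (hkp : ∀ x ∈ 𝔨, ∀ y ∈ 𝔭, ⁅x, y⁆ ∈ 𝔭) (hQpk : ∀ x ∈ 𝔭, ∀ y ∈ 𝔨, Q x y = 0 ∧ Q y x = 0)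
    {n : Type*} [Fintype n] [DecidableEq n] {v : n → 𝔤} (hv𝔭 : ∀ l, v l ∈ 𝔭)
    (hvon : ∀ l l', Q (v l) (v l') = if l = l' then 1 else 0)
    (hvspan : Submodule.span ℝ (Set.range v) = 𝔭)
    {d : Type*} [Fintype d] [DecidableEq d] {e : d → 𝔤} (he𝔨 : ∀ a, e a ∈ 𝔨)
    (heon : ∀ a a', Q (e a) (e a') = if a = a' then 1 else 0)
    {z : 𝔤} (hz : z ∈ 𝔨) (hzz : ∀ y ∈ 𝔨, ⁅z, ⁅z, y⁆⁆ ∈ Submodule.span ℝ (Set.range e)) :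
    killingForm ℝ 𝔤 z z
      = ∑ l, Q ⁅z, ⁅z, v l⁆⁆ (v l) + trace ℝ 𝔤 (Q.orthoProj e ∘ₗ ad ℝ 𝔤 z ∘ₗ ad ℝ 𝔤 z) := by
  have he : Submodule.span ℝ (Set.range e) ≤ 𝔨.toSubmodule :=
    Submodule.span_le.mpr (Set.range_subset_iff.mpr he𝔨)
  have hid :
      (Q.orthoProj v + Q.orthoProj e) ∘ₗ ad ℝ 𝔤 z ∘ₗ ad ℝ 𝔤 z = ad ℝ 𝔤 z ∘ₗ ad ℝ 𝔤 z := by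
    refine LinearMap.ext_on_codisjoint hcompl (fun p hp => ?_) (fun k hk => ?_)
    · have hzzp : ⁅z, ⁅z, p⁆⁆ ∈ 𝔭 := hkp z hz _ (hkp z hz p hp)
      simp only [LinearMap.comp_apply, LinearMap.add_apply, ad_apply,
        orthoProj_apply_of_mem_span hvon (hvspan ▸ hzzp), orthoProj_apply,
        (hQpk _ hzzp _ (he𝔨 _)).1, zero_smul, Finset.sum_const_zero, add_zero]
    · have hzzk := hzz k hk
      simp only [LinearMap.comp_apply, LinearMap.add_apply, ad_apply,
        orthoProj_apply_of_mem_span heon hzzk, orthoProj_apply,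
        (hQpk _ (hv𝔭 _) _ (he hzzk)).2, zero_smul, Finset.sum_const_zero, zero_add]
  conv_lhs => rw [killingForm_apply_apply, ← hid]
  rw [LinearMap.add_comp, map_add, trace_orthoProj_comp]
  simp only [LinearMap.comp_apply, ad_apply]

theorem exists_basis_orthonormal_of_lieIdeal
    (hneg : ∀ x ∈ 𝔨, x ≠ 0 → killingForm ℝ 𝔤 x x < 0)
    (hQkk : ∀ x ∈ 𝔨, ∀ y ∈ 𝔨, Q x y = -(killingForm ℝ 𝔤 x y))
    (I : LieIdeal ℝ 𝔨) [FiniteDimensional ℝ I] :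
    ∃ b : Basis (Fin (finrank ℝ I)) ℝ I,
      ∀ a a', Q ((b a : 𝔨) : 𝔤) ((b a' : 𝔨) : 𝔤) = if a = a' then 1 else 0 := by
  let φ : I →ₗ[ℝ] 𝔤 := 𝔨.toSubmodule.subtype ∘ₗ I.toSubmodule.subtype
  have hmem (x : I) : φ x ∈ 𝔨 := (x : 𝔨).2
  refine exists_basis_orthonormal (Φ := Q.compl₁₂ φ φ) ⟨fun x y => ?_⟩ fun x hx => ?_
  · change Q (φ x) (φ y) = Q (φ y) (φ x)
    rw [hQkk _ (hmem x) _ (hmem y), hQkk _ (hmem y) _ (hmem x), LieModule.traceForm_comm]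
  · change 0 < Q (φ x) (φ x)
    rw [hQkk _ (hmem x) _ (hmem x), neg_pos]
    exact hneg _ (hmem x) fun h => hx (Subtype.ext (Subtype.ext h))

theorem mem_span_of_mem_lieIdeal {I : LieIdeal ℝ 𝔨} {d : Type*} (b : Basis d ℝ I) {y : 𝔨}
    (hy : y ∈ I) : (y : 𝔤) ∈ Submodule.span ℝ (Set.range fun a => ((b a : 𝔨) : 𝔤)) := by
  have := Submodule.apply_mem_span_image_of_mem_span
    (𝔨.toSubmodule.subtype ∘ₗ I.toSubmodule.subtype) (b.mem_span ⟨y, hy⟩)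
  rwa [← Set.range_comp] at this

theorem sum_apply_lie_lie_eq_one_sub_mul_killingForm [FiniteDimensional ℝ 𝔤]
    (hcompl : Codisjoint 𝔭 𝔨.toSubmodule)
    (hkp : ∀ x ∈ 𝔨, ∀ y ∈ 𝔭, ⁅x, y⁆ ∈ 𝔭) (hQpk : ∀ x ∈ 𝔭, ∀ y ∈ 𝔨, Q x y = 0 ∧ Q y x = 0)
    {n : Type*} [Fintype n] [DecidableEq n] {v : n → 𝔤} (hv𝔭 : ∀ l, v l ∈ 𝔭)
    (hvon : ∀ l l', Q (v l) (v l') = if l = l' then 1 else 0)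
    (hvspan : Submodule.span ℝ (Set.range v) = 𝔭)
    {I : LieIdeal ℝ 𝔨} [FiniteDimensional ℝ I] {κ : ℝ}
    (hκ : ∀ x y : I, killingForm ℝ I x y = κ * killingForm ℝ 𝔤 ((x : 𝔨) : 𝔤) ((y : 𝔨) : 𝔤))
    {d : Type*} [Fintype d] [DecidableEq d] {b : Basis d ℝ I}
    (hb : ∀ a a', Q ((b a : 𝔨) : 𝔤) ((b a' : 𝔨) : 𝔤) = if a = a' then 1 else 0) (z : I) :
    ∑ l, Q ⁅((z : 𝔨) : 𝔤), ⁅((z : 𝔨) : 𝔤), v l⁆⁆ (v l)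
      = (1 - κ) * killingForm ℝ 𝔤 ((z : 𝔨) : 𝔤) ((z : 𝔨) : 𝔤) := by
  have hsplit := killingForm_eq_sum_add_trace_orthoProj_comp hcompl hkp hQpk hv𝔭 hvon hvspan
    (fun a => (b a : 𝔨).2) hb (z : 𝔨).2 fun y hy =>
      mem_span_of_mem_lieIdeal b (lie_mem_left ℝ 𝔨 I _ ⁅(z : 𝔨), ⟨y, hy⟩⁆ z.2)
  have hideal : killingForm ℝ I z z = trace ℝ 𝔤 (Q.orthoProj (fun a => ((b a : 𝔨) : 𝔤)) ∘ₗ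
      ad ℝ 𝔤 ((z : 𝔨) : 𝔤) ∘ₗ ad ℝ 𝔤 ((z : 𝔨) : 𝔤)) := by
    rw [killingForm_apply_apply]
    exact trace_eq_trace_orthoProj_comp (𝔨.toSubmodule.subtype ∘ₗ I.toSubmodule.subtype) b hb rfl
  rw [← hideal, hκ] at hsplit
  linarith

end CartanDecomposition

theorem stmt_0_general
    (𝔤 : Type*) [LieRing 𝔤] [LieAlgebra ℝ 𝔤] [FiniteDimensional ℝ 𝔤]
    (𝔭 : Submodule ℝ 𝔤) (𝔨 : LieSubalgebra ℝ 𝔤)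
    (hcompl : IsCompl 𝔭 𝔨.toSubmodule)
    (hkp : ∀ x ∈ 𝔨, ∀ y ∈ 𝔭, ⁅x, y⁆ ∈ 𝔭)
    (hpp : ∀ x ∈ 𝔭, ∀ y ∈ 𝔭, ⁅x, y⁆ ∈ 𝔨)
    (hneg : ∀ x ∈ 𝔨, x ≠ 0 → killingForm ℝ 𝔤 x x < 0)
    (Q : LinearMap.BilinForm ℝ 𝔤)
    (hQpp : ∀ x ∈ 𝔭, ∀ y ∈ 𝔭, Q x y = killingForm ℝ 𝔤 x y)
    (hQkk : ∀ x ∈ 𝔨, ∀ y ∈ 𝔨, Q x y = -(killingForm ℝ 𝔤 x y))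
    (hQpk : ∀ x ∈ 𝔭, ∀ y ∈ 𝔨, Q x y = 0 ∧ Q y x = 0)
    (m : ℕ) (𝔨s : Fin m → LieIdeal ℝ ↥𝔨) (κ : Fin m → ℝ)
    (hκ : ∀ j, ∀ x y : ↥(𝔨s j),
        killingForm ℝ ↥(𝔨s j) x y
          = κ j * killingForm ℝ 𝔤 ((x : ↥𝔨) : 𝔤) ((y : ↥𝔨) : 𝔤))
    (π : Fin m → (𝔤 →ₗ[ℝ] 𝔤))
    (hπmem : ∀ j x, ∃ y : ↥𝔨, y ∈ 𝔨s j ∧ (y : 𝔤) = π j x)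
    (hπorth : ∀ j x, ∀ y : ↥𝔨, y ∈ 𝔨s j → Q (x - π j x) (y : 𝔤) = 0)
    (j : Fin m) (v : Fin (Module.finrank ℝ ↥𝔭) → 𝔤)
    (hv𝔭 : ∀ l, v l ∈ 𝔭)
    (hvon : ∀ l l', Q (v l) (v l') = if l = l' then 1 else 0)
    (hvspan : Submodule.span ℝ (Set.range v) = 𝔭) :
    ∑ l, LinearMap.trace ℝ 𝔤
        (π j ∘ₗ LieAlgebra.ad ℝ 𝔤 (v l) ∘ₗ LieAlgebra.ad ℝ 𝔤 (v l))
      = (Module.finrank ℝ ↥(𝔨s j) : ℝ) * (1 - κ j) := by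
  obtain ⟨b, hb⟩ := exists_basis_orthonormal_of_lieIdeal hneg hQkk (𝔨s j)
  set e := fun a => ((b a : 𝔨) : 𝔤)
  have hB a : killingForm ℝ 𝔤 (e a) (e a) = -1 := by
    have hQ := hb a a
    rw [if_pos rfl, hQkk _ (b a : 𝔨).2 _ (b a : 𝔨).2] at hQ
    linarith
  have hπ : π j = Q.orthoProj e := by
    refine eq_orthoProj hb (fun x => ?_) (fun x a => hπorth j x (b a) (b a).2)
    obtain ⟨y, hy, hyx⟩ := hπmem j x
    exact hyx ▸ mem_span_of_mem_lieIdeal b hy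
  calc ∑ l, trace ℝ 𝔤 (π j ∘ₗ ad ℝ 𝔤 (v l) ∘ₗ ad ℝ 𝔤 (v l))
      = ∑ l, ∑ a, Q ⁅v l, ⁅v l, e a⁆⁆ (e a) := by
        simp only [hπ, trace_orthoProj_comp, LinearMap.comp_apply, ad_apply]
    _ = ∑ a, -∑ l, Q ⁅e a, ⁅e a, v l⁆⁆ (v l) := by
        rw [Finset.sum_comm]
        refine Finset.sum_congr rfl fun a _ => ?_
        rw [← Finset.sum_neg_distrib]
        exact Finset.sum_congr rfl fun l _ =>
          apply_lie_lie_eq_neg_apply_lie_lie hkp hpp hQpp hQkk (hv𝔭 l) (b a : 𝔨).2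
    _ = ∑ a, -((1 - κ j) * killingForm ℝ 𝔤 (e a) (e a)) :=
        Finset.sum_congr rfl fun a _ => congrArg Neg.neg <|
          sum_apply_lie_lie_eq_one_sub_mul_killingForm hcompl.codisjoint hkp hQpk hv𝔭 hvon hvspan
            (hκ j) hb (b a)
    _ = (Module.finrank ℝ ↥(𝔨s j) : ℝ) * (1 - κ j) := by
        simp [hB, mul_one_sub]

/-- Lemma 3.5, first identity: `tr_{Q|𝔭} A_j = d_j (1 - κ_j)`, where
`A_j(X,Y) = tr(π_{𝔨_j} ∘ ad X ∘ ad Y)` and `π_{𝔨_j}` is the `Q`-orthogonal projection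
onto the ideal `𝔨_j`. -/
theorem stmt_0
    (𝔤 : Type*) [LieRing 𝔤] [LieAlgebra ℝ 𝔤] [FiniteDimensional ℝ 𝔤]
    (𝔭 : Submodule ℝ 𝔤) (𝔨 : LieSubalgebra ℝ 𝔤)
    (hcompl : IsCompl 𝔭 𝔨.toSubmodule)
    (hkp : ∀ x ∈ 𝔨, ∀ y ∈ 𝔭, ⁅x, y⁆ ∈ 𝔭)
    (hpp : ∀ x ∈ 𝔭, ∀ y ∈ 𝔭, ⁅x, y⁆ ∈ 𝔨)
    (horth : ∀ x ∈ 𝔭, ∀ y ∈ 𝔨, killingForm ℝ 𝔤 x y = 0)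
    (hpos : ∀ x ∈ 𝔭, x ≠ 0 → 0 < killingForm ℝ 𝔤 x x)
    (hneg : ∀ x ∈ 𝔨, x ≠ 0 → killingForm ℝ 𝔤 x x < 0)
    (Q : LinearMap.BilinForm ℝ 𝔤)
    (hQpp : ∀ x ∈ 𝔭, ∀ y ∈ 𝔭, Q x y = killingForm ℝ 𝔤 x y)
    (hQkk : ∀ x ∈ 𝔨, ∀ y ∈ 𝔨, Q x y = -(killingForm ℝ 𝔤 x y))
    (hQpk : ∀ x ∈ 𝔭, ∀ y ∈ 𝔨, Q x y = 0 ∧ Q y x = 0)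
    (m : ℕ) (𝔨s : Fin m → LieIdeal ℝ ↥𝔨) (κ : Fin m → ℝ)
    (hsup : (⨆ j, 𝔨s j) = ⊤)
    (horthk : ∀ j k, j ≠ k → ∀ x ∈ 𝔨s j, ∀ y ∈ 𝔨s k,
        killingForm ℝ 𝔤 (x : 𝔤) (y : 𝔤) = 0)
    (hκ : ∀ j, ∀ x y : ↥(𝔨s j),
        killingForm ℝ ↥(𝔨s j) x y
          = κ j * killingForm ℝ 𝔤 ((x : ↥𝔨) : 𝔤) ((y : ↥𝔨) : 𝔤))
    (π : Fin m → (𝔤 →ₗ[ℝ] 𝔤))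
    (hπmem : ∀ j x, ∃ y : ↥𝔨, y ∈ 𝔨s j ∧ (y : 𝔤) = π j x)
    (hπorth : ∀ j x, ∀ y : ↥𝔨, y ∈ 𝔨s j → Q (x - π j x) (y : 𝔤) = 0)
    (j : Fin m) (v : Fin (Module.finrank ℝ ↥𝔭) → 𝔤)
    (hv𝔭 : ∀ l, v l ∈ 𝔭)
    (hvon : ∀ l l', Q (v l) (v l') = if l = l' then 1 else 0)
    (hvspan : Submodule.span ℝ (Set.range v) = 𝔭) :
    ∑ l, LinearMap.trace ℝ 𝔤
        (π j ∘ₗ LieAlgebra.ad ℝ 𝔤 (v l) ∘ₗ LieAlgebra.ad ℝ 𝔤 (v l))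
      = (Module.finrank ℝ ↥(𝔨s j) : ℝ) * (1 - κ j) :=
  stmt_0_general 𝔤 𝔭 𝔨 hcompl hkp hpp hneg Q hQpp hQkk hQpk m 𝔨s κ hκ π hπmem hπorth j v hv𝔭 hvon
    hvspan
end

section
/- The dimensions and constants of the decomposition satisfy 2·∑_{j=1}^m d_j(1−κ_j) = n. -/
/-!
Take a `B`-orthonormal basis `(X_a)` of `𝔭` and a `(-B)`-orthonormal basis `(Y_σ)` of `𝔨` adapted
to `𝔨 = 𝔨₁ ⊕ ⋯ ⊕ 𝔨_m`, and sum `B([Y_σ, X_a], [Y_σ, X_a])` over all `a` and `σ` in two orders.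
Since `B(Y, Y) = tr (ad Y)²` and `ad Y` preserves `𝔭` and `𝔨`, invariance of `B` shows that the
sum over `a` for `Y_σ ∈ 𝔨_j` is `B_𝔨(Y_σ, Y_σ) - B(Y_σ, Y_σ) = 1 - κ_j`. For `X ∈ 𝔭`, `ad X` swaps
`𝔭` and `𝔨`, so `(ad X)²` has the same trace on both and the sum over `σ` is `B(X_a, X_a) / 2`.
-/

open Module Set Submodule LieAlgebra
open LinearMap (BilinForm trace)

namespace LinearMap

variable {K V : Type*} [Field K] [AddCommGroup V] [Module K V]

theorem trace_eq_sum_apply_of_orthonormal {ι : Type*} [Fintype ι] [DecidableEq ι]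
    (G : BilinForm K V) (b : Basis ι K V) (hb : ∀ i j, G (b i) (b j) = if i = j then 1 else 0)
    (T : V →ₗ[K] V) :
    trace K V T = ∑ i, G (b i) (T (b i)) := by
  have hcoord : ∀ i, G (b i) = b.coord i := fun i => b.ext fun j => by
    simp [hb, Finsupp.single_apply, eq_comm]
  simp [trace_eq_matrix_trace K b, Matrix.trace, toMatrix_apply, hcoord]

theorem trace_eq_trace_restrict_add_of_isCompl [FiniteDimensional K V] {p q : Submodule K V} (hpq : IsCompl p q)
    {f : V →ₗ[K] V} (hp : MapsTo f p p) (hq : MapsTo f q q) :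
    trace K V f = trace K p (f.restrict hp) + trace K q (f.restrict hq) := by
  let N : Bool → Submodule K V := fun b => cond b p q
  have hN : DirectSum.IsInternal N :=
    (DirectSum.isInternal_submodule_iff_isCompl N (i := true) (j := false) (by decide)
      (by ext b; cases b <;> simp)).mpr hpq
  have hf : ∀ b, MapsTo f (N b) (N b) := fun b => by cases b <;> assumption
  exact (trace_eq_sum_trace_restrict hN hf).trans (Fintype.sum_bool _)

theorem trace_restrict_comp_self_eq_of_mapsTo_swap [FiniteDimensional K V]
    {p q : Submodule K V} {f : V →ₗ[K] V} (hpq : MapsTo f p q) (hqp : MapsTo f q p) :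
    trace K p ((f ∘ₗ f).restrict (hqp.comp hpq)) =
      trace K q ((f ∘ₗ f).restrict (hpq.comp hqp)) :=
  (trace_comp_comm' (f.restrict hqp) (f.restrict hpq)).symm

end LinearMap

namespace LinearMap.BilinForm

variable {V : Type*} [AddCommGroup V] [Module ℝ V] [FiniteDimensional ℝ V]

theorem exists_basis_orthonormal_of_pos (G : BilinForm ℝ V) (hG : G.IsSymm)
    (hpos : ∀ x, x ≠ 0 → 0 < G x x) :
    ∃ b : Basis (Fin (finrank ℝ V)) ℝ V, ∀ i j, G (b i) (b j) = if i = j then 1 else 0 := by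
  let core : InnerProductSpace.Core ℝ V :=
    { inner := fun x y => G x y
      conj_inner_symm := fun x y => hG.eq y x
      re_inner_nonneg := fun x => by
        rcases eq_or_ne x 0 with rfl | hx
        · simp
        · exact (hpos x hx).le
      definite := fun x hx => by_contra fun h => (hpos x h).ne' hx
      add_left := fun x y z => by simp
      smul_left := fun x y r => by simp }
  let : NormedAddCommGroup V := core.toNormedAddCommGroup
  let : InnerProductSpace ℝ V := InnerProductSpace.ofCore core.toCore
  exact ⟨(stdOrthonormalBasis ℝ V).toBasis,
    orthonormal_iff_ite.mp (stdOrthonormalBasis ℝ V).orthonormal⟩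

theorem exists_basis_orthonormal_sigma_of_iSup_eq_top {ι : Type*} [DecidableEq ι]
    (G : BilinForm ℝ V) (hG : G.IsSymm) (hpos : ∀ x, x ≠ 0 → 0 < G x x) (W : ι → Submodule ℝ V)
    (horth : Pairwise fun j k => ∀ x ∈ W j, ∀ y ∈ W k, G x y = 0) (hW : ⨆ j, W j = ⊤) :
    ∃ b : Basis (Σ j, Fin (finrank ℝ (W j))) ℝ V,
      (∀ σ τ, G (b σ) (b τ) = if σ = τ then 1 else 0) ∧ ∀ σ, b σ ∈ W σ.1 := by
  choose c hc using fun j => exists_basis_orthonormal_of_pos (G.restrict (W j))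
    (hG.restrict (W j)) (fun x hx => hpos x (by simpa using hx))
  let v : (Σ j, Fin (finrank ℝ (W j))) → V := fun σ => c σ.1 σ.2
  have hv : ∀ σ τ, G (v σ) (v τ) = if σ = τ then 1 else 0 := by
    rintro ⟨j, i⟩ ⟨k, l⟩
    rcases eq_or_ne j k with rfl | hjk
    · simpa [Sigma.mk.inj_iff] using hc j i l
    · simp [v, horth hjk _ (c j i).2 _ (c k l).2, hjk]
  have hli : LinearIndependent ℝ v := linearIndependent_of_iIsOrtho (B := G)
    (iIsOrtho_def.2 fun σ τ h => by simp [hv, h]) (fun σ => by simp [hv])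
  have hspan : ⊤ ≤ span ℝ (Set.range v) := hW.ge.trans <| iSup_le fun j =>
    calc W j = (span ℝ (Set.range (c j))).map (W j).subtype := by
          rw [(c j).span_eq, map_subtype_top]
      _ = span ℝ ((W j).subtype '' Set.range (c j)) := map_span _ _
      _ ≤ span ℝ (Set.range v) := span_mono <| by
          rintro _ ⟨_, ⟨i, rfl⟩, rfl⟩
          exact ⟨⟨j, i⟩, rfl⟩
  exact ⟨Basis.mk hli hspan, fun σ τ => by simp [hv], fun σ => by simp [v, (c σ.1 σ.2).2]⟩

end LinearMap.BilinForm

section CartanDecomposition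

variable {𝔤 : Type*} [LieRing 𝔤] [LieAlgebra ℝ 𝔤] {ι : Type*} [Fintype ι] [DecidableEq ι]

theorem trace_restrict_ad_comp_ad_eq_neg_mul_sum (p : Submodule ℝ 𝔤) (c : ℝ) (b : Basis ι ℝ p)
    (hb : ∀ i j, c * killingForm ℝ 𝔤 (b i) (b j) = if i = j then 1 else 0)
    (x : 𝔤) (hx : MapsTo (ad ℝ 𝔤 x ∘ₗ ad ℝ 𝔤 x) p p) :
    trace ℝ p ((ad ℝ 𝔤 x ∘ₗ ad ℝ 𝔤 x).restrict hx) =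
      -c * ∑ i, killingForm ℝ 𝔤 ⁅x, (b i : 𝔤)⁆ ⁅x, (b i : 𝔤)⁆ := by
  rw [LinearMap.trace_eq_sum_apply_of_orthonormal (c • (killingForm ℝ 𝔤).restrict p) b hb,
    Finset.mul_sum]
  refine Finset.sum_congr rfl fun i _ => ?_
  calc (c • (killingForm ℝ 𝔤).restrict p) (b i) ((ad ℝ 𝔤 x ∘ₗ ad ℝ 𝔤 x).restrict hx (b i))
      = c * killingForm ℝ 𝔤 (b i) ⁅x, ⁅x, (b i : 𝔤)⁆⁆ := rfl
    _ = -c * killingForm ℝ 𝔤 ⁅x, (b i : 𝔤)⁆ ⁅x, (b i : 𝔤)⁆ := by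
      rw [LieModule.traceForm_apply_lie_apply']
      ring

variable [FiniteDimensional ℝ 𝔤] {𝔭 : Submodule ℝ 𝔤} {𝔨 : LieSubalgebra ℝ 𝔤}

theorem sum_killingForm_lie_basis_eq_killingForm_sub (hcompl : IsCompl 𝔭 𝔨.toSubmodule)
    (hkp : ∀ x ∈ 𝔨, ∀ y ∈ 𝔭, ⁅x, y⁆ ∈ 𝔭) (P : Basis ι ℝ 𝔭)
    (hP : ∀ i j, killingForm ℝ 𝔤 (P i) (P j) = if i = j then 1 else 0) (Y : 𝔨) :
    ∑ i, killingForm ℝ 𝔤 ⁅(Y : 𝔤), (P i : 𝔤)⁆ ⁅(Y : 𝔤), (P i : 𝔤)⁆ =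
      killingForm ℝ 𝔨 Y Y - killingForm ℝ 𝔤 Y Y := by
  have h𝔭 : MapsTo (ad ℝ 𝔤 Y ∘ₗ ad ℝ 𝔤 Y) 𝔭 𝔭 := fun x hx => hkp _ Y.2 _ (hkp _ Y.2 _ hx)
  have h𝔨 : MapsTo (ad ℝ 𝔤 Y ∘ₗ ad ℝ 𝔤 Y) 𝔨.toSubmodule 𝔨.toSubmodule := fun x hx =>
    𝔨.lie_mem Y.2 (𝔨.lie_mem Y.2 hx)
  have htr𝔨 : trace ℝ 𝔨.toSubmodule ((ad ℝ 𝔤 Y ∘ₗ ad ℝ 𝔤 Y).restrict h𝔨) =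
      killingForm ℝ 𝔨 Y Y := by
    rw [killingForm_apply_apply]
    rfl
  have htr𝔭 := trace_restrict_ad_comp_ad_eq_neg_mul_sum 𝔭 1 P (by simpa using hP) Y h𝔭
  have hsplit := LinearMap.trace_eq_trace_restrict_add_of_isCompl hcompl h𝔭 h𝔨
  rw [← killingForm_apply_apply, htr𝔨, htr𝔭] at hsplit
  linarith

theorem two_mul_sum_killingForm_lie_basis_eq_killingForm (hcompl : IsCompl 𝔭 𝔨.toSubmodule)
    (hkp : ∀ x ∈ 𝔨, ∀ y ∈ 𝔭, ⁅x, y⁆ ∈ 𝔭) (hpp : ∀ x ∈ 𝔭, ∀ y ∈ 𝔭, ⁅x, y⁆ ∈ 𝔨)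
    (K : Basis ι ℝ 𝔨) (hK : ∀ i j, -killingForm ℝ 𝔤 (K i) (K j) = if i = j then 1 else 0)
    {X : 𝔤} (hX : X ∈ 𝔭) :
    2 * ∑ i, killingForm ℝ 𝔤 ⁅(K i : 𝔤), X⁆ ⁅(K i : 𝔤), X⁆ = killingForm ℝ 𝔤 X X := by
  have h𝔭𝔨 : MapsTo (ad ℝ 𝔤 X) 𝔭 𝔨.toSubmodule := fun y hy => hpp X hX y hy
  have h𝔨𝔭 : MapsTo (ad ℝ 𝔤 X) 𝔨.toSubmodule 𝔭 := fun y hy => by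
    rw [ad_apply, ← lie_skew]
    exact neg_mem (hkp y hy X hX)
  have htr𝔨 := trace_restrict_ad_comp_ad_eq_neg_mul_sum 𝔨.toSubmodule (-1) K
    (by simpa using hK) X (h𝔭𝔨.comp h𝔨𝔭)
  have hsplit := LinearMap.trace_eq_trace_restrict_add_of_isCompl hcompl
    (f := ad ℝ 𝔤 X ∘ₗ ad ℝ 𝔤 X) (h𝔨𝔭.comp h𝔭𝔨) (h𝔭𝔨.comp h𝔨𝔭)
  rw [← killingForm_apply_apply, LinearMap.trace_restrict_comp_self_eq_of_mapsTo_swap h𝔭𝔨 h𝔨𝔭,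
    htr𝔨] at hsplit
  simp only [← lie_skew _ X, map_neg, LinearMap.neg_apply, neg_neg]
  linarith

end CartanDecomposition

theorem stmt_2_general
    (𝔤 : Type*) [LieRing 𝔤] [LieAlgebra ℝ 𝔤] [FiniteDimensional ℝ 𝔤]
    (𝔭 : Submodule ℝ 𝔤) (𝔨 : LieSubalgebra ℝ 𝔤)
    (hcompl : IsCompl 𝔭 𝔨.toSubmodule)
    (hkp : ∀ x ∈ 𝔨, ∀ y ∈ 𝔭, ⁅x, y⁆ ∈ 𝔭)
    (hpp : ∀ x ∈ 𝔭, ∀ y ∈ 𝔭, ⁅x, y⁆ ∈ 𝔨)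
    (hpos : ∀ x ∈ 𝔭, x ≠ 0 → 0 < killingForm ℝ 𝔤 x x)
    (hneg : ∀ x ∈ 𝔨, x ≠ 0 → killingForm ℝ 𝔤 x x < 0)
    (m : ℕ) (𝔨s : Fin m → LieIdeal ℝ ↥𝔨) (κ : Fin m → ℝ)
    (hsup : (⨆ j, 𝔨s j) = ⊤)
    (horthk : ∀ j k, j ≠ k → ∀ x ∈ 𝔨s j, ∀ y ∈ 𝔨s k,
        killingForm ℝ 𝔤 (x : 𝔤) (y : 𝔤) = 0)
    (hκ : ∀ j, ∀ x y : ↥(𝔨s j),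
        killingForm ℝ ↥(𝔨s j) x y
          = κ j * killingForm ℝ 𝔤 ((x : ↥𝔨) : 𝔤) ((y : ↥𝔨) : 𝔤)) :
    2 * ∑ j, (Module.finrank ℝ ↥(𝔨s j) : ℝ) * (1 - κ j)
      = (Module.finrank ℝ ↥𝔭 : ℝ) := by
  have hB : (killingForm ℝ 𝔤).IsSymm := ⟨LieModule.traceForm_comm ℝ 𝔤 𝔤⟩
  obtain ⟨P, hP⟩ := ((killingForm ℝ 𝔤).restrict 𝔭).exists_basis_orthonormal_of_pos
    (hB.restrict 𝔭) fun x hx => hpos x x.2 (by simpa using hx)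
  obtain ⟨K, hK, hK𝔨s⟩ := ((-killingForm ℝ 𝔤).restrict 𝔨.toSubmodule)
    |>.exists_basis_orthonormal_sigma_of_iSup_eq_top (hB.neg.restrict _)
      (fun x hx => neg_pos.2 (hneg x x.2 (by simpa using hx))) (fun j => (𝔨s j).toSubmodule)
      (fun j k hjk x hx y hy => by simp [horthk j k hjk x hx y hy])
      (by simpa using congr(LieSubmodule.toSubmodule $hsup))
  have hrow (σ) : ∑ a, killingForm ℝ 𝔤 ⁅(K σ : 𝔤), (P a : 𝔤)⁆ ⁅(K σ : 𝔤), (P a : 𝔤)⁆ =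
      1 - κ σ.1 := by
    have hKσ : killingForm ℝ 𝔤 (K σ) (K σ) = -1 := by simpa [neg_eq_iff_eq_neg] using hK σ σ
    have h𝔨σ : killingForm ℝ 𝔨 (K σ) (K σ) = κ σ.1 * killingForm ℝ 𝔤 (K σ) (K σ) := by
      rw [← hκ σ.1 ⟨K σ, hK𝔨s σ⟩ ⟨K σ, hK𝔨s σ⟩, LieIdeal.killingForm_eq]
      rfl
    rw [sum_killingForm_lie_basis_eq_killingForm_sub hcompl hkp P hP (K σ), h𝔨σ, hKσ]
    ring
  have hcol (a) :
      2 * ∑ σ, killingForm ℝ 𝔤 ⁅(K σ : 𝔤), (P a : 𝔤)⁆ ⁅(K σ : 𝔤), (P a : 𝔤)⁆ = 1 := by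
    rw [two_mul_sum_killingForm_lie_basis_eq_killingForm hcompl hkp hpp K hK (P a).2]
    simpa using hP a a
  calc 2 * ∑ j, (finrank ℝ (𝔨s j) : ℝ) * (1 - κ j)
        = ∑ a, 2 * ∑ σ, killingForm ℝ 𝔤 ⁅(K σ : 𝔤), (P a : 𝔤)⁆ ⁅(K σ : 𝔤), (P a : 𝔤)⁆ := by
        rw [← Finset.mul_sum, Finset.sum_comm]
        simp only [hrow, Fintype.sum_sigma, Finset.sum_const, Finset.card_univ, Fintype.card_fin,
          nsmul_eq_mul]
        rfl
    _ = finrank ℝ 𝔭 := by simp [hcol]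

/-- Equation (3.2) of the paper: `2 ∑ⱼ dⱼ(1 - κⱼ) = n` for a Cartan decomposition
`𝔤 = 𝔭 ⊕ 𝔨` and a decomposition `𝔨 = 𝔨₁ ⊕ ⋯ ⊕ 𝔨_m` into `B`-orthogonal ideals whose
Killing forms are `κⱼ B|_{𝔨ⱼ}`. -/
theorem stmt_2
    (𝔤 : Type*) [LieRing 𝔤] [LieAlgebra ℝ 𝔤] [FiniteDimensional ℝ 𝔤]
    (𝔭 : Submodule ℝ 𝔤) (𝔨 : LieSubalgebra ℝ 𝔤)
    (hcompl : IsCompl 𝔭 𝔨.toSubmodule)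
    (hkp : ∀ x ∈ 𝔨, ∀ y ∈ 𝔭, ⁅x, y⁆ ∈ 𝔭)
    (hpp : ∀ x ∈ 𝔭, ∀ y ∈ 𝔭, ⁅x, y⁆ ∈ 𝔨)
    (horth : ∀ x ∈ 𝔭, ∀ y ∈ 𝔨, killingForm ℝ 𝔤 x y = 0)
    (hpos : ∀ x ∈ 𝔭, x ≠ 0 → 0 < killingForm ℝ 𝔤 x x)
    (hneg : ∀ x ∈ 𝔨, x ≠ 0 → killingForm ℝ 𝔤 x x < 0)
    (m : ℕ) (𝔨s : Fin m → LieIdeal ℝ ↥𝔨) (κ : Fin m → ℝ)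
    (hsup : (⨆ j, 𝔨s j) = ⊤)
    (horthk : ∀ j k, j ≠ k → ∀ x ∈ 𝔨s j, ∀ y ∈ 𝔨s k,
        killingForm ℝ 𝔤 (x : 𝔤) (y : 𝔤) = 0)
    (hκ : ∀ j, ∀ x y : ↥(𝔨s j),
        killingForm ℝ ↥(𝔨s j) x y
          = κ j * killingForm ℝ 𝔤 ((x : ↥𝔨) : 𝔤) ((y : ↥𝔨) : 𝔤)) :
    2 * ∑ j, (Module.finrank ℝ ↥(𝔨s j) : ℝ) * (1 - κ j)
      = (Module.finrank ℝ ↥𝔭 : ℝ) :=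
  stmt_2_general 𝔤 𝔭 𝔨 hcompl hkp hpp hpos hneg m 𝔨s κ hsup horthk hκ
end

section
/- Solutions of (∗_1) are unique up to scaling: if (β,α_1,…,α_m) and (β′,α′_1,…,α′_m) are two tuples of positive reals both satisfying (1/4)((α_i/β)²(1−κ_i) + κ_i) = T_i for i = 1,…,m and ∑_{i=1}^m (α_i/(2β) + 1)·d_i(1−κ_i)/n = T_p, then there exists τ > 0 such that β′ = τβ and α′_i = τα_i for all i. -/
/-- Uniqueness up to scaling of solutions of the system (∗₁). -/
theorem stmt_5 (m : ℕ) (hm : 1 ≤ m) (d : Fin m → ℕ) (hd : ∀ i, 0 < d i)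
    (κ : Fin m → ℝ) (hκ0 : ∀ i, 0 ≤ κ i) (hκ1 : ∀ i, κ i < 1)
    (n : ℝ) (hn : n = 2 * ∑ i, (d i : ℝ) * (1 - κ i))
    (Tp : ℝ) (hTp : 0 < Tp) (T : Fin m → ℝ) (hT : ∀ i, 0 < T i)
    (β β' : ℝ) (α α' : Fin m → ℝ)
    (hβ : 0 < β) (hα : ∀ i, 0 < α i) (hβ' : 0 < β') (hα' : ∀ i, 0 < α' i)
    (h1 : ∀ i, (1/4) * ((α i / β)^2 * (1 - κ i) + κ i) = T i)
    (h2 : ∑ i, (α i / (2*β) + 1) * ((d i : ℝ) * (1 - κ i)) / n = Tp)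
    (h1' : ∀ i, (1/4) * ((α' i / β')^2 * (1 - κ i) + κ i) = T i)
    (h2' : ∑ i, (α' i / (2*β') + 1) * ((d i : ℝ) * (1 - κ i)) / n = Tp) :
    ∃ τ : ℝ, 0 < τ ∧ β' = τ * β ∧ ∀ i, α' i = τ * α i := by
  refine ⟨β' / β, div_pos hβ' hβ, by field_simp, fun i => ?_⟩
  have hκ : 0 < 1 - κ i := by linarith [hκ1 i]
  have heq : (α i / β) ^ 2 * (1 - κ i) = (α' i / β') ^ 2 * (1 - κ i) := by
    have := (h1 i).trans (h1' i).symm; linarith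
  have hsq : (α i / β) ^ 2 = (α' i / β') ^ 2 :=
    mul_right_cancel₀ (ne_of_gt hκ) heq
  have hrat : α i / β = α' i / β' := by
    have h1p : 0 < α i / β := div_pos (hα i) hβ
    have h2p : 0 < α' i / β' := div_pos (hα' i) hβ'
    nlinarith [hsq]
  have := hrat
  field_simp at this ⊢
  nlinarith [this]
end

section
/- Assume condition (Z): ∑_{i=1}^m (n²κ_iT_p² − d_i²(1−κ_i)T_i²)/(nT_pT_i) − 2n < 0, and let m₀ be an index at which κ_i/T_i attains its maximum over i = 1,…,m. Then for every ε > 0 there exists a compact subset C_ε of M¹ such that S(β,α) < κ_{m₀}/(4T_{m₀}) + ε for every (β,α) ∈ M¹ \ C_ε. -/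
set_option maxHeartbeats 2000000 in
/-- Lemma 5.3 (compactness estimate on `M¹ = {tr_g T = 1}`): under condition (Z), for every
`ε > 0` the scalar curvature is below `κ_{m₀}/(4T_{m₀}) + ε` outside a compact subset of `M¹`. -/
theorem stmt_6 (m : ℕ) (hm : 1 ≤ m) (d : Fin m → ℕ) (hd : ∀ i, 0 < d i)
    (κ : Fin m → ℝ) (hκ0 : ∀ i, 0 ≤ κ i) (hκ1 : ∀ i, κ i < 1)
    (n : ℝ) (hn : n = 2 * ∑ i, (d i : ℝ) * (1 - κ i))
    (Tp : ℝ) (hTp : 0 < Tp) (T : Fin m → ℝ) (hT : ∀ i, 0 < T i)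
    (S F : ℝ × (Fin m → ℝ) → ℝ)
    (hS : ∀ p, S p = -(1/4) * (∑ i, (d i : ℝ) * (1 - κ i) * p.2 i) / p.1^2
        - n / (2 * p.1) + (1/4) * ∑ i, (d i : ℝ) * κ i / p.2 i)
    (hF : ∀ p, F p = -n * Tp / p.1 + ∑ i, (d i : ℝ) * T i / p.2 i)
    (M1 : Set (ℝ × (Fin m → ℝ)))
    (hM1 : M1 = {p | 0 < p.1 ∧ (∀ i, 0 < p.2 i) ∧ F p = 1})
    (hZ : ∑ i, (n^2 * κ i * Tp^2 - (d i : ℝ)^2 * (1 - κ i) * (T i)^2) / (n * Tp * T i)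
        - 2 * n < 0)
    (m₀ : Fin m) (hm₀ : ∀ i, κ i / T i ≤ κ m₀ / T m₀)
    (ε : ℝ) (hε : 0 < ε) :
    ∃ C : Set (ℝ × (Fin m → ℝ)), IsCompact C ∧ C ⊆ M1 ∧
      ∀ p ∈ M1 \ C, S p < κ m₀ / (4 * T m₀) + ε := by
  classical
  have hmne : Nonempty (Fin m) := ⟨⟨0, hm⟩⟩
  have hdpos : ∀ i, (0:ℝ) < d i := fun i => by exact_mod_cast hd i
  have hκ1' : ∀ i, (0:ℝ) < 1 - κ i := fun i => by linarith [hκ1 i]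
  have hn0 : 0 < n := by
    rw [hn]
    have h1 : ∀ i ∈ Finset.univ, (0:ℝ) < (d i : ℝ) * (1 - κ i) := fun i _ =>
      mul_pos (hdpos i) (hκ1' i)
    have h2 := Finset.sum_pos h1 Finset.univ_nonempty
    linarith
  obtain ⟨b, hbdef⟩ : ∃ b, b = κ m₀ / T m₀ := ⟨_, rfl⟩
  have hm₀' : ∀ i, κ i / T i ≤ b := fun i => hbdef ▸ hm₀ i
  have hb0 : 0 ≤ b := hbdef ▸ div_nonneg (hκ0 m₀) (hT m₀).le
  obtain ⟨A, hA⟩ : ∃ A, A = ∑ i, (d i:ℝ)^2 * (1 - κ i) * T i / (n*Tp)^2 := ⟨_, rfl⟩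
  obtain ⟨B, hB⟩ : ∃ B, B = ∑ i, κ i / T i := ⟨_, rfl⟩
  have hA0 : 0 ≤ A := hA ▸ Finset.sum_nonneg fun i _ => by
    have := (hκ1' i).le; have := (hT i).le; have := (hdpos i).le; positivity
  have hB0 : 0 ≤ B := hB ▸ Finset.sum_nonneg fun i _ => div_nonneg (hκ0 i) (hT i).le
  have hnTp : 0 < n * Tp := mul_pos hn0 hTp
  -- condition (Z) rewritten
  have hZ' : B - A < 2 / Tp := by
    have hsum : ∑ i, (n^2 * κ i * Tp^2 - (d i : ℝ)^2 * (1 - κ i) * (T i)^2) / (n * Tp * T i)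
        = n * Tp * (B - A) := by
      rw [hB, hA, ← Finset.sum_sub_distrib, Finset.mul_sum]
      refine Finset.sum_congr rfl fun i _ => ?_
      field_simp [hn0.ne', hTp.ne', (hT i).ne']
    rw [hsum] at hZ
    have h2 : n * Tp * (2/Tp) = 2 * n := by field_simp [hTp.ne']
    have h3 : n * Tp * (B - A) < n * Tp * (2/Tp) := by linarith
    exact lt_of_mul_lt_mul_left h3 hnTp.le
  obtain ⟨negZ, hnegZdef⟩ : ∃ z, z = 2/Tp + A - B := ⟨_, rfl⟩
  have hnegZ : 0 < negZ := by rw [hnegZdef]; linarith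
  obtain ⟨Y, hYdef⟩ : ∃ Y, Y = max 1 ((A+B)/negZ) := ⟨_, rfl⟩
  have hY1 : (1:ℝ) ≤ Y := hYdef ▸ le_max_left _ _
  have hYpos : (0:ℝ) < Y := lt_of_lt_of_le one_pos hY1
  have hYge : (A+B)/negZ ≤ Y := hYdef ▸ le_max_right _ _
  obtain ⟨βlo, hβlodef⟩ : ∃ x, x = n*Tp/Y := ⟨_, rfl⟩
  have hβlo : 0 < βlo := hβlodef ▸ div_pos hnTp hYpos
  obtain ⟨βhi, hβhidef⟩ : ∃ x, x = n*Tp*b/(4*ε) := ⟨_, rfl⟩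
  obtain ⟨L, hLdef⟩ : ∃ L : Fin m → ℝ, L = fun j => (d j:ℝ)*T j/(1+Y) := ⟨_, rfl⟩
  have hL : ∀ j, 0 < L j := fun j => hLdef ▸ div_pos (mul_pos (hdpos j) (hT j)) (by linarith)
  obtain ⟨U, hUdef⟩ : ∃ U : Fin m → ℝ, U = fun j => b*Y*βhi^2/((d j:ℝ)*(1-κ j)) := ⟨_, rfl⟩
  obtain ⟨K, hKdef⟩ : ∃ K, K = Set.Icc ((βlo, L) : ℝ × (Fin m → ℝ)) ((βhi, U)) := ⟨_, rfl⟩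
  have hKcpt : IsCompact K := hKdef ▸ isCompact_Icc
  have hKpos : ∀ q ∈ K, 0 < q.1 ∧ ∀ j, 0 < q.2 j := by
    rw [hKdef]
    rintro q ⟨h1, _⟩
    exact ⟨lt_of_lt_of_le hβlo h1.1, fun j => lt_of_lt_of_le (hL j) (h1.2 j)⟩
  have hCeq : M1 ∩ K = K ∩ F ⁻¹' {1} := by
    ext q
    simp only [hM1, Set.mem_inter_iff, Set.mem_setOf_eq, Set.mem_preimage,
      Set.mem_singleton_iff]
    constructor
    · rintro ⟨⟨_, _, hq⟩, hK⟩; exact ⟨hK, hq⟩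
    · rintro ⟨hK, hq⟩; exact ⟨⟨(hKpos q hK).1, (hKpos q hK).2, hq⟩, hK⟩
  have hFc : ContinuousOn F K := by
    rw [show F = fun q : ℝ × (Fin m → ℝ) => -n * Tp / q.1 + ∑ i, (d i:ℝ)*T i/q.2 i
      from funext hF]
    apply ContinuousOn.add
    · exact ContinuousOn.div continuousOn_const continuous_fst.continuousOn
        (fun q hq => (hKpos q hq).1.ne')
    · refine continuousOn_finset_sum _ fun i _ => ContinuousOn.div continuousOn_const
        (((continuous_apply i).comp continuous_snd).continuousOn)
        (fun q hq => ((hKpos q hq).2 i).ne')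
  have hCcpt : IsCompact (M1 ∩ K) := by
    rw [hCeq]
    exact hKcpt.of_isClosed_subset
      (hFc.preimage_isClosed_of_isClosed (hKdef ▸ isClosed_Icc) isClosed_singleton)
      Set.inter_subset_left
  refine ⟨M1 ∩ K, hCcpt, Set.inter_subset_left, ?_⟩
  rintro p ⟨hpM, hpC⟩
  by_contra hcon
  push_neg at hcon
  apply hpC
  refine ⟨hpM, ?_⟩
  rw [hM1] at hpM
  obtain ⟨hβ, hα, hFp⟩ := hpM
  -- notation
  obtain ⟨y, hydef⟩ : ∃ y, y = n*Tp/p.1 := ⟨_, rfl⟩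
  have hy : 0 < y := hydef ▸ div_pos hnTp hβ
  have h1y : 0 < 1 + y := by linarith
  have hyp1 : n*Tp = y*p.1 := by rw [hydef]; field_simp [hβ.ne']
  have hnp : n/p.1 = y/Tp := by rw [hydef]; field_simp [hβ.ne', hTp.ne']
  rw [hF] at hFp
  rw [neg_mul, neg_div] at hFp
  have hsum : ∑ i, (d i:ℝ)*T i/p.2 i = 1 + y := by rw [hydef]; linarith
  have hxpos : ∀ i, 0 < (d i:ℝ)*T i/p.2 i := fun i =>
    div_pos (mul_pos (hdpos i) (hT i)) (hα i)
  have hxle : ∀ i, (d i:ℝ)*T i/p.2 i ≤ 1 + y := fun i => by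
    rw [← hsum]
    exact Finset.single_le_sum (fun j _ => (hxpos j).le) (Finset.mem_univ i)
  have hαlow : ∀ i, (d i:ℝ)*T i/(1+y) ≤ p.2 i := fun i => by
    have h := (div_le_iff₀ (hα i)).mp (hxle i)
    rw [div_le_iff₀ h1y]
    linarith [h, mul_comm (1+y) (p.2 i)]
  obtain ⟨Sd, hSddef⟩ : ∃ x, x = ∑ i, (d i:ℝ)*(1-κ i)*p.2 i := ⟨_, rfl⟩
  obtain ⟨Sk, hSkdef⟩ : ∃ x, x = ∑ i, (d i:ℝ)*κ i/p.2 i := ⟨_, rfl⟩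
  have h4S : 4*S p = -(Sd/p.1^2) - 2*(n/p.1) + Sk := by
    rw [hSddef, hSkdef, hS]; ring
  -- bound hbad
  have hbad : b + 4*ε ≤ 4*S p := by
    have he : κ m₀ / (4 * T m₀) = b/4 := by rw [hbdef]; ring
    rw [he] at hcon
    linarith
  -- Sk bounds
  have hSkrw : Sk = ∑ i, (κ i / T i) * ((d i:ℝ)*T i/p.2 i) := by
    rw [hSkdef]
    refine Finset.sum_congr rfl fun i _ => ?_
    rw [div_mul_div_comm]
    rw [show κ i * ((d i:ℝ) * T i) = ((d i:ℝ) * κ i) * T i by ring,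
      show T i * p.2 i = p.2 i * T i by ring, ← div_mul_div_comm,
      div_self (hT i).ne', mul_one]
  have hSkb : Sk ≤ b*(1+y) := by
    calc Sk = ∑ i, (κ i / T i) * ((d i:ℝ)*T i/p.2 i) := hSkrw
      _ ≤ ∑ i, b * ((d i:ℝ)*T i/p.2 i) :=
          Finset.sum_le_sum fun i _ => mul_le_mul_of_nonneg_right (hm₀' i) (hxpos i).le
      _ = b*(1+y) := by rw [← Finset.mul_sum, hsum]
  have hSkB : Sk ≤ (1+y)*B := by
    calc Sk = ∑ i, (κ i / T i) * ((d i:ℝ)*T i/p.2 i) := hSkrw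
      _ ≤ ∑ i, (κ i / T i) * (1+y) :=
          Finset.sum_le_sum fun i _ =>
            mul_le_mul_of_nonneg_left (hxle i) (div_nonneg (hκ0 i) (hT i).le)
      _ = (1+y)*B := by rw [hB, ← Finset.sum_mul]; ring
  -- Sd bounds
  have hSdnn : ∀ i ∈ Finset.univ, (0:ℝ) ≤ (d i:ℝ)*(1-κ i)*p.2 i := fun i _ =>
    mul_nonneg (mul_nonneg (hdpos i).le (hκ1' i).le) (hα i).le
  have hSd0 : 0 ≤ Sd := hSddef ▸ Finset.sum_nonneg hSdnn
  have hSdlow : A*(y-1) ≤ Sd/p.1^2 := by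
    have e1 : ∑ i, (d i:ℝ)^2*(1-κ i)*T i = A*(n*Tp)^2 := by
      rw [hA, Finset.sum_mul]
      refine Finset.sum_congr rfl fun i _ => ?_
      exact (div_mul_cancel₀ _ (pow_ne_zero 2 hnTp.ne')).symm
    have e2 : (∑ i, (d i:ℝ)^2*(1-κ i)*T i)/(1+y) ≤ Sd := by
      rw [hSddef, Finset.sum_div]
      refine Finset.sum_le_sum fun i _ => ?_
      calc (d i:ℝ)^2*(1-κ i)*T i/(1+y) = ((d i:ℝ)*(1-κ i)) * ((d i:ℝ)*T i/(1+y)) := by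
            ring
        _ ≤ ((d i:ℝ)*(1-κ i)) * p.2 i :=
            mul_le_mul_of_nonneg_left (hαlow i) (mul_nonneg (hdpos i).le (hκ1' i).le)
        _ = (d i:ℝ)*(1-κ i)*p.2 i := by ring
    rw [e1] at e2
    have e3 : A*(y-1) ≤ A*(n*Tp)^2/((1+y)*p.1^2) := by
      rw [hyp1, le_div_iff₀ (by positivity)]
      have hr : A*(y*p.1)^2 - A*(y-1)*((1+y)*p.1^2) = A*p.1^2 := by ring
      linarith [mul_nonneg hA0 (sq_nonneg p.1), hr]
    have e4 : A*(n*Tp)^2/((1+y)*p.1^2) ≤ Sd/p.1^2 := by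
      rw [← div_div]
      gcongr
    linarith
  -- master inequality 2 (large y)
  have master2 : 4*S p ≤ A + B + y*(B - A - 2/Tp) := by
    have e : A + B + y*(B - A - 2/Tp) = -(A*(y-1)) - 2*(y/Tp) + (1+y)*B := by ring
    rw [e]
    linarith [h4S, hSdlow, hSkB, hnp]
  -- y is bounded: y < Y
  have hyY : y < Y := by
    have h1 : y * negZ < A + B := by
      have h2 : A + B + y*(B - A - 2/Tp) ≥ b + 4*ε := le_trans hbad master2
      have e : y*(B - A - 2/Tp) = -(y*negZ) := by rw [hnegZdef]; ring
      rw [e] at h2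
      linarith
    calc y < (A+B)/negZ := (lt_div_iff₀ hnegZ).mpr h1
      _ ≤ Y := hYge
  -- master inequality 1 (per index j)
  have master1 : ∀ j, (d j:ℝ)*(1-κ j)*p.2 j/p.1^2 + 4*ε + 2*(n/p.1) ≤ b*y := by
    intro j
    have h1 : (d j:ℝ)*(1-κ j)*p.2 j ≤ Sd :=
      hSddef ▸ Finset.single_le_sum hSdnn (Finset.mem_univ j)
    have h2 : (d j:ℝ)*(1-κ j)*p.2 j/p.1^2 ≤ Sd/p.1^2 := by
      gcongr
    have h3 : b*(1+y) = b + b*y := by ring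
    linarith [h4S, hSkb, hbad, h2]
  have hnp0 : 0 ≤ n/p.1 := (div_pos hn0 hβ).le
  have hεby : 4*ε ≤ b*y := by
    have h := master1 m₀
    have h0 : 0 ≤ (d m₀:ℝ)*(1-κ m₀)*p.2 m₀/p.1^2 := by
      have := hSdnn m₀ (Finset.mem_univ m₀)
      positivity
    linarith
  have hbpos : 0 < b := by
    by_contra hb
    push_neg at hb
    have h1 : b*y ≤ 0 := mul_nonpos_iff.mpr (Or.inr ⟨hb, hy.le⟩)
    linarith
  have hylow : 4*ε/b ≤ y := (div_le_iff₀ hbpos).mpr (by linarith)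
  have hp1eq : p.1 = n*Tp/y := by
    rw [eq_div_iff hy.ne']
    linear_combination -hyp1
  have hβhiB : p.1 ≤ βhi := by
    have h1 : 0 < 4*ε/b := by positivity
    have h2 : n*Tp/y ≤ n*Tp/(4*ε/b) := by gcongr
    have h3 : n*Tp/(4*ε/b) = βhi := by rw [hβhidef, div_div_eq_mul_div]
    rw [hp1eq]; linarith
  have hβloB : βlo ≤ p.1 := by
    rw [hp1eq, hβlodef]
    gcongr
  rw [hKdef, Set.mem_Icc]
  constructor
  · rw [Prod.le_def]
    refine ⟨hβloB, ?_⟩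
    intro j
    show L j ≤ p.2 j
    rw [hLdef]
    calc (d j:ℝ)*T j/(1+Y) ≤ (d j:ℝ)*T j/(1+y) := by
          gcongr
          exact mul_nonneg (hdpos j).le (hT j).le
      _ ≤ p.2 j := hαlow j
  · rw [Prod.le_def]
    refine ⟨hβhiB, ?_⟩
    intro j
    show p.2 j ≤ U j
    have h1 : (d j:ℝ)*(1-κ j)*p.2 j/p.1^2 ≤ b*Y := by
      have h := master1 j
      linarith [h, mul_le_mul_of_nonneg_left hyY.le hbpos.le, hε, hnp0]
    have h2 : (d j:ℝ)*(1-κ j)*p.2 j ≤ b*Y*p.1^2 := by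
      have h := (div_le_iff₀ (by positivity : (0:ℝ) < p.1^2)).mp h1
      linarith
    have h3 : p.1^2 ≤ βhi^2 := pow_le_pow_left₀ hβ.le hβhiB 2
    have h4 : (d j:ℝ)*(1-κ j)*p.2 j ≤ b*Y*βhi^2 := by
      linarith [h2, mul_le_mul_of_nonneg_left h3 (mul_pos hbpos hYpos).le]
    rw [hUdef]
    show p.2 j ≤ b*Y*βhi^2/((d j:ℝ)*(1-κ j))
    rw [le_div_iff₀ (mul_pos (hdpos j) (hκ1' j))]
    linarith [h4, mul_comm (p.2 j) ((d j:ℝ)*(1-κ j))]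
end

section
/- Assume condition (Z): ∑_{i=1}^m (n²κ_iT_p² − d_i²(1−κ_i)T_i²)/(nT_pT_i) − 2n < 0. Then for every θ > 0 there exists a compact subset C_θ of M^{−1} such that S(β,α) < −θ for every (β,α) ∈ M^{−1} \ C_θ. -/
set_option maxHeartbeats 1000000

private lemma sum_mul_sum_ge' {m : ℕ} (f g : Fin m → ℝ) (hf : ∀ i, 0 ≤ f i)
    (hg : ∀ i, 0 ≤ g i) : ∑ i, f i * g i ≤ (∑ i, f i) * (∑ i, g i) := by
  rw [Finset.sum_mul_sum]
  refine Finset.sum_le_sum fun i _ => ?_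
  exact Finset.single_le_sum (f := fun j => f i * g j)
    (fun j _ => mul_nonneg (hf i) (hg j)) (Finset.mem_univ i)

/-- Lemma 5.5 (compactness estimate on `M⁻¹ = {tr_g T = -1}`): under condition (Z), for every
`θ > 0` the scalar curvature is below `-θ` outside a compact subset of `M⁻¹`. -/
theorem stmt_8 (m : ℕ) (hm : 1 ≤ m) (d : Fin m → ℕ) (hd : ∀ i, 0 < d i)
    (κ : Fin m → ℝ) (hκ0 : ∀ i, 0 ≤ κ i) (hκ1 : ∀ i, κ i < 1)
    (n : ℝ) (hn : n = 2 * ∑ i, (d i : ℝ) * (1 - κ i))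
    (Tp : ℝ) (hTp : 0 < Tp) (T : Fin m → ℝ) (hT : ∀ i, 0 < T i)
    (S F : ℝ × (Fin m → ℝ) → ℝ)
    (hS : ∀ p, S p = -(1/4) * (∑ i, (d i : ℝ) * (1 - κ i) * p.2 i) / p.1^2
        - n / (2 * p.1) + (1/4) * ∑ i, (d i : ℝ) * κ i / p.2 i)
    (hF : ∀ p, F p = -n * Tp / p.1 + ∑ i, (d i : ℝ) * T i / p.2 i)
    (Mneg : Set (ℝ × (Fin m → ℝ)))
    (hMneg : Mneg = {p | 0 < p.1 ∧ (∀ i, 0 < p.2 i) ∧ F p = -1})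
    (hZ : ∑ i, (n^2 * κ i * Tp^2 - (d i : ℝ)^2 * (1 - κ i) * (T i)^2) / (n * Tp * T i)
        - 2 * n < 0)
    (θ : ℝ) (hθ : 0 < θ) :
    ∃ C : Set (ℝ × (Fin m → ℝ)), IsCompact C ∧ C ⊆ Mneg ∧
      ∀ p ∈ Mneg \ C, S p < -θ := by
  have hmne : Nonempty (Fin m) := ⟨⟨0, hm⟩⟩
  have huniv : (Finset.univ : Finset (Fin m)).Nonempty := Finset.univ_nonempty
  have hn0 : 0 < n := by
    have : 0 < ∑ i, (d i : ℝ) * (1 - κ i) :=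
      Finset.sum_pos (fun i _ => mul_pos (by exact_mod_cast hd i) (by linarith [hκ1 i])) huniv
    rw [hn]; linarith
  have hN0 : 0 < n * Tp := mul_pos hn0 hTp
  set P := ∑ i, (d i : ℝ)^2 * T i * (1 - κ i) with hPdef
  set K0 := ∑ i, κ i / T i with hKdef
  have hP0 : 0 < P := by
    rw [hPdef]
    refine Finset.sum_pos (fun i _ => ?_) huniv
    have h1 : (0:ℝ) < (d i : ℝ) := by exact_mod_cast hd i
    exact mul_pos (mul_pos (pow_pos h1 2) (hT i)) (by linarith [hκ1 i])
  have hK00 : 0 ≤ K0 := Finset.sum_nonneg fun i _ => div_nonneg (hκ0 i) (hT i).le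
  set ε := 2*n + P/(n*Tp) - (n*Tp)*K0 with hεdef
  have hsum : ∑ i, (n^2 * κ i * Tp^2 - (d i : ℝ)^2 * (1 - κ i) * (T i)^2) / (n * Tp * T i)
      = (n*Tp)*K0 - P/(n*Tp) := by
    rw [hKdef, hPdef, Finset.mul_sum, Finset.sum_div, ← Finset.sum_sub_distrib]
    refine Finset.sum_congr rfl fun i _ => ?_
    field_simp [hn0.ne', hTp.ne', (hT i).ne']
  have hε0 : 0 < ε := by
    have h := hZ
    rw [hsum] at h
    rw [hεdef]; linarith
  clear_value P K0 ε
  -- key pointwise estimate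
  have key : ∀ p ∈ Mneg, 4*(n*Tp)^2 * S p ≤
      -(∑ i, (d i : ℝ) * T i / p.2 i)*((n*Tp)*ε)
      - (∑ i, (d i : ℝ) * (1 - κ i) * p.2 i) - 2*n*(n*Tp) := by
    intro p hp
    rw [hMneg] at hp
    obtain ⟨hβ, hα, hFp⟩ := hp
    set a := ∑ i, (d i : ℝ) * T i / p.2 i with hadef
    set b := ∑ i, (d i : ℝ) * (1 - κ i) * p.2 i with hbdef
    set c := ∑ i, (d i : ℝ) * κ i / p.2 i with hcdef
    have ha0 : 0 < a := by
      rw [hadef]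
      exact Finset.sum_pos (fun i _ =>
        div_pos (mul_pos (by exact_mod_cast hd i) (hT i)) (hα i)) huniv
    have hb0 : 0 < b := by
      rw [hbdef]
      exact Finset.sum_pos (fun i _ =>
        mul_pos (mul_pos (by exact_mod_cast hd i) (by linarith [hκ1 i])) (hα i)) huniv
    have hab : P ≤ a * b := by
      rw [hadef, hbdef, hPdef]
      calc ∑ i, (d i : ℝ)^2 * T i * (1 - κ i)
          = ∑ i, ((d i : ℝ) * T i / p.2 i) * ((d i : ℝ) * (1 - κ i) * p.2 i) := by
            refine Finset.sum_congr rfl fun i _ => ?_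
            field_simp [(hα i).ne']
        _ ≤ _ := sum_mul_sum_ge' _ _
            (fun i => div_nonneg (mul_nonneg (Nat.cast_nonneg _) (hT i).le) (hα i).le)
            (fun i => mul_nonneg (mul_nonneg (Nat.cast_nonneg _) (by linarith [hκ1 i])) (hα i).le)
    have hacK : c ≤ a * K0 := by
      rw [hadef, hcdef, hKdef]
      calc ∑ i, (d i : ℝ) * κ i / p.2 i
          = ∑ i, ((d i : ℝ) * T i / p.2 i) * (κ i / T i) := by
            refine Finset.sum_congr rfl fun i _ => ?_
            field_simp [(hα i).ne', (hT i).ne']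
        _ ≤ _ := sum_mul_sum_ge' _ _
            (fun i => div_nonneg (mul_nonneg (Nat.cast_nonneg _) (hT i).le) (hα i).le)
            (fun i => div_nonneg (hκ0 i) (hT i).le)
    clear_value a b c
    have hFp' : -n * Tp / p.1 + a = -1 := by
      have h := hFp
      rw [hF p] at h
      rw [← hadef] at h
      exact h
    have h2 : n*Tp/p.1 = 1 + a := by
      have : -n * Tp / p.1 = -(n*Tp/p.1) := by ring
      rw [this] at hFp'
      linarith
    have hNcon : n*Tp = p.1*(1+a) := by
      rw [← h2]
      field_simp
    have hSeq : 4*(n*Tp)^2 * S p = -b*(1+a)^2 - 2*n*(n*Tp)*(1+a) + (n*Tp)^2*c := by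
      rw [hS p, ← hbdef, ← hcdef, hNcon]
      field_simp [hβ.ne']
      ring
    have hNε : (n*Tp)*ε = 2*n*(n*Tp) + P - (n*Tp)^2*K0 := by
      rw [hεdef]
      field_simp [hn0.ne', hTp.ne']
    nlinarith [mul_nonneg ha0.le (sub_nonneg.2 hab),
      mul_nonneg (sq_nonneg (n*Tp)) (sub_nonneg.2 hacK), mul_pos ha0 hb0]
  -- the compact set
  set A0 := 4*θ*(n*Tp)/ε with hA0def
  set B0 := 4*θ*(n*Tp)^2 with hB0def
  have hA00 : 0 < A0 := by rw [hA0def]; exact div_pos (by positivity) hε0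
  have hB00 : 0 < B0 := by rw [hB0def]; positivity
  clear_value A0 B0
  set lo : ℝ × (Fin m → ℝ) := ((n*Tp)/(1+A0), fun i => (d i : ℝ) * T i / A0) with hlodef
  set hi : ℝ × (Fin m → ℝ) := (n*Tp, fun i => B0/((d i : ℝ)*(1-κ i))) with hhidef
  have hlo1 : 0 < lo.1 := by show (0:ℝ) < (n*Tp)/(1+A0); positivity
  have hloi : ∀ i, 0 < lo.2 i := by
    intro i
    show (0:ℝ) < (d i : ℝ) * T i / A0
    have : (0:ℝ) < (d i : ℝ) := by exact_mod_cast hd i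
    have := hT i
    positivity
  have hmemIcc : ∀ p ∈ Set.Icc lo hi, 0 < p.1 ∧ ∀ i, 0 < p.2 i := by
    intro p hp
    exact ⟨lt_of_lt_of_le hlo1 hp.1.1, fun i => lt_of_lt_of_le (hloi i) (hp.1.2 i)⟩
  have hFc : ContinuousOn F (Set.Icc lo hi) := by
    refine ContinuousOn.congr (f := fun p : ℝ × (Fin m → ℝ) =>
      -n * Tp / p.1 + ∑ i, (d i : ℝ) * T i / p.2 i) ?_ (fun p _ => hF p)
    apply ContinuousOn.add
    · exact ContinuousOn.div continuousOn_const continuousOn_fst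
        (fun p hp => (hmemIcc p hp).1.ne')
    · refine continuousOn_finset_sum _ fun i _ => ?_
      exact ContinuousOn.div continuousOn_const
        (((continuous_apply i).comp continuous_snd).continuousOn)
        (fun p hp => ((hmemIcc p hp).2 i).ne')
  refine ⟨Set.Icc lo hi ∩ F ⁻¹' {-1}, ?_, ?_, ?_⟩
  · exact IsCompact.of_isClosed_subset isCompact_Icc
      (hFc.preimage_isClosed_of_isClosed isClosed_Icc isClosed_singleton)
      Set.inter_subset_left
  · rintro p ⟨hpIcc, hpF⟩
    rw [hMneg]
    exact ⟨(hmemIcc p hpIcc).1, (hmemIcc p hpIcc).2, hpF⟩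
  · rintro p ⟨hpM, hpC⟩
    have hk := key p hpM
    rw [hMneg] at hpM
    obtain ⟨hβ, hα, hFp⟩ := hpM
    set a := ∑ i, (d i : ℝ) * T i / p.2 i with hadef
    set b := ∑ i, (d i : ℝ) * (1 - κ i) * p.2 i with hbdef
    have ha0 : 0 < a := by
      rw [hadef]
      exact Finset.sum_pos (fun i _ =>
        div_pos (mul_pos (by exact_mod_cast hd i) (hT i)) (hα i)) huniv
    have hb0 : 0 < b := by
      rw [hbdef]
      exact Finset.sum_pos (fun i _ =>
        mul_pos (mul_pos (by exact_mod_cast hd i) (by linarith [hκ1 i])) (hα i)) huniv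
    clear_value a b
    have hFp' : -n * Tp / p.1 + a = -1 := by
      have h := hFp
      rw [hF p] at h
      rw [← hadef] at h
      exact h
    have h2 : n*Tp/p.1 = 1 + a := by
      have : -n * Tp / p.1 = -(n*Tp/p.1) := by ring
      rw [this] at hFp'
      linarith
    have hNcon : n*Tp = p.1*(1+a) := by
      rw [← h2]
      field_simp
    have hQ : 4*θ*(n*Tp)^2 ≤ a*((n*Tp)*ε) + b := by
      by_contra hQ'
      push_neg at hQ'
      apply hpC
      constructor
      · -- p ∈ Icc lo hi
        have haA0 : a ≤ A0 := by
          rw [hA0def, le_div_iff₀ hε0]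
          nlinarith [hb0, hN0]
        have hbB0 : b ≤ B0 := by
          rw [hB0def]
          nlinarith [mul_pos ha0 (mul_pos hN0 hε0)]
        refine ⟨⟨?_, fun i => ?_⟩, ?_, fun i => ?_⟩
        · show (n*Tp)/(1+A0) ≤ p.1
          rw [div_le_iff₀ (by positivity : (0:ℝ) < 1 + A0)]
          nlinarith [hβ]
        · show (d i : ℝ) * T i / A0 ≤ p.2 i
          have hterm : (d i : ℝ) * T i / p.2 i ≤ a := by
            rw [hadef]
            exact Finset.single_le_sum (f := fun j => (d j : ℝ) * T j / p.2 j)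
              (fun j _ => div_nonneg (mul_nonneg (Nat.cast_nonneg _) (hT j).le) (hα j).le)
              (Finset.mem_univ i)
          have h5 : (d i : ℝ) * T i / p.2 i ≤ A0 := le_trans hterm haA0
          rw [div_le_iff₀ (hα i)] at h5
          rw [div_le_iff₀ hA00]
          linarith
        · show p.1 ≤ n*Tp
          nlinarith [hβ]
        · show p.2 i ≤ B0/((d i : ℝ)*(1-κ i))
          have hterm : (d i : ℝ) * (1 - κ i) * p.2 i ≤ b := by
            rw [hbdef]
            exact Finset.single_le_sum (f := fun j => (d j : ℝ) * (1 - κ j) * p.2 j)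
              (fun j _ => mul_nonneg (mul_nonneg (Nat.cast_nonneg _)
                (by linarith [hκ1 j])) (hα j).le)
              (Finset.mem_univ i)
          have hpos : (0:ℝ) < (d i : ℝ) * (1 - κ i) :=
            mul_pos (by exact_mod_cast hd i) (by linarith [hκ1 i])
          rw [le_div_iff₀ hpos]
          nlinarith
      · exact hFp
    nlinarith [hk, hQ, mul_pos hn0 hN0, mul_pos hN0 hN0]
end

section
/- Assume condition (Z): ∑_{i=1}^m (n²κ_iT_p² − d_i²(1−κ_i)T_i²)/(nT_pT_i) − 2n < 0. Then S restricted to M^{−1} attains its global maximum: there exists (β*,α*) ∈ M^{−1} with S(β,α) ≤ S(β*,α*) for all (β,α) ∈ M^{−1}. -/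
/-!
On `M^{-1}` the constraint `n T_p / β = 1 + ∑ d_i T_i / α_i` forces `β ≤ n T_p` and
`α_i / β ≥ c_i := d_i T_i / (n T_p)`. Writing
`S = (∑ g_i (α_i / β) - 2n) / (4β)` with `g_i x = -d_i (1 - κ_i) x + d_i κ_i / x` decreasing,
we get `4 β S ≤ ∑ g_i c_i - 2n = Z < 0`. So on the superlevel set `{S ≥ s₀}` of a point of
`M^{-1}` (where `s₀ < 0`) we have `β ≥ Z / (4 s₀) > 0`, hence `α_i ≥ c_i Z / (4 s₀)`, and the
term `-d_j (1 - κ_j) α_j / β` bounds every `α_j` from above. The superlevel set therefore lies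
in a compact box inside `D`, on which `M^{-1}` is closed and `S` is continuous.
-/

open Finset

theorem neg_mul_add_div_le_of_le {a b c x : ℝ} (ha : 0 ≤ a) (hb : 0 ≤ b) (hc : 0 < c)
    (hcx : c ≤ x) : -a * x + b / x ≤ -a * c + b / c := by
  have := div_le_div_of_nonneg_left hb hc hcx
  linarith [mul_le_mul_of_nonneg_left hcx ha]

theorem sum_neg_mul_add_div_le_sum_div_sub {ι : Type*} [Fintype ι] {a b c x : ι → ℝ}
    (ha : ∀ i, 0 ≤ a i) (hb : ∀ i, 0 ≤ b i) (hc : ∀ i, 0 < c i) (hcx : ∀ i, c i ≤ x i) (j : ι) :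
    ∑ i, (-a i * x i + b i / x i) ≤ ∑ i, b i / c i - a j * x j := by
  have hb_le : ∑ i, b i / x i ≤ ∑ i, b i / c i :=
    sum_le_sum fun i _ => div_le_div_of_nonneg_left (hb i) (hc i) (hcx i)
  have ha_le : a j * x j ≤ ∑ i, a i * x i :=
    single_le_sum (fun i _ => mul_nonneg (ha i) ((hc i).le.trans (hcx i))) (mem_univ j)
  simp only [sum_add_distrib, neg_mul, sum_neg_distrib]
  linarith

theorem exists_isMaxOn_of_superlevel_subset {X Y : Type*} [TopologicalSpace X]
    [TopologicalSpace Y] [LinearOrder Y] [OrderClosedTopology Y] {s K : Set X} {f : X → Y}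
    {x₀ : X} (hx₀ : x₀ ∈ s) (hK : IsCompact K) (hsK : IsClosed (s ∩ K))
    (hf : ContinuousOn f K) (hsup : ∀ x ∈ s, f x₀ ≤ f x → x ∈ K) :
    ∃ x ∈ s, IsMaxOn f s x := by
  have hL : IsCompact (s ∩ K ∩ f ⁻¹' Set.Ici (f x₀)) :=
    hK.of_isClosed_subset ((hf.mono Set.inter_subset_right).preimage_isClosed_of_isClosed hsK
      isClosed_Ici) fun x hx => hx.1.2
  have hx₀L : x₀ ∈ s ∩ K ∩ f ⁻¹' Set.Ici (f x₀) := ⟨⟨hx₀, hsup x₀ hx₀ le_rfl⟩, le_rfl⟩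
  obtain ⟨x, hxL, hmax⟩ := hL.exists_isMaxOn ⟨x₀, hx₀L⟩ (hf.mono fun x hx => hx.1.2)
  refine ⟨x, hxL.1.1, fun y hy => ?_⟩
  rcases le_total (f x₀) (f y) with h | h
  · exact hmax ⟨⟨hy, hsup y hy h⟩, h⟩
  · exact h.trans (hmax hx₀L)

namespace NaturallyReductive

variable {m : ℕ} {d κ T : Fin m → ℝ} {n Tp : ℝ}

/-- Points are `p = (β, α)`; `scalarCurvature`, `traceT`, `levelSet σ` and `zConstant` are the
`S`, `F`, `M^σ` and the left-hand side of condition (Z) of the paper. -/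
noncomputable def scalarCurvature (d κ : Fin m → ℝ) (n : ℝ) (p : ℝ × (Fin m → ℝ)) : ℝ :=
  -(1/4) * (∑ i, d i * (1 - κ i) * p.2 i) / p.1^2 - n / (2 * p.1)
    + (1/4) * ∑ i, d i * κ i / p.2 i

noncomputable def traceT (d T : Fin m → ℝ) (n Tp : ℝ) (p : ℝ × (Fin m → ℝ)) : ℝ :=
  -n * Tp / p.1 + ∑ i, d i * T i / p.2 i

def levelSet (d T : Fin m → ℝ) (n Tp σ : ℝ) : Set (ℝ × (Fin m → ℝ)) :=
  {p | 0 < p.1 ∧ (∀ i, 0 < p.2 i) ∧ traceT d T n Tp p = σ}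

noncomputable def zConstant (d κ T : Fin m → ℝ) (n Tp : ℝ) : ℝ :=
  ∑ i, (n^2 * κ i * Tp^2 - d i^2 * (1 - κ i) * T i^2) / (n * Tp * T i) - 2 * n

noncomputable def minRatio (d T : Fin m → ℝ) (n Tp : ℝ) (i : Fin m) : ℝ :=
  d i * T i / (n * Tp)

theorem minRatio_pos (hd : ∀ i, 0 < d i) (hT : ∀ i, 0 < T i) (hn : 0 < n) (hTp : 0 < Tp)
    (i : Fin m) : 0 < minRatio d T n Tp i :=
  div_pos (mul_pos (hd i) (hT i)) (mul_pos hn hTp)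

theorem scalarCurvature_eq {p : ℝ × (Fin m → ℝ)} (hβ : p.1 ≠ 0) (hα : ∀ i, p.2 i ≠ 0) :
    scalarCurvature d κ n p =
      (∑ i, (-(d i * (1 - κ i)) * (p.2 i / p.1) + d i * κ i / (p.2 i / p.1)) - 2 * n)
        / (4 * p.1) := by
  have hterm : ∀ i, -(d i * (1 - κ i)) * (p.2 i / p.1) + d i * κ i / (p.2 i / p.1)
      = -(d i * (1 - κ i) * p.2 i) / p.1 + p.1 * (d i * κ i / p.2 i) := by
    intro i; field_simp [hα i]
  simp only [scalarCurvature, hterm, sum_add_distrib, ← sum_div, ← mul_sum, sum_neg_distrib]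
  field_simp
  ring

theorem zConstant_eq (hd : ∀ i, d i ≠ 0) (hT : ∀ i, T i ≠ 0) (hn : n ≠ 0) (hTp : Tp ≠ 0) :
    zConstant d κ T n Tp = ∑ i, (-(d i * (1 - κ i)) * minRatio d T n Tp i
      + d i * κ i / minRatio d T n Tp i) - 2 * n := by
  unfold zConstant minRatio
  congr 1
  refine sum_congr rfl fun i _ => ?_
  field_simp [hd i, hT i]
  ring

theorem one_add_sum_eq_of_mem_levelSet {p : ℝ × (Fin m → ℝ)}
    (hp : p ∈ levelSet d T n Tp (-1)) : 1 + ∑ i, d i * T i / p.2 i = n * Tp / p.1 := by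
  have h := hp.2.2
  simp only [traceT, neg_mul, neg_div] at h
  linarith

theorem div_snd_le_div_fst_of_mem_levelSet (hd : ∀ i, 0 < d i) (hT : ∀ i, 0 < T i)
    {p : ℝ × (Fin m → ℝ)} (hp : p ∈ levelSet d T n Tp (-1)) (j : Fin m) :
    d j * T j / p.2 j ≤ n * Tp / p.1 := by
  have hterm : d j * T j / p.2 j ≤ ∑ i, d i * T i / p.2 i :=
    single_le_sum (fun i _ => (div_pos (mul_pos (hd i) (hT i)) (hp.2.1 i)).le) (mem_univ j)
  linarith [one_add_sum_eq_of_mem_levelSet hp]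

theorem minRatio_le_div_fst_of_mem_levelSet (hd : ∀ i, 0 < d i) (hT : ∀ i, 0 < T i)
    {p : ℝ × (Fin m → ℝ)} (hp : p ∈ levelSet d T n Tp (-1)) (j : Fin m) :
    minRatio d T n Tp j ≤ p.2 j / p.1 := by
  have h := div_snd_le_div_fst_of_mem_levelSet hd hT hp j
  have hnTp : 0 < n * Tp :=
    (div_pos_iff_of_pos_right hp.1).1 ((div_pos (mul_pos (hd j) (hT j)) (hp.2.1 j)).trans_le h)
  rw [div_le_div_iff₀ (hp.2.1 j) hp.1] at h
  rw [minRatio, div_le_div_iff₀ hnTp hp.1]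
  linarith

theorem fst_le_of_mem_levelSet (hd : ∀ i, 0 < d i) (hT : ∀ i, 0 < T i)
    {p : ℝ × (Fin m → ℝ)} (hp : p ∈ levelSet d T n Tp (-1)) : p.1 ≤ n * Tp := by
  have hnonneg : 0 ≤ ∑ i, d i * T i / p.2 i :=
    sum_nonneg fun i _ => (div_pos (mul_pos (hd i) (hT i)) (hp.2.1 i)).le
  have := one_add_sum_eq_of_mem_levelSet hp
  exact (one_le_div₀ hp.1).1 (by linarith)

theorem mul_scalarCurvature_le_zConstant (hd : ∀ i, 0 < d i) (hκ0 : ∀ i, 0 ≤ κ i)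
    (hκ1 : ∀ i, κ i < 1) (hT : ∀ i, 0 < T i) (hn : 0 < n) (hTp : 0 < Tp)
    {p : ℝ × (Fin m → ℝ)} (hp : p ∈ levelSet d T n Tp (-1)) :
    4 * p.1 * scalarCurvature d κ n p ≤ zConstant d κ T n Tp := by
  rw [scalarCurvature_eq hp.1.ne' fun i => (hp.2.1 i).ne',
    zConstant_eq (fun i => (hd i).ne') (fun i => (hT i).ne') hn.ne' hTp.ne',
    mul_div_cancel₀ _ (by linarith [hp.1])]
  refine sub_le_sub_right (sum_le_sum fun i _ => ?_) _
  exact neg_mul_add_div_le_of_le (a := d i * (1 - κ i))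
    (mul_nonneg (hd i).le (by linarith [hκ1 i])) (mul_nonneg (hd i).le (hκ0 i))
    (minRatio_pos hd hT hn hTp i)
    (minRatio_le_div_fst_of_mem_levelSet hd hT hp i)

theorem mul_scalarCurvature_le_sum_div_minRatio_sub (hd : ∀ i, 0 < d i) (hκ0 : ∀ i, 0 ≤ κ i)
    (hκ1 : ∀ i, κ i < 1) (hT : ∀ i, 0 < T i) (hn : 0 < n) (hTp : 0 < Tp)
    {p : ℝ × (Fin m → ℝ)} (hp : p ∈ levelSet d T n Tp (-1)) (j : Fin m) :
    4 * p.1 * scalarCurvature d κ n p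
      ≤ ∑ i, d i * κ i / minRatio d T n Tp i - d j * (1 - κ j) * (p.2 j / p.1) := by
  rw [scalarCurvature_eq hp.1.ne' fun i => (hp.2.1 i).ne',
    mul_div_cancel₀ _ (by linarith [hp.1])]
  have := sum_neg_mul_add_div_le_sum_div_sub (a := fun i => d i * (1 - κ i))
    (fun i => mul_nonneg (hd i).le (by linarith [hκ1 i])) (fun i => mul_nonneg (hd i).le (hκ0 i))
    (minRatio_pos hd hT hn hTp) (minRatio_le_div_fst_of_mem_levelSet hd hT hp) j
  linarith

theorem scalarCurvature_neg_of_mem_levelSet (hd : ∀ i, 0 < d i) (hκ0 : ∀ i, 0 ≤ κ i)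
    (hκ1 : ∀ i, κ i < 1) (hT : ∀ i, 0 < T i) (hn : 0 < n) (hTp : 0 < Tp)
    (hZ : zConstant d κ T n Tp < 0) {p : ℝ × (Fin m → ℝ)} (hp : p ∈ levelSet d T n Tp (-1)) :
    scalarCurvature d κ n p < 0 :=
  neg_of_mul_neg_right ((mul_scalarCurvature_le_zConstant hd hκ0 hκ1 hT hn hTp hp).trans_lt hZ)
    (by linarith [hp.1])

theorem mk_mem_levelSet (hd : ∀ i, 0 < d i) (hT : ∀ i, 0 < T i) (hn : 0 < n) (hTp : 0 < Tp) :
    (n * Tp / (1 + ∑ i, d i * T i), 1) ∈ levelSet d T n Tp (-1) := by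
  have hsum : 0 < 1 + ∑ i, d i * T i := by
    linarith [sum_nonneg fun i (_ : i ∈ univ) => (mul_pos (hd i) (hT i)).le]
  refine ⟨div_pos (mul_pos hn hTp) hsum, fun _ => one_pos, ?_⟩
  simp only [traceT, Pi.one_apply, div_one]
  field_simp
  ring

noncomputable def superlevelBox (d κ T : Fin m → ℝ) (n Tp s : ℝ) : Set (ℝ × (Fin m → ℝ)) :=
  Set.Icc
    (zConstant d κ T n Tp / (4 * s),
      fun j => minRatio d T n Tp j * (zConstant d κ T n Tp / (4 * s)))
    (n * Tp, fun j => n * Tp * (∑ i, d i * κ i / minRatio d T n Tp i - 4 * (n * Tp) * s)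
      / (d j * (1 - κ j)))

theorem div_le_fst_of_le_scalarCurvature (hd : ∀ i, 0 < d i) (hκ0 : ∀ i, 0 ≤ κ i)
    (hκ1 : ∀ i, κ i < 1) (hT : ∀ i, 0 < T i) (hn : 0 < n) (hTp : 0 < Tp) {s : ℝ} (hs : s < 0)
    {p : ℝ × (Fin m → ℝ)} (hp : p ∈ levelSet d T n Tp (-1)) (h : s ≤ scalarCurvature d κ n p) :
    zConstant d κ T n Tp / (4 * s) ≤ p.1 := by
  rw [div_le_iff_of_neg (by linarith)]
  nlinarith [mul_scalarCurvature_le_zConstant hd hκ0 hκ1 hT hn hTp hp, hp.1]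

theorem snd_le_of_le_scalarCurvature (hd : ∀ i, 0 < d i) (hκ0 : ∀ i, 0 ≤ κ i)
    (hκ1 : ∀ i, κ i < 1) (hT : ∀ i, 0 < T i) (hn : 0 < n) (hTp : 0 < Tp) {s : ℝ} (hs : s < 0)
    {p : ℝ × (Fin m → ℝ)} (hp : p ∈ levelSet d T n Tp (-1)) (h : s ≤ scalarCurvature d κ n p)
    (j : Fin m) :
    p.2 j ≤ n * Tp * (∑ i, d i * κ i / minRatio d T n Tp i - 4 * (n * Tp) * s)
      / (d j * (1 - κ j)) := by
  have ha : 0 < d j * (1 - κ j) := mul_pos (hd j) (by linarith [hκ1 j])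
  have hβ := fst_le_of_mem_levelSet hd hT hp
  have hratio : p.2 j / p.1 * (d j * (1 - κ j))
      ≤ ∑ i, d i * κ i / minRatio d T n Tp i - 4 * (n * Tp) * s := by
    nlinarith [mul_scalarCurvature_le_sum_div_minRatio_sub hd hκ0 hκ1 hT hn hTp hp j, hp.1]
  have hsnd : p.2 j = p.1 * (p.2 j / p.1) := (mul_div_cancel₀ _ hp.1.ne').symm
  rw [le_div_iff₀ ha, hsnd, mul_assoc]
  gcongr
  exact mul_nonneg (div_nonneg (hp.2.1 j).le hp.1.le) ha.le

theorem mem_superlevelBox (hd : ∀ i, 0 < d i) (hκ0 : ∀ i, 0 ≤ κ i)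
    (hκ1 : ∀ i, κ i < 1) (hT : ∀ i, 0 < T i) (hn : 0 < n) (hTp : 0 < Tp) {s : ℝ} (hs : s < 0)
    {p : ℝ × (Fin m → ℝ)} (hp : p ∈ levelSet d T n Tp (-1)) (h : s ≤ scalarCurvature d κ n p) :
    p ∈ superlevelBox d κ T n Tp s := by
  have hβ := div_le_fst_of_le_scalarCurvature hd hκ0 hκ1 hT hn hTp hs hp h
  refine ⟨⟨hβ, fun j => ?_⟩, fst_le_of_mem_levelSet hd hT hp,
    snd_le_of_le_scalarCurvature hd hκ0 hκ1 hT hn hTp hs hp h⟩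
  calc minRatio d T n Tp j * (zConstant d κ T n Tp / (4 * s))
      ≤ minRatio d T n Tp j * p.1 :=
        mul_le_mul_of_nonneg_left hβ (minRatio_pos hd hT hn hTp j).le
    _ ≤ p.2 j / p.1 * p.1 :=
        mul_le_mul_of_nonneg_right (minRatio_le_div_fst_of_mem_levelSet hd hT hp j) hp.1.le
    _ = p.2 j := div_mul_cancel₀ _ hp.1.ne'

theorem continuousOn_scalarCurvature :
    ContinuousOn (scalarCurvature d κ n) {p | 0 < p.1 ∧ ∀ i, 0 < p.2 i} := by
  rintro p ⟨hβ, hα⟩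
  apply ContinuousAt.continuousWithinAt
  have := hβ.ne'
  have := fun i => (hα i).ne'
  unfold scalarCurvature
  fun_prop (disch := simp_all)

theorem continuousOn_traceT :
    ContinuousOn (traceT d T n Tp) {p | 0 < p.1 ∧ ∀ i, 0 < p.2 i} := by
  rintro p ⟨hβ, hα⟩
  apply ContinuousAt.continuousWithinAt
  have := hβ.ne'
  have := fun i => (hα i).ne'
  unfold traceT
  fun_prop (disch := simp_all)

theorem isClosed_levelSet_inter {σ : ℝ} {K : Set (ℝ × (Fin m → ℝ))} (hK : IsClosed K)
    (hKpos : K ⊆ {p | 0 < p.1 ∧ ∀ i, 0 < p.2 i}) : IsClosed (levelSet d T n Tp σ ∩ K) := by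
  have hMK : levelSet d T n Tp σ ∩ K = K ∩ traceT d T n Tp ⁻¹' {σ} := by
    ext p
    exact ⟨fun ⟨⟨_, _, hF⟩, hp⟩ => ⟨hp, hF⟩,
      fun ⟨hp, hF⟩ => ⟨⟨(hKpos hp).1, (hKpos hp).2, hF⟩, hp⟩⟩
  rw [hMK]
  exact (continuousOn_traceT.mono hKpos).preimage_isClosed_of_isClosed hK isClosed_singleton

theorem superlevelBox_subset (hd : ∀ i, 0 < d i) (hT : ∀ i, 0 < T i) (hn : 0 < n)
    (hTp : 0 < Tp) {s : ℝ} (hs : s < 0) (hZ : zConstant d κ T n Tp < 0) :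
    superlevelBox d κ T n Tp s ⊆ {p | 0 < p.1 ∧ ∀ i, 0 < p.2 i} := by
  have hlo : 0 < zConstant d κ T n Tp / (4 * s) := div_pos_of_neg_of_neg hZ (by linarith)
  exact fun p hp => ⟨hlo.trans_le hp.1.1,
    fun i => (mul_pos (minRatio_pos hd hT hn hTp i) hlo).trans_le (hp.1.2 i)⟩

theorem exists_isMaxOn_scalarCurvature (hd : ∀ i, 0 < d i) (hκ0 : ∀ i, 0 ≤ κ i)
    (hκ1 : ∀ i, κ i < 1) (hT : ∀ i, 0 < T i) (hn : 0 < n) (hTp : 0 < Tp)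
    (hZ : zConstant d κ T n Tp < 0) :
    ∃ p ∈ levelSet d T n Tp (-1),
      IsMaxOn (scalarCurvature d κ n) (levelSet d T n Tp (-1)) p := by
  have hp₀ := mk_mem_levelSet hd hT hn hTp
  have hs₀ := scalarCurvature_neg_of_mem_levelSet hd hκ0 hκ1 hT hn hTp hZ hp₀
  have hK := superlevelBox_subset hd hT hn hTp hs₀ hZ
  exact exists_isMaxOn_of_superlevel_subset hp₀ isCompact_Icc
    (isClosed_levelSet_inter isCompact_Icc.isClosed hK) (continuousOn_scalarCurvature.mono hK)
    fun p hp h => mem_superlevelBox hd hκ0 hκ1 hT hn hTp hs₀ hp h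

end NaturallyReductive

/-- Theorem 5.4: under condition (Z), the scalar curvature functional restricted to
`M⁻¹ = {tr_g T = -1}` attains its global maximum. -/
theorem stmt_9 (m : ℕ) (hm : 1 ≤ m) (d : Fin m → ℕ) (hd : ∀ i, 0 < d i)
    (κ : Fin m → ℝ) (hκ0 : ∀ i, 0 ≤ κ i) (hκ1 : ∀ i, κ i < 1)
    (n : ℝ) (hn : n = 2 * ∑ i, (d i : ℝ) * (1 - κ i))
    (Tp : ℝ) (hTp : 0 < Tp) (T : Fin m → ℝ) (hT : ∀ i, 0 < T i)
    (S F : ℝ × (Fin m → ℝ) → ℝ)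
    (hS : ∀ p, S p = -(1/4) * (∑ i, (d i : ℝ) * (1 - κ i) * p.2 i) / p.1^2
        - n / (2 * p.1) + (1/4) * ∑ i, (d i : ℝ) * κ i / p.2 i)
    (hF : ∀ p, F p = -n * Tp / p.1 + ∑ i, (d i : ℝ) * T i / p.2 i)
    (Mneg : Set (ℝ × (Fin m → ℝ)))
    (hMneg : Mneg = {p | 0 < p.1 ∧ (∀ i, 0 < p.2 i) ∧ F p = -1})
    (hZ : ∑ i, (n^2 * κ i * Tp^2 - (d i : ℝ)^2 * (1 - κ i) * (T i)^2) / (n * Tp * T i)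
        - 2 * n < 0) :
    ∃ p ∈ Mneg, ∀ q ∈ Mneg, S q ≤ S p := by
  have hd' : ∀ i, (0 : ℝ) < d i := fun i => Nat.cast_pos.2 (hd i)
  have hn0 : 0 < n := by
    have : Nonempty (Fin m) := ⟨⟨0, hm⟩⟩
    rw [hn]
    exact mul_pos two_pos
      (sum_pos (fun i _ => mul_pos (hd' i) (by linarith [hκ1 i])) univ_nonempty)
  obtain rfl : S = NaturallyReductive.scalarCurvature (fun i => (d i : ℝ)) κ n := funext hS
  obtain rfl : F = NaturallyReductive.traceT (fun i => (d i : ℝ)) T n Tp := funext hF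
  subst hMneg
  exact NaturallyReductive.exists_isMaxOn_scalarCurvature hd' hκ0 hκ1 hT hn0 hTp hZ
end

section
/- If (β,α) ∈ M⁰ is a critical point of S restricted to M⁰, then S(β,α) = 0. -/
/-- Proposition 5.7: any critical point of the scalar curvature functional restricted to
`M⁰ = {tr_g T = 0}` has zero scalar curvature. A critical point is a point of `M⁰` where the
differential of `S` vanishes on the kernel of the differential of `F`. -/
theorem stmt_10 (m : ℕ) (hm : 1 ≤ m) (d : Fin m → ℕ) (hd : ∀ i, 0 < d i)
    (κ : Fin m → ℝ) (hκ0 : ∀ i, 0 ≤ κ i) (hκ1 : ∀ i, κ i < 1)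
    (n : ℝ) (hn : n = 2 * ∑ i, (d i : ℝ) * (1 - κ i))
    (Tp : ℝ) (hTp : 0 < Tp) (T : Fin m → ℝ) (hT : ∀ i, 0 < T i)
    (S F : ℝ × (Fin m → ℝ) → ℝ)
    (hS : ∀ p, S p = -(1/4) * (∑ i, (d i : ℝ) * (1 - κ i) * p.2 i) / p.1^2
        - n / (2 * p.1) + (1/4) * ∑ i, (d i : ℝ) * κ i / p.2 i)
    (hF : ∀ p, F p = -n * Tp / p.1 + ∑ i, (d i : ℝ) * T i / p.2 i)
    (M0 : Set (ℝ × (Fin m → ℝ)))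
    (hM0 : M0 = {p | 0 < p.1 ∧ (∀ i, 0 < p.2 i) ∧ F p = 0})
    (p : ℝ × (Fin m → ℝ)) (hp : p ∈ M0)
    (hcrit : ∀ v : ℝ × (Fin m → ℝ), fderiv ℝ F p v = 0 → fderiv ℝ S p v = 0) :
    S p = 0 := by
  rw [hM0] at hp
  obtain ⟨hβ, hα, hF0⟩ := hp
  have hβne : p.1 ≠ 0 := ne_of_gt hβ
  have hαne : ∀ i, p.2 i ≠ 0 := fun i => ne_of_gt (hα i)
  -- projections are differentiable
  have hproj : ∀ i, DifferentiableAt ℝ (fun q : ℝ × (Fin m → ℝ) => q.2 i) p := by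
    intro i
    exact ((ContinuousLinearMap.proj i : (Fin m → ℝ) →L[ℝ] ℝ).comp
      (ContinuousLinearMap.snd ℝ ℝ (Fin m → ℝ))).differentiableAt
  -- differentiability of S at p
  have hSd : DifferentiableAt ℝ S p := by
    have : S = fun q : ℝ × (Fin m → ℝ) =>
        -(1/4) * (∑ i, (d i : ℝ) * (1 - κ i) * q.2 i) / q.1^2
        - n / (2 * q.1) + (1/4) * ∑ i, (d i : ℝ) * κ i / q.2 i := funext hS
    rw [this]
    simp only [div_eq_mul_inv]
    apply DifferentiableAt.add
    · apply DifferentiableAt.sub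
      · apply DifferentiableAt.mul
        · apply DifferentiableAt.const_mul
          apply DifferentiableAt.fun_sum
          intro i _
          exact (hproj i).const_mul _
        · exact (differentiableAt_fst.pow 2).inv (pow_ne_zero 2 hβne)
      · apply DifferentiableAt.const_mul
        exact ((differentiableAt_const 2).mul differentiableAt_fst).inv
          (by simp [hβne])
    · apply DifferentiableAt.const_mul
      apply DifferentiableAt.fun_sum
      intro i _
      exact DifferentiableAt.const_mul ((hproj i).inv (hαne i)) _
  have hFd : DifferentiableAt ℝ F p := by
    have : F = fun q : ℝ × (Fin m → ℝ) =>
        -n * Tp / q.1 + ∑ i, (d i : ℝ) * T i / q.2 i := funext hF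
    rw [this]
    simp only [div_eq_mul_inv]
    apply DifferentiableAt.add
    · exact DifferentiableAt.const_mul (differentiableAt_fst.inv hβne) _
    · apply DifferentiableAt.fun_sum
      intro i _
      exact DifferentiableAt.const_mul ((hproj i).inv (hαne i)) _
  -- homogeneity
  have hShom : ∀ t : ℝ, t ≠ 0 → S (t • p) = S p / t := by
    intro t ht
    rw [hS, hS]
    simp only [Prod.smul_fst, Prod.smul_snd, Pi.smul_apply, smul_eq_mul]
    have h1 : ∑ i, (d i : ℝ) * (1 - κ i) * (t * p.2 i)
        = t * ∑ i, (d i : ℝ) * (1 - κ i) * p.2 i := by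
      rw [Finset.mul_sum]; exact Finset.sum_congr rfl (fun i _ => by ring)
    have h2 : ∑ i, (d i : ℝ) * κ i / (t * p.2 i)
        = (∑ i, (d i : ℝ) * κ i / p.2 i) / t := by
      rw [Finset.sum_div]
      exact Finset.sum_congr rfl (fun i _ => by rw [div_div, mul_comm t (p.2 i)])
    rw [h1, h2]
    field_simp
  have hFhom : ∀ t : ℝ, t ≠ 0 → F (t • p) = F p / t := by
    intro t ht
    rw [hF, hF]
    simp only [Prod.smul_fst, Prod.smul_snd, Pi.smul_apply, smul_eq_mul]
    have h2 : ∑ i, (d i : ℝ) * T i / (t * p.2 i)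
        = (∑ i, (d i : ℝ) * T i / p.2 i) / t := by
      rw [Finset.sum_div]
      exact Finset.sum_congr rfl (fun i _ => by rw [div_div, mul_comm t (p.2 i)])
    rw [h2]
    field_simp
  -- curve
  have hc : HasDerivAt (fun t : ℝ => t • p) p 1 := by
    simpa using (hasDerivAt_id (1:ℝ)).smul_const p
  have hne : ∀ᶠ t in nhds (1:ℝ), t ≠ 0 := eventually_ne_nhds one_ne_zero
  have key : ∀ G : ℝ × (Fin m → ℝ) → ℝ, DifferentiableAt ℝ G p →
      (∀ t : ℝ, t ≠ 0 → G (t • p) = G p / t) → fderiv ℝ G p p = -G p := by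
    intro G hGd hGhom
    have h1 : HasDerivAt (fun t : ℝ => G (t • p)) (fderiv ℝ G p p) 1 := by
      have hG : HasFDerivAt G (fderiv ℝ G p) ((1:ℝ) • p) := by
        rw [one_smul]; exact hGd.hasFDerivAt
      exact hG.comp_hasDerivAt 1 hc
    have h2 : HasDerivAt (fun t : ℝ => G p / t) (-G p) 1 := by
      have := (hasDerivAt_inv (one_ne_zero (α := ℝ))).const_mul (G p)
      simpa [div_eq_mul_inv] using this
    have heq : (fun t : ℝ => G (t • p)) =ᶠ[nhds 1] fun t : ℝ => G p / t :=
      hne.mono fun t ht => hGhom t ht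
    exact (h1.congr_of_eventuallyEq heq.symm).unique h2
  have hFp : fderiv ℝ F p p = 0 := by
    rw [key F hFd hFhom, hF0, neg_zero]
  have := hcrit p hFp
  rw [key S hSd hShom] at this
  linarith
end

section
/- A point (β,α_1,α_2) ∈ M⁰ is a critical point of S restricted to M⁰ if and only if x = α_2/β is a multiple root of the cubic P, i.e. P(α_2/β) = 0 and P′(α_2/β) = 0. -/
/-!
By the Lagrange criterion, `p` is critical iff `∇S(p)` is proportional to `∇F(p)`, i.e. iff two
2×2 minors of `(∇S, ∇F)` vanish. In the homogeneous coordinates `x = α₂/β`, `y = α₁/β` the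
constraint reads `y E = d₁T₁ x` with `E = nTp x − d₂T₂ ≠ 0`, and eliminating `y` turns the
numerators `N₁, N₂` of the minors into `E² N₁ = −d₁T₁ (nTp P(x) − E P'(x))` and
`E N₂ = 2 nTp P(x) − E P'(x)`, an invertible linear change of `(P(x), P'(x))`.
-/

lemma deriv_cubic (a b c d x : ℝ) :
    deriv (fun x => a * x ^ 3 + b * x ^ 2 + c * x + d) x = 3 * a * x ^ 2 + 2 * b * x + c := by
  have h : HasDerivAt (fun x => a * x ^ 3 + b * x ^ 2 + c * x + d) _ x :=
    ((((hasDerivAt_pow 3 x).const_mul a).add ((hasDerivAt_pow 2 x).const_mul b)).add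
      ((hasDerivAt_id x).const_mul c)).add_const d
  rw [h.deriv]
  simp only [Nat.cast_ofNat, Nat.add_one_sub_one, pow_one, mul_one]
  ring

open ContinuousLinearMap in
lemma fderiv_linear_div_sq_add_inv_apply (k₁ k₂ k₃ k₄ k₅ : ℝ) {β α₁ α₂ : ℝ} (hβ : β ≠ 0)
    (hα₁ : α₁ ≠ 0) (hα₂ : α₂ ≠ 0) (v : ℝ × ℝ × ℝ) :
    fderiv ℝ (fun q : ℝ × ℝ × ℝ =>
        (k₁ * q.2.1 + k₂ * q.2.2) / q.1 ^ 2 + k₃ / q.1 + k₄ / q.2.1 + k₅ / q.2.2) (β, α₁, α₂) v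
      = (-(2 * (k₁ * α₁ + k₂ * α₂) / β ^ 3) - k₃ / β ^ 2) * v.1
        + (k₁ / β ^ 2 - k₄ / α₁ ^ 2) * v.2.1 + (k₂ / β ^ 2 - k₅ / α₂ ^ 2) * v.2.2 := by
  set p : ℝ × ℝ × ℝ := (β, α₁, α₂)
  have hβ' : HasFDerivAt (fun q : ℝ × ℝ × ℝ => q.1) (fst ℝ ℝ (ℝ × ℝ)) p := hasFDerivAt_fst
  have hα₁' : HasFDerivAt (fun q : ℝ × ℝ × ℝ => q.2.1) ((fst ℝ ℝ ℝ).comp (snd ℝ ℝ (ℝ × ℝ))) p :=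
    hasFDerivAt_fst.comp p hasFDerivAt_snd
  have hα₂' : HasFDerivAt (fun q : ℝ × ℝ × ℝ => q.2.2) ((snd ℝ ℝ ℝ).comp (snd ℝ ℝ (ℝ × ℝ))) p :=
    hasFDerivAt_snd.comp p hasFDerivAt_snd
  have h : HasFDerivAt (fun q : ℝ × ℝ × ℝ =>
      (k₁ * q.2.1 + k₂ * q.2.2) * (q.1 ^ 2)⁻¹ + k₃ * q.1⁻¹ + k₄ * q.2.1⁻¹ + k₅ * q.2.2⁻¹) _ p :=
    ((((hα₁'.const_mul k₁).add (hα₂'.const_mul k₂)).mul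
      ((hasDerivAt_inv (pow_ne_zero 2 hβ)).comp_hasFDerivAt p (hβ'.pow 2))).add
      (((hasDerivAt_inv hβ).comp_hasFDerivAt p hβ').const_mul k₃)).add
      (((hasDerivAt_inv hα₁).comp_hasFDerivAt p hα₁').const_mul k₄) |>.add
      (((hasDerivAt_inv hα₂).comp_hasFDerivAt p hα₂').const_mul k₅)
  simp only [div_eq_mul_inv]
  rw [h.fderiv]
  simp only [Pi.add_apply, Nat.add_one_sub_one, pow_one, nsmul_eq_mul, Nat.cast_ofNat, neg_smul,
    smul_neg, Function.comp_apply, smul_add, add_apply, neg_apply, smul_apply, coe_fst', smul_eq_mul,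
    comp_apply, coe_snd', p]
  field_simp
  ring

lemma forall_dot_eq_zero_imp_iff {f₀ f₁ f₂ s₀ s₁ s₂ : ℝ} (hf₀ : f₀ ≠ 0) :
    (∀ v : ℝ × ℝ × ℝ, f₀ * v.1 + f₁ * v.2.1 + f₂ * v.2.2 = 0 →
        s₀ * v.1 + s₁ * v.2.1 + s₂ * v.2.2 = 0)
      ↔ s₁ * f₀ - s₀ * f₁ = 0 ∧ s₂ * f₀ - s₀ * f₂ = 0 := by
  constructor
  · intro h
    constructor
    · linear_combination -h (f₁, -f₀, 0) (by ring)
    · linear_combination -h (f₂, 0, -f₀) (by ring)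
  · rintro ⟨h₁, h₂⟩ v hv
    have : (s₀ * v.1 + s₁ * v.2.1 + s₂ * v.2.2) * f₀ = 0 := by
      linear_combination s₀ * hv + v.2.1 * h₁ + v.2.2 * h₂
    exact (mul_eq_zero_iff_right hf₀).mp this

lemma eq_zero_and_eq_zero_iff_of_eq_combination {R : Type*} [CommRing R] [NoZeroDivisors R]
    {N₁ N₂ P Q E k m : R} (hk : k ≠ 0) (hm : m ≠ 0) (hE : E ≠ 0)
    (h₁ : E ^ 2 * N₁ = -k * (m * P - E * Q)) (h₂ : E * N₂ = 2 * m * P - E * Q) :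
    N₁ = 0 ∧ N₂ = 0 ↔ P = 0 ∧ Q = 0 := by
  constructor
  · rintro ⟨rfl, rfl⟩
    have hPQ : m * P - E * Q = 0 := by
      simpa [hk] using h₁.symm
    have hP : m * P = 0 := by linear_combination -h₂ - hPQ
    have hQ : E * Q = 0 := by linear_combination hP - hPQ
    exact ⟨(mul_eq_zero_iff_left hm).mp hP, (mul_eq_zero_iff_left hE).mp hQ⟩
  · rintro ⟨rfl, rfl⟩
    simp only [mul_zero, sub_zero] at h₁ h₂
    exact ⟨(mul_eq_zero_iff_left (pow_ne_zero 2 hE)).mp h₁, (mul_eq_zero_iff_left hE).mp h₂⟩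

lemma eq_zero_iff_of_mul_eq {R : Type*} [MulZeroClass R] [NoZeroDivisors R] {A D N : R}
    (hD : D ≠ 0) (h : D * A = N) : A = 0 ↔ N = 0 := by
  rw [← h, mul_eq_zero_iff_left hD]

section Cubic

variable {d₁ d₂ κ₁ κ₂ n Tp T₁ T₂ a b c d x y : ℝ}

lemma sq_mul_minor_fst_eq (hn : n = 2 * (d₁ * (1 - κ₁) + d₂ * (1 - κ₂)))
    (ha : a = n * d₂ * (1 - κ₂) * Tp)
    (hb : b = d₁ ^ 2 * (1 - κ₁) * T₁ - d₂ ^ 2 * (1 - κ₂) * T₂ + 2 * n ^ 2 * Tp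
      - n ^ 2 * κ₁ * Tp ^ 2 / T₁)
    (hc : c = -(2 * n * d₂ * T₂) + 2 * n * d₂ * κ₁ * Tp * T₂ / T₁ - n * d₂ * κ₂ * Tp)
    (hd : d = -(d₂ ^ 2 * κ₁ * T₂ ^ 2 / T₁) + κ₂ * d₂ ^ 2 * T₂) (hT₁ : T₁ ≠ 0)
    (hy : y * (n * Tp * x - d₂ * T₂) = d₁ * T₁ * x) :
    (n * Tp * x - d₂ * T₂) ^ 2 * (2 * d₁ * T₁ * (d₁ * (1 - κ₁) * y + d₂ * (1 - κ₂) * x + n)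
        - n * Tp * (d₁ * (1 - κ₁) * y ^ 2 + d₁ * κ₁))
      = -(d₁ * T₁) * (n * Tp * (a * x ^ 3 + b * x ^ 2 + c * x + d)
        - (n * Tp * x - d₂ * T₂) * (3 * a * x ^ 2 + 2 * b * x + c)) := by
  subst ha hb hc hd hn
  -- `A₁ (2 d₁T₁ E − nTp (y E + d₁T₁ x))`, from `(y E)² − (d₁T₁ x)² = (y E − d₁T₁ x) (y E + d₁T₁ x)`
  linear_combination (norm := (field_simp; ring))
    (d₁ * (1 - κ₁) * (2 * d₁ * T₁ * (2 * (d₁ * (1 - κ₁) + d₂ * (1 - κ₂)) * Tp * x - d₂ * T₂)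
      - 2 * (d₁ * (1 - κ₁) + d₂ * (1 - κ₂)) * Tp
        * (y * (2 * (d₁ * (1 - κ₁) + d₂ * (1 - κ₂)) * Tp * x - d₂ * T₂) + d₁ * T₁ * x))) * hy

lemma mul_minor_snd_eq (hn : n = 2 * (d₁ * (1 - κ₁) + d₂ * (1 - κ₂)))
    (ha : a = n * d₂ * (1 - κ₂) * Tp)
    (hb : b = d₁ ^ 2 * (1 - κ₁) * T₁ - d₂ ^ 2 * (1 - κ₂) * T₂ + 2 * n ^ 2 * Tp
      - n ^ 2 * κ₁ * Tp ^ 2 / T₁)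
    (hc : c = -(2 * n * d₂ * T₂) + 2 * n * d₂ * κ₁ * Tp * T₂ / T₁ - n * d₂ * κ₂ * Tp)
    (hd : d = -(d₂ ^ 2 * κ₁ * T₂ ^ 2 / T₁) + κ₂ * d₂ ^ 2 * T₂) (hT₁ : T₁ ≠ 0)
    (hy : y * (n * Tp * x - d₂ * T₂) = d₁ * T₁ * x) :
    (n * Tp * x - d₂ * T₂) * (2 * d₂ * T₂ * (d₁ * (1 - κ₁) * y + d₂ * (1 - κ₂) * x + n)
        - n * Tp * (d₂ * (1 - κ₂) * x ^ 2 + d₂ * κ₂))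
      = 2 * (n * Tp) * (a * x ^ 3 + b * x ^ 2 + c * x + d)
        - (n * Tp * x - d₂ * T₂) * (3 * a * x ^ 2 + 2 * b * x + c) := by
  subst ha hb hc hd hn
  linear_combination (norm := (field_simp; ring)) (2 * d₂ * T₂ * (d₁ * (1 - κ₁))) * hy

end Cubic

lemma constraint_homogeneous {n Tp d₁ T₁ d₂ T₂ β α₁ α₂ : ℝ} (hβ : β ≠ 0) (hα₁ : α₁ ≠ 0)
    (hα₂ : α₂ ≠ 0) (h : -n * Tp / β + d₁ * T₁ / α₁ + d₂ * T₂ / α₂ = 0) :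
    α₁ / β * (n * Tp * (α₂ / β) - d₂ * T₂) = d₁ * T₁ * (α₂ / β) := by
  linear_combination (norm := (field_simp; ring)) (-(α₁ * α₂ / β)) * h

theorem stmt_11_general (d₁ d₂ : ℕ) (hd₁ : 0 < d₁)
    (κ₁ κ₂ : ℝ) (hκ₁1 : κ₁ < 1) (hκ₂1 : κ₂ < 1)
    (n : ℝ) (hn : n = 2 * ((d₁ : ℝ) * (1 - κ₁) + (d₂ : ℝ) * (1 - κ₂)))
    (Tp T₁ T₂ : ℝ) (hTp : 0 < Tp) (hT₁ : 0 < T₁)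
    (S F : ℝ × ℝ × ℝ → ℝ)
    (hS : ∀ p, S p = -(1/4) * ((d₁ : ℝ) * (1 - κ₁) * p.2.1 + (d₂ : ℝ) * (1 - κ₂) * p.2.2) / p.1^2
        - n / (2 * p.1) + (1/4) * ((d₁ : ℝ) * κ₁ / p.2.1 + (d₂ : ℝ) * κ₂ / p.2.2))
    (hF : ∀ p, F p = -n * Tp / p.1 + (d₁ : ℝ) * T₁ / p.2.1 + (d₂ : ℝ) * T₂ / p.2.2)
    (M0 : Set (ℝ × ℝ × ℝ))
    (hM0 : M0 = {p | 0 < p.1 ∧ 0 < p.2.1 ∧ 0 < p.2.2 ∧ F p = 0})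
    (a b c d : ℝ)
    (ha : a = n * (d₂ : ℝ) * (1 - κ₂) * Tp)
    (hb : b = (d₁ : ℝ)^2 * (1 - κ₁) * T₁ - (d₂ : ℝ)^2 * (1 - κ₂) * T₂ + 2 * n^2 * Tp
        - n^2 * κ₁ * Tp^2 / T₁)
    (hc : c = -(2 * n * (d₂ : ℝ) * T₂) + 2 * n * (d₂ : ℝ) * κ₁ * Tp * T₂ / T₁
        - n * (d₂ : ℝ) * κ₂ * Tp)
    (hd : d = -((d₂ : ℝ)^2 * κ₁ * T₂^2 / T₁) + κ₂ * (d₂ : ℝ)^2 * T₂)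
    (P : ℝ → ℝ) (hP : ∀ x, P x = a * x^3 + b * x^2 + c * x + d)
    (p : ℝ × ℝ × ℝ) (hp : p ∈ M0) :
    (∀ v : ℝ × ℝ × ℝ, fderiv ℝ F p v = 0 → fderiv ℝ S p v = 0)
      ↔ (P (p.2.2 / p.1) = 0 ∧ deriv P (p.2.2 / p.1) = 0) := by
  simp only [hM0, hF, Set.mem_ofPred_eq] at hp
  obtain ⟨β, α₁, α₂⟩ := p
  obtain ⟨hβ, hα₁, hα₂, hFp⟩ := hp
  have hn0 : 0 < n := by
    have h₁ : 0 < (d₁ : ℝ) * (1 - κ₁) := mul_pos (by exact_mod_cast hd₁) (by linarith)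
    have h₂ : 0 ≤ (d₂ : ℝ) * (1 - κ₂) := mul_nonneg (by positivity) (by linarith)
    linarith
  have hy := constraint_homogeneous hβ.ne' hα₁.ne' hα₂.ne' hFp
  have hE : n * Tp * (α₂ / β) - d₂ * T₂ ≠ 0 := fun h0 =>
    (by positivity : (0 : ℝ) < d₁ * T₁ * (α₂ / β)).ne' (by rw [← hy, h0, mul_zero])
  have hS' : S = fun q : ℝ × ℝ × ℝ =>
      (-(d₁ * (1 - κ₁) / 4) * q.2.1 + -(d₂ * (1 - κ₂) / 4) * q.2.2) / q.1 ^ 2 + -(n / 2) / q.1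
        + d₁ * κ₁ / 4 / q.2.1 + d₂ * κ₂ / 4 / q.2.2 := funext fun q => by rw [hS]; ring
  have hF' : F = fun q : ℝ × ℝ × ℝ =>
      (0 * q.2.1 + 0 * q.2.2) / q.1 ^ 2 + -(n * Tp) / q.1 + d₁ * T₁ / q.2.1 + d₂ * T₂ / q.2.2 :=
    funext fun q => by rw [hF]; ring
  rw [hS', hF', funext hP, deriv_cubic]
  simp only [fderiv_linear_div_sq_add_inv_apply _ _ _ _ _ hβ.ne' hα₁.ne' hα₂.ne']
  rw [forall_dot_eq_zero_imp_iff (by ring_nf; positivity)]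
  refine (and_congr (eq_zero_iff_of_mul_eq (D := 4 * β ^ 2 * α₁ ^ 2) (by positivity) ?_)
    (eq_zero_iff_of_mul_eq (D := 4 * β ^ 2 * α₂ ^ 2) (by positivity) ?_)).trans
    (eq_zero_and_eq_zero_iff_of_eq_combination (by positivity) (by positivity) hE
      (sq_mul_minor_fst_eq hn ha hb hc hd hT₁.ne' hy) (mul_minor_snd_eq hn ha hb hc hd hT₁.ne' hy))
  all_goals field_simp; ring

/-- Lemma 5.9: a point `(β,α₁,α₂) ∈ M⁰` is a critical point of `S|_{M⁰}` if and only if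
`x = α₂/β` is a multiple root of the cubic `P`. -/
theorem stmt_11 (d₁ d₂ : ℕ) (hd₁ : 0 < d₁) (hd₂ : 0 < d₂)
    (κ₁ κ₂ : ℝ) (hκ₁0 : 0 ≤ κ₁) (hκ₁1 : κ₁ < 1) (hκ₂0 : 0 ≤ κ₂) (hκ₂1 : κ₂ < 1)
    (n : ℝ) (hn : n = 2 * ((d₁ : ℝ) * (1 - κ₁) + (d₂ : ℝ) * (1 - κ₂)))
    (Tp T₁ T₂ : ℝ) (hTp : 0 < Tp) (hT₁ : 0 < T₁) (hT₂ : 0 < T₂)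
    (S F : ℝ × ℝ × ℝ → ℝ)
    (hS : ∀ p, S p = -(1/4) * ((d₁ : ℝ) * (1 - κ₁) * p.2.1 + (d₂ : ℝ) * (1 - κ₂) * p.2.2) / p.1^2
        - n / (2 * p.1) + (1/4) * ((d₁ : ℝ) * κ₁ / p.2.1 + (d₂ : ℝ) * κ₂ / p.2.2))
    (hF : ∀ p, F p = -n * Tp / p.1 + (d₁ : ℝ) * T₁ / p.2.1 + (d₂ : ℝ) * T₂ / p.2.2)
    (M0 : Set (ℝ × ℝ × ℝ))
    (hM0 : M0 = {p | 0 < p.1 ∧ 0 < p.2.1 ∧ 0 < p.2.2 ∧ F p = 0})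
    (a b c d : ℝ)
    (ha : a = n * (d₂ : ℝ) * (1 - κ₂) * Tp)
    (hb : b = (d₁ : ℝ)^2 * (1 - κ₁) * T₁ - (d₂ : ℝ)^2 * (1 - κ₂) * T₂ + 2 * n^2 * Tp
        - n^2 * κ₁ * Tp^2 / T₁)
    (hc : c = -(2 * n * (d₂ : ℝ) * T₂) + 2 * n * (d₂ : ℝ) * κ₁ * Tp * T₂ / T₁
        - n * (d₂ : ℝ) * κ₂ * Tp)
    (hd : d = -((d₂ : ℝ)^2 * κ₁ * T₂^2 / T₁) + κ₂ * (d₂ : ℝ)^2 * T₂)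
    (P : ℝ → ℝ) (hP : ∀ x, P x = a * x^3 + b * x^2 + c * x + d)
    (p : ℝ × ℝ × ℝ) (hp : p ∈ M0) :
    (∀ v : ℝ × ℝ × ℝ, fderiv ℝ F p v = 0 → fderiv ℝ S p v = 0)
      ↔ (P (p.2.2 / p.1) = 0 ∧ deriv P (p.2.2 / p.1) = 0) :=
  stmt_11_general d₁ d₂ hd₁ κ₁ κ₂ hκ₁1 hκ₂1 n hn Tp T₁ T₂ hTp hT₁ S F hS hF M0 hM0 a b c d ha hb hc
    hd P hP p hp
end

section
/- The function S restricted to M⁰ has no global minimum: there is no point (β,α) ∈ M⁰ such that S(h) ≥ S(β,α) for all h ∈ M⁰. -/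
set_option maxHeartbeats 1600000 in
/-- Theorem 5.8, first assertion: the scalar curvature functional restricted to
`M⁰ = {tr_g T = 0}` has no global minimum. -/
theorem stmt_12 (d₁ d₂ : ℕ) (hd₁ : 0 < d₁) (hd₂ : 0 < d₂)
    (κ₁ κ₂ : ℝ) (hκ₁0 : 0 ≤ κ₁) (hκ₁1 : κ₁ < 1) (hκ₂0 : 0 ≤ κ₂) (hκ₂1 : κ₂ < 1)
    (n : ℝ) (hn : n = 2 * ((d₁ : ℝ) * (1 - κ₁) + (d₂ : ℝ) * (1 - κ₂)))
    (Tp T₁ T₂ : ℝ) (hTp : 0 < Tp) (hT₁ : 0 < T₁) (hT₂ : 0 < T₂)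
    (S F : ℝ × ℝ × ℝ → ℝ)
    (hS : ∀ p, S p = -(1/4) * ((d₁ : ℝ) * (1 - κ₁) * p.2.1 + (d₂ : ℝ) * (1 - κ₂) * p.2.2) / p.1^2
        - n / (2 * p.1) + (1/4) * ((d₁ : ℝ) * κ₁ / p.2.1 + (d₂ : ℝ) * κ₂ / p.2.2))
    (hF : ∀ p, F p = -n * Tp / p.1 + (d₁ : ℝ) * T₁ / p.2.1 + (d₂ : ℝ) * T₂ / p.2.2)
    (M0 : Set (ℝ × ℝ × ℝ))
    (hM0 : M0 = {p | 0 < p.1 ∧ 0 < p.2.1 ∧ 0 < p.2.2 ∧ F p = 0}) :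
    ¬ ∃ p ∈ M0, ∀ q ∈ M0, S p ≤ S q := by
  rintro ⟨p, hp, hmin⟩
  have hd₁' : (1:ℝ) ≤ (d₁:ℝ) := by exact_mod_cast hd₁
  have hd₂' : (1:ℝ) ≤ (d₂:ℝ) := by exact_mod_cast hd₂
  have hA₁ : 0 < (d₁:ℝ) * (1 - κ₁) := by nlinarith
  have hA₂ : 0 < (d₂:ℝ) * (1 - κ₂) := by nlinarith
  have hn0 : 0 < n := by nlinarith
  obtain ⟨c₂, hc₂⟩ : ∃ c, c = 2 * (d₂:ℝ) * T₂ / (n * Tp) := ⟨_, rfl⟩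
  have hc₂0 : 0 < c₂ := by rw [hc₂]; positivity
  obtain ⟨K, hK⟩ : ∃ K, K = (1/4) * ((d₁:ℝ) * κ₁ + (d₂:ℝ) * κ₂ / c₂) := ⟨_, rfl⟩
  obtain ⟨s, hs⟩ : ∃ s, s = max 1 (16 * (K - S p + 1) / ((d₁:ℝ) * (1 - κ₁))) := ⟨_, rfl⟩
  have hs1 : (1:ℝ) ≤ s := hs ▸ le_max_left _ _
  have hs0 : (0:ℝ) < s := lt_of_lt_of_le one_pos hs1
  obtain ⟨D, hD⟩ : ∃ D, D = (d₁:ℝ) * T₁ / s + n * Tp / 2 := ⟨_, rfl⟩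
  have hD0 : 0 < D := by rw [hD]; positivity
  obtain ⟨β, hβ⟩ : ∃ b, b = n * Tp / D := ⟨_, rfl⟩
  have hβ0 : 0 < β := by rw [hβ]; positivity
  have hβ2 : β ≤ 2 := by
    rw [hβ, div_le_iff₀ hD0, hD]
    have h1 : 0 < (d₁:ℝ) * T₁ / s := by positivity
    nlinarith
  have hqM : (β, s, c₂) ∈ M0 := by
    rw [hM0]
    refine ⟨hβ0, hs0, hc₂0, ?_⟩
    rw [hF]
    show -n * Tp / β + (d₁:ℝ) * T₁ / s + (d₂:ℝ) * T₂ / c₂ = 0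
    have h1 : n * Tp / β = D := by
      rw [hβ]
      field_simp
    have h2 : (d₂:ℝ) * T₂ / c₂ = n * Tp / 2 := by
      rw [hc₂]
      field_simp
    have h3 : -n * Tp / β = -(n * Tp / β) := by ring
    rw [h3, h1, h2, hD]
    ring
  have hSq : S (β, s, c₂) = -(1/4) * ((d₁:ℝ) * (1 - κ₁) * s + (d₂:ℝ) * (1 - κ₂) * c₂) / β^2
      - n / (2 * β) + (1/4) * ((d₁:ℝ) * κ₁ / s + (d₂:ℝ) * κ₂ / c₂) := hS (β, s, c₂)
  have hβsq : β^2 ≤ 4 := by nlinarith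
  have hβsq0 : 0 < β^2 := by positivity
  have ht1 : ((d₁:ℝ) * (1 - κ₁) * s) / 4 ≤
      ((d₁:ℝ) * (1 - κ₁) * s + (d₂:ℝ) * (1 - κ₂) * c₂) / β^2 := by
    rw [div_le_div_iff₀ (by norm_num) hβsq0]
    nlinarith [mul_pos hA₂ hc₂0, mul_nonneg (le_of_lt (mul_pos hA₁ hs0)) (le_of_lt hβsq0)]
  have ht2 : 0 ≤ n / (2 * β) := by positivity
  have ht3 : (d₁:ℝ) * κ₁ / s ≤ (d₁:ℝ) * κ₁ := div_le_self (by positivity) hs1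
  have hSq' : S (β, s, c₂) ≤ -((d₁:ℝ) * (1 - κ₁) * s) / 16 + K := by
    rw [hSq, hK]
    have h4 : -(1/4) * ((d₁:ℝ) * (1 - κ₁) * s + (d₂:ℝ) * (1 - κ₂) * c₂) / β^2
        ≤ -((d₁:ℝ) * (1 - κ₁) * s) / 16 := by
      have e : -(1/4) * ((d₁:ℝ) * (1 - κ₁) * s + (d₂:ℝ) * (1 - κ₂) * c₂) / β^2
          = -(((d₁:ℝ) * (1 - κ₁) * s + (d₂:ℝ) * (1 - κ₂) * c₂) / β^2) * (1/4) := by ring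
      rw [e]
      linarith
    nlinarith
  have hsge : 16 * (K - S p + 1) / ((d₁:ℝ) * (1 - κ₁)) ≤ s := hs ▸ le_max_right _ _
  have hkey : 16 * (K - S p + 1) ≤ (d₁:ℝ) * (1 - κ₁) * s := by
    rw [div_le_iff₀ hA₁] at hsge
    linarith
  have hfin : S (β, s, c₂) ≤ S p - 1 := by nlinarith
  have := hmin (β, s, c₂) hqM
  linarith
end

section
/- S restricted to M⁰ has a saddle point — i.e. a critical point that is neither a local maximum point nor a local minimum point of S restricted to M⁰ — if and only if D = 0, b² = 3ac, and d_2T_2/(nT_p) < R_t, where R_t = −b/(3a). -/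
/-!
Solving `F = 0` for `α₁` parametrizes `M⁰` by `x = α₂ / β > d₂T₂ / (nT_p)` and `α₂ > 0`, and
on `M⁰` one finds `S = -P(x) / (4 α₂ (nT_p x - d₂T₂))`. Comparing `∇S` with `∇F` shows that the
critical points are exactly the points where `x` is a double root `x₀` of `P`, so
`P = a (x - x₀)² (x - ρ)`. If `ρ ≠ x₀`, then near the point `S` has the constant sign of `ρ - x`
and vanishes at the point, which is therefore a local extremum. If `ρ = x₀`, then `S` changes
sign along the curve `x ↦ (1/x, ·, 1)` in `M⁰`. Finally, `P = a (x - R)³` holds iff `D = 0` and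
`b² = 3ac`, and then `R = -b/(3a)`.
-/

open Filter Topology

section Cubic

variable {a b c d : ℝ}

theorem cubic_eq_mul_sq_mul_of_double_root {x₀ : ℝ} (ha : a ≠ 0)
    (h₀ : a * x₀ ^ 3 + b * x₀ ^ 2 + c * x₀ + d = 0) (h₁ : 3 * a * x₀ ^ 2 + 2 * b * x₀ + c = 0)
    (x : ℝ) :
    a * x ^ 3 + b * x ^ 2 + c * x + d = a * (x - x₀) ^ 2 * (x - (-b / a - 2 * x₀)) := by
  have hρ : a * (-b / a - 2 * x₀) = -b - 2 * a * x₀ := by field_simp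
  linear_combination h₀ + (x - x₀) * h₁ + (x - x₀) ^ 2 * hρ

theorem cubic_coeffs_of_eq_cube {r : ℝ}
    (h : ∀ x, a * x ^ 3 + b * x ^ 2 + c * x + d = a * (x - r) ^ 3) :
    b = -3 * a * r ∧ c = 3 * a * r ^ 2 ∧ d = -a * r ^ 3 := by
  have h₀ := h 0
  have h₁ := h 1
  have h₂ := h (-1)
  exact ⟨by linear_combination (h₁ + h₂) / 2 - h₀, by linear_combination (h₁ - h₂) / 2,
    by linear_combination h₀⟩

theorem cubic_eq_cube_iff (ha : a ≠ 0) (r : ℝ) :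
    (∀ x, a * x ^ 3 + b * x ^ 2 + c * x + d = a * (x - r) ^ 3) ↔
      18 * a * b * c * d - 4 * b ^ 3 * d + b ^ 2 * c ^ 2 - 4 * a * c ^ 3 - 27 * a ^ 2 * d ^ 2 = 0 ∧
        b ^ 2 = 3 * a * c ∧ r = -b / (3 * a) := by
  constructor
  · intro h
    obtain ⟨rfl, rfl, rfl⟩ := cubic_coeffs_of_eq_cube h
    exact ⟨by ring, by ring, by field_simp⟩
  · rintro ⟨hdisc, hb, rfl⟩ x
    obtain rfl : c = b ^ 2 / (3 * a) := by field_simp; linarith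
    have hdisc' : -27 * a ^ 2 * (d - b ^ 3 / (27 * a ^ 2)) ^ 2 = 0 := by
      rw [← hdisc]; field_simp; ring
    obtain rfl : d = b ^ 3 / (27 * a ^ 2) := by simpa [ha, sub_eq_zero] using hdisc'
    field_simp
    ring

end Cubic

section LocalExtr

variable {α E β : Type*} [TopologicalSpace E] [Preorder β] {f : E → β} {s : Set E} {p : E}

theorem not_isLocalMaxOn_of_tendsto {l : Filter α} [l.NeBot] {γ : α → E}
    (hγ : Tendsto γ l (𝓝[s] p)) (hf : ∀ᶠ t in l, f p < f (γ t)) : ¬IsLocalMaxOn f s p :=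
  fun h ↦ ((hγ.eventually h).and hf).exists.elim fun _ ht ↦ ht.1.not_gt ht.2

theorem not_isLocalMinOn_of_tendsto {l : Filter α} [l.NeBot] {γ : α → E}
    (hγ : Tendsto γ l (𝓝[s] p)) (hf : ∀ᶠ t in l, f (γ t) < f p) : ¬IsLocalMinOn f s p :=
  fun h ↦ ((hγ.eventually h).and hf).exists.elim fun _ ht ↦ ht.1.not_gt ht.2

end LocalExtr

theorem isLocalExtrOn_of_eq_mul_sq_mul {E : Type*} [TopologicalSpace E] {f w x : E → ℝ}
    {s : Set E} {p : E} {ρ : ℝ} (hp : p ∈ s) (hx : ContinuousAt x p) (hw : ∀ q ∈ s, 0 ≤ w q)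
    (hf : ∀ q ∈ s, f q = w q * ((x q - x p) ^ 2 * (ρ - x q))) (hρ : ρ ≠ x p) :
    IsLocalExtrOn f s p := by
  have hfp : f p = 0 := by simp [hf p hp]
  rcases hρ.lt_or_gt with hlt | hgt
  · refine Or.inr ?_
    filter_upwards [nhdsWithin_le_nhds (hx.eventually (lt_mem_nhds hlt)), self_mem_nhdsWithin]
      with q hq hqs
    rw [hfp, hf q hqs]
    exact mul_nonpos_of_nonneg_of_nonpos (hw q hqs)
      (mul_nonpos_of_nonneg_of_nonpos (sq_nonneg _) (by linarith))
  · refine Or.inl ?_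
    filter_upwards [nhdsWithin_le_nhds (hx.eventually (gt_mem_nhds hgt)), self_mem_nhdsWithin]
      with q hq hqs
    rw [hfp, hf q hqs]
    exact mul_nonneg (hw q hqs) (mul_nonneg (sq_nonneg _) (by linarith))

section LinearForm

open ContinuousLinearMap

noncomputable def linearForm (g : ℝ × ℝ × ℝ) : ℝ × ℝ × ℝ →L[ℝ] ℝ :=
  g.1 • fst ℝ ℝ (ℝ × ℝ) + g.2.1 • (fst ℝ ℝ ℝ).comp (snd ℝ ℝ (ℝ × ℝ))
    + g.2.2 • (snd ℝ ℝ ℝ).comp (snd ℝ ℝ (ℝ × ℝ))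

@[simp] theorem linearForm_apply (g v : ℝ × ℝ × ℝ) :
    linearForm g v = g.1 * v.1 + g.2.1 * v.2.1 + g.2.2 * v.2.2 := by
  simp [linearForm]

theorem linearForm_ker_le_iff {g l : ℝ × ℝ × ℝ} (hg : g.1 ≠ 0) :
    (∀ v, linearForm g v = 0 → linearForm l v = 0) ↔
      l.1 * g.2.1 = l.2.1 * g.1 ∧ l.1 * g.2.2 = l.2.2 * g.1 := by
  simp only [linearForm_apply]
  constructor
  · intro h
    have h₂ := h (g.2.1, -g.1, 0) (by ring)
    have h₃ := h (g.2.2, 0, -g.1) (by ring)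
    exact ⟨by linear_combination h₂, by linear_combination h₃⟩
  · rintro ⟨h₂, h₃⟩ v hv
    refine (mul_eq_zero.mp ?_).resolve_left hg
    linear_combination l.1 * hv - v.2.1 * h₂ - v.2.2 * h₃

theorem hasFDerivAt_laurent (e₁ e₂ e₃ e₄ e₅ : ℝ) {p : ℝ × ℝ × ℝ} (h₁ : p.1 ≠ 0)
    (h₂ : p.2.1 ≠ 0) (h₃ : p.2.2 ≠ 0) :
    HasFDerivAt
      (fun q : ℝ × ℝ × ℝ ↦ (e₁ * q.2.1 + e₂ * q.2.2) / q.1 ^ 2 + e₃ / q.1 + e₄ / q.2.1 + e₅ / q.2.2)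
      (linearForm (-2 * (e₁ * p.2.1 + e₂ * p.2.2) / p.1 ^ 3 - e₃ / p.1 ^ 2,
        e₁ / p.1 ^ 2 - e₄ / p.2.1 ^ 2, e₂ / p.1 ^ 2 - e₅ / p.2.2 ^ 2)) p := by
  have hβ := hasFDerivAt_fst (𝕜 := ℝ) (p := p)
  have hα₁ := (hasFDerivAt_snd (𝕜 := ℝ) (p := p)).fst
  have hα₂ := (hasFDerivAt_snd (𝕜 := ℝ) (p := p)).snd
  have hinv {g : ℝ × ℝ × ℝ → ℝ} {g' : ℝ × ℝ × ℝ →L[ℝ] ℝ} (hg : HasFDerivAt g g' p)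
      (h : g p ≠ 0) := (hasDerivAt_inv h).comp_hasFDerivAt p hg
  have hsum := (((((hα₁.const_mul e₁).add (hα₂.const_mul e₂)).mul
    ((hinv hβ h₁).pow 2)).add ((hinv hβ h₁).const_mul e₃)).add
    ((hinv hα₁ h₂).const_mul e₄)).add ((hinv hα₂ h₃).const_mul e₅)
  refine (hsum.congr_fderiv ?_).congr_of_eventuallyEq (Eventually.of_forall fun q ↦ ?_)
  · refine ContinuousLinearMap.ext fun v ↦ ?_
    simp only [Pi.add_apply, Function.comp_apply, Nat.add_one_sub_one, pow_one, nsmul_eq_mul,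
      Nat.cast_ofNat, neg_smul, smul_neg, inv_pow, smul_add, add_apply, neg_apply, smul_apply,
      coe_fst', smul_eq_mul, comp_apply, coe_snd', neg_mul, linearForm_apply]
    field_simp
    ring
  · simp only [Pi.add_apply, Pi.mul_apply, Function.comp_apply]
    ring

end LinearForm

structure Params where
  d₁ : ℝ
  d₂ : ℝ
  κ₁ : ℝ
  κ₂ : ℝ
  n : ℝ
  Tp : ℝ
  T₁ : ℝ
  T₂ : ℝ
  d₁_pos : 0 < d₁
  d₂_pos : 0 < d₂
  κ₂_lt_one : κ₂ < 1
  n_pos : 0 < n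
  Tp_pos : 0 < Tp
  T₁_pos : 0 < T₁
  T₂_pos : 0 < T₂

noncomputable section

namespace Params

variable (θ : Params)

def S (p : ℝ × ℝ × ℝ) : ℝ :=
  -(1 / 4) * (θ.d₁ * (1 - θ.κ₁) * p.2.1 + θ.d₂ * (1 - θ.κ₂) * p.2.2) / p.1 ^ 2
    - θ.n / (2 * p.1) + (1 / 4) * (θ.d₁ * θ.κ₁ / p.2.1 + θ.d₂ * θ.κ₂ / p.2.2)

def F (p : ℝ × ℝ × ℝ) : ℝ :=
  -θ.n * θ.Tp / p.1 + θ.d₁ * θ.T₁ / p.2.1 + θ.d₂ * θ.T₂ / p.2.2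

def M0 : Set (ℝ × ℝ × ℝ) := {p | 0 < p.1 ∧ 0 < p.2.1 ∧ 0 < p.2.2 ∧ θ.F p = 0}

def IsCritical (p : ℝ × ℝ × ℝ) : Prop := ∀ v, fderiv ℝ θ.F p v = 0 → fderiv ℝ θ.S p v = 0

def gradS (p : ℝ × ℝ × ℝ) : ℝ × ℝ × ℝ :=
  ((θ.d₁ * (1 - θ.κ₁) * p.2.1 + θ.d₂ * (1 - θ.κ₂) * p.2.2) / (2 * p.1 ^ 3) + θ.n / (2 * p.1 ^ 2),
    -(θ.d₁ * (1 - θ.κ₁)) / (4 * p.1 ^ 2) - θ.d₁ * θ.κ₁ / (4 * p.2.1 ^ 2),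
    -(θ.d₂ * (1 - θ.κ₂)) / (4 * p.1 ^ 2) - θ.d₂ * θ.κ₂ / (4 * p.2.2 ^ 2))

def gradF (p : ℝ × ℝ × ℝ) : ℝ × ℝ × ℝ :=
  (θ.n * θ.Tp / p.1 ^ 2, -(θ.d₁ * θ.T₁) / p.2.1 ^ 2, -(θ.d₂ * θ.T₂) / p.2.2 ^ 2)

def a : ℝ := θ.n * θ.d₂ * (1 - θ.κ₂) * θ.Tp

def b : ℝ := θ.d₁ ^ 2 * (1 - θ.κ₁) * θ.T₁ - θ.d₂ ^ 2 * (1 - θ.κ₂) * θ.T₂ + 2 * θ.n ^ 2 * θ.Tp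
  - θ.n ^ 2 * θ.κ₁ * θ.Tp ^ 2 / θ.T₁

def c : ℝ := -(2 * θ.n * θ.d₂ * θ.T₂) + 2 * θ.n * θ.d₂ * θ.κ₁ * θ.Tp * θ.T₂ / θ.T₁
  - θ.n * θ.d₂ * θ.κ₂ * θ.Tp

def d : ℝ := -(θ.d₂ ^ 2 * θ.κ₁ * θ.T₂ ^ 2 / θ.T₁) + θ.κ₂ * θ.d₂ ^ 2 * θ.T₂

def P (x : ℝ) : ℝ := θ.a * x ^ 3 + θ.b * x ^ 2 + θ.c * x + θ.d

def P' (x : ℝ) : ℝ := 3 * θ.a * x ^ 2 + 2 * θ.b * x + θ.c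

def r₀ : ℝ := θ.d₂ * θ.T₂ / (θ.n * θ.Tp)

def u (x : ℝ) : ℝ := θ.n * θ.Tp * x - θ.d₂ * θ.T₂

/-- For `r₀ < x` and `0 < t`, the point `(β, α₁, α₂)` of `M0` with `α₂ = t` and `α₂ / β = x`. -/
def chart (x t : ℝ) : ℝ × ℝ × ℝ := (t / x, θ.d₁ * θ.T₁ * t / θ.u x, t)

theorem a_pos : 0 < θ.a := by
  have := θ.n_pos; have := θ.d₂_pos; have := θ.Tp_pos
  have : 0 < 1 - θ.κ₂ := sub_pos.mpr θ.κ₂_lt_one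
  unfold a; positivity

theorem r₀_pos : 0 < θ.r₀ := by
  have := θ.n_pos; have := θ.d₂_pos; have := θ.Tp_pos; have := θ.T₂_pos
  unfold r₀; positivity

theorem u_pos_iff {x : ℝ} : 0 < θ.u x ↔ θ.r₀ < x := by
  have := θ.n_pos; have := θ.Tp_pos
  rw [r₀, div_lt_iff₀ (by positivity), u, sub_pos, mul_comm x]

theorem u_pos {x : ℝ} (hx : θ.r₀ < x) : 0 < θ.u x := θ.u_pos_iff.mpr hx

theorem chart_mem {x t : ℝ} (hx : θ.r₀ < x) (ht : 0 < t) : θ.chart x t ∈ θ.M0 := by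
  have := θ.d₁_pos; have := θ.T₁_pos; have := θ.u_pos hx; have := θ.r₀_pos
  have hx₀ : 0 < x := by linarith
  refine ⟨div_pos ht hx₀, by unfold chart; positivity, ht, ?_⟩
  simp only [F, chart, u]
  field_simp
  ring

theorem eq_chart_of_mem {p : ℝ × ℝ × ℝ} (hp : p ∈ θ.M0) :
    θ.r₀ < p.2.2 / p.1 ∧ θ.chart (p.2.2 / p.1) p.2.2 = p := by
  obtain ⟨hβ, hα₁, hα₂, hF⟩ := hp
  have := θ.d₁_pos; have := θ.T₁_pos; have := θ.n_pos; have := θ.Tp_pos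
  have hu : θ.u (p.2.2 / p.1) = θ.d₁ * θ.T₁ * p.2.2 / p.2.1 := by
    simp only [F] at hF
    simp only [u]
    field_simp at hF ⊢
    linear_combination -hF
  refine ⟨θ.u_pos_iff.mp (by rw [hu]; positivity), ?_⟩
  ext <;> simp only [chart, hu] <;> field_simp

theorem S_chart {x t : ℝ} (hx : θ.r₀ < x) (ht : t ≠ 0) :
    θ.S (θ.chart x t) = -θ.P x / (4 * t * θ.u x) := by
  have := θ.d₁_pos; have := θ.T₁_pos; have hu := (θ.u_pos hx).ne'
  have hx₀ : x ≠ 0 := (θ.r₀_pos.trans hx).ne'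
  simp only [S, chart, P, a, b, c, d]
  field_simp
  simp only [u]
  ring

theorem S_eq_of_mem {p : ℝ × ℝ × ℝ} (hp : p ∈ θ.M0) :
    θ.S p = -θ.P (p.2.2 / p.1) / (4 * p.2.2 * θ.u (p.2.2 / p.1)) := by
  obtain ⟨hx, hp'⟩ := θ.eq_chart_of_mem hp
  conv_lhs => rw [← hp']
  exact θ.S_chart hx hp.2.2.1.ne'

theorem hasFDerivAt_F {p : ℝ × ℝ × ℝ} (h₁ : p.1 ≠ 0) (h₂ : p.2.1 ≠ 0) (h₃ : p.2.2 ≠ 0) :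
    HasFDerivAt θ.F (linearForm (θ.gradF p)) p := by
  convert hasFDerivAt_laurent 0 0 (-(θ.n * θ.Tp)) (θ.d₁ * θ.T₁) (θ.d₂ * θ.T₂) h₁ h₂ h₃ using 1
  · funext q; simp only [F]; ring
  · simp only [gradF]; congr 1; ext <;> ring

theorem hasFDerivAt_S {p : ℝ × ℝ × ℝ} (h₁ : p.1 ≠ 0) (h₂ : p.2.1 ≠ 0) (h₃ : p.2.2 ≠ 0) :
    HasFDerivAt θ.S (linearForm (θ.gradS p)) p := by
  convert hasFDerivAt_laurent (-(θ.d₁ * (1 - θ.κ₁)) / 4) (-(θ.d₂ * (1 - θ.κ₂)) / 4) (-θ.n / 2)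
    (θ.d₁ * θ.κ₁ / 4) (θ.d₂ * θ.κ₂ / 4) h₁ h₂ h₃ using 1
  · funext q; simp only [S]; ring
  · simp only [gradS]; congr 1; ext <;> ring

theorem gradS_cross_gradF_chart {x t : ℝ} (hx : θ.r₀ < x) (ht : t ≠ 0) :
    let s := θ.gradS (θ.chart x t)
    let f := θ.gradF (θ.chart x t)
    s.1 * f.2.1 - s.2.1 * f.1 =
        x ^ 2 / (4 * θ.d₁ * θ.T₁ * t ^ 4) * (θ.n * θ.Tp * θ.P x - θ.u x * θ.P' x) ∧
      s.1 * f.2.2 - s.2.2 * f.1 =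
        x ^ 2 / (4 * θ.u x * t ^ 4) * (θ.u x * θ.P' x - 2 * θ.n * θ.Tp * θ.P x) := by
  have := θ.d₁_pos; have := θ.T₁_pos; have := θ.d₂_pos; have := θ.T₂_pos
  have hu := (θ.u_pos hx).ne'
  have hx₀ : x ≠ 0 := (θ.r₀_pos.trans hx).ne'
  simp only [gradS, gradF, chart, P, P', a, b, c, d]
  constructor <;> (field_simp; simp only [u]; ring)

theorem isCritical_chart_iff {x t : ℝ} (hx : θ.r₀ < x) (ht : 0 < t) :
    θ.IsCritical (θ.chart x t) ↔ θ.P x = 0 ∧ θ.P' x = 0 := by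
  obtain ⟨h₁, h₂, h₃, -⟩ := θ.chart_mem hx ht
  have := θ.n_pos; have := θ.Tp_pos; have := θ.d₁_pos; have := θ.T₁_pos
  have hu := θ.u_pos hx
  have hx₀ : 0 < x := θ.r₀_pos.trans hx
  obtain ⟨e₂, e₃⟩ := θ.gradS_cross_gradF_chart hx ht.ne'
  rw [IsCritical, (θ.hasFDerivAt_F h₁.ne' h₂.ne' h₃.ne').fderiv,
    (θ.hasFDerivAt_S h₁.ne' h₂.ne' h₃.ne').fderiv,
    linearForm_ker_le_iff (by simp only [gradF]; positivity), ← sub_eq_zero, e₂,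
    ← sub_eq_zero (a := _ * (θ.gradF _).2.2), e₃, mul_eq_zero_iff_left (by positivity),
    mul_eq_zero_iff_left (by positivity), sub_eq_zero, sub_eq_zero]
  constructor
  · rintro ⟨hw₁, hw₂⟩
    have hP : θ.P x = 0 := (mul_eq_zero_iff_left (a := θ.n * θ.Tp) (by positivity)).mp (by linarith)
    refine ⟨hP, ?_⟩
    simpa [hP, hu.ne'] using hw₂
  · rintro ⟨hP, hP'⟩
    simp [hP, hP']

theorem cube_of_saddle {p : ℝ × ℝ × ℝ} (hp : p ∈ θ.M0) (hcrit : θ.IsCritical p)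
    (hmax : ¬IsLocalMaxOn θ.S θ.M0 p) (hmin : ¬IsLocalMinOn θ.S θ.M0 p) :
    θ.r₀ < p.2.2 / p.1 ∧ ∀ y, θ.P y = θ.a * (y - p.2.2 / p.1) ^ 3 := by
  obtain ⟨hx, hchart⟩ := θ.eq_chart_of_mem hp
  refine ⟨hx, ?_⟩
  set x₀ := p.2.2 / p.1
  rw [← hchart, θ.isCritical_chart_iff hx hp.2.2.1] at hcrit
  have ha := θ.a_pos
  have hfac : ∀ y, θ.P y = θ.a * (y - x₀) ^ 2 * (y - (-θ.b / θ.a - 2 * x₀)) :=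
    cubic_eq_mul_sq_mul_of_double_root ha.ne' hcrit.1 hcrit.2
  suffices hρ : -θ.b / θ.a - 2 * x₀ = x₀ by
    intro y; rw [hfac, hρ]; ring
  by_contra hρ
  have hx_cont : ContinuousAt (fun q : ℝ × ℝ × ℝ ↦ q.2.2 / q.1) p :=
    continuous_snd.snd.continuousAt.div continuous_fst.continuousAt hp.1.ne'
  have hext : IsLocalExtrOn θ.S θ.M0 p := by
    refine isLocalExtrOn_of_eq_mul_sq_mul (w := fun q ↦ θ.a / (4 * q.2.2 * θ.u (q.2.2 / q.1)))
      hp hx_cont (fun q hq ↦ ?_) (fun q hq ↦ ?_) hρ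
    · have := θ.u_pos (θ.eq_chart_of_mem hq).1
      have := hq.2.2.1
      positivity
    · rw [θ.S_eq_of_mem hq, hfac]
      ring
  exact hext.elim hmin hmax

theorem tendsto_chart {r : ℝ} (hr : θ.r₀ < r) {l : Filter ℝ} (hl : l ≤ 𝓝 r) :
    Tendsto (θ.chart · 1) l (𝓝[θ.M0] (θ.chart r 1)) := by
  have hu : θ.n * θ.Tp * r - θ.d₂ * θ.T₂ ≠ 0 := (θ.u_pos hr).ne'
  have hr0 : r ≠ 0 := (θ.r₀_pos.trans hr).ne'
  have hc : ContinuousAt (θ.chart · 1) r := by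
    simp only [chart, u]
    fun_prop (disch := assumption)
  refine tendsto_nhdsWithin_iff.mpr ⟨hc.tendsto.mono_left hl, ?_⟩
  filter_upwards [hl (lt_mem_nhds hr)] with x hx using θ.chart_mem hx one_pos

theorem saddle_of_cube {r : ℝ} (hr : θ.r₀ < r) (hP : ∀ y, θ.P y = θ.a * (y - r) ^ 3) :
    θ.IsCritical (θ.chart r 1) ∧ ¬IsLocalMaxOn θ.S θ.M0 (θ.chart r 1) ∧
      ¬IsLocalMinOn θ.S θ.M0 (θ.chart r 1) := by
  obtain ⟨hb, hc, -⟩ := cubic_coeffs_of_eq_cube hP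
  have ha := θ.a_pos
  have hS (x : ℝ) (hx : θ.r₀ < x) : θ.S (θ.chart x 1) = -(θ.a * (x - r) ^ 3) / (4 * θ.u x) := by
    rw [θ.S_chart hx one_ne_zero, hP, mul_one]
  have hSr : θ.S (θ.chart r 1) = 0 := by simp [hS r hr]
  have hnear : ∀ᶠ x in 𝓝 r, θ.r₀ < x := lt_mem_nhds hr
  refine ⟨(θ.isCritical_chart_iff hr one_pos).mpr ⟨by simp [hP], by simp only [P', hb, hc]; ring⟩,
    not_isLocalMaxOn_of_tendsto (θ.tendsto_chart hr (nhdsWithin_le_nhds (s := Set.Iio r))) ?_,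
    not_isLocalMinOn_of_tendsto (θ.tendsto_chart hr (nhdsWithin_le_nhds (s := Set.Ioi r))) ?_⟩
  · filter_upwards [nhdsWithin_le_nhds hnear, self_mem_nhdsWithin] with x hx (hxr : x < r)
    have := θ.u_pos hx
    have : (x - r) ^ 3 < 0 := Odd.pow_neg (by decide) (by linarith)
    rw [hSr, hS x hx]
    exact div_pos (by nlinarith) (by positivity)
  · filter_upwards [nhdsWithin_le_nhds hnear, self_mem_nhdsWithin] with x hx (hxr : r < x)
    have := θ.u_pos hx
    have : 0 < (x - r) ^ 3 := pow_pos (by linarith) 3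
    rw [hSr, hS x hx]
    exact div_neg_of_neg_of_pos (by nlinarith) (by positivity)

theorem exists_saddle_iff :
    (∃ p ∈ θ.M0, θ.IsCritical p ∧ ¬IsLocalMaxOn θ.S θ.M0 p ∧ ¬IsLocalMinOn θ.S θ.M0 p) ↔
      ∃ r, θ.r₀ < r ∧ ∀ y, θ.P y = θ.a * (y - r) ^ 3 := by
  constructor
  · rintro ⟨p, hp, hcrit, hmax, hmin⟩
    exact ⟨_, θ.cube_of_saddle hp hcrit hmax hmin⟩
  · rintro ⟨r, hr, hP⟩
    exact ⟨_, θ.chart_mem hr one_pos, θ.saddle_of_cube hr hP⟩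

end Params

end

theorem stmt_13_general (d₁ d₂ : ℕ) (hd₁ : 0 < d₁) (hd₂ : 0 < d₂)
    (κ₁ κ₂ : ℝ) (hκ₁1 : κ₁ < 1) (hκ₂1 : κ₂ < 1)
    (n : ℝ) (hn : n = 2 * ((d₁ : ℝ) * (1 - κ₁) + (d₂ : ℝ) * (1 - κ₂)))
    (Tp T₁ T₂ : ℝ) (hTp : 0 < Tp) (hT₁ : 0 < T₁) (hT₂ : 0 < T₂)
    (S F : ℝ × ℝ × ℝ → ℝ)
    (hS : ∀ p, S p = -(1/4) * ((d₁ : ℝ) * (1 - κ₁) * p.2.1 + (d₂ : ℝ) * (1 - κ₂) * p.2.2) / p.1^2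
        - n / (2 * p.1) + (1/4) * ((d₁ : ℝ) * κ₁ / p.2.1 + (d₂ : ℝ) * κ₂ / p.2.2))
    (hF : ∀ p, F p = -n * Tp / p.1 + (d₁ : ℝ) * T₁ / p.2.1 + (d₂ : ℝ) * T₂ / p.2.2)
    (M0 : Set (ℝ × ℝ × ℝ))
    (hM0 : M0 = {p | 0 < p.1 ∧ 0 < p.2.1 ∧ 0 < p.2.2 ∧ F p = 0})
    (a b c d : ℝ)
    (ha : a = n * (d₂ : ℝ) * (1 - κ₂) * Tp)
    (hb : b = (d₁ : ℝ)^2 * (1 - κ₁) * T₁ - (d₂ : ℝ)^2 * (1 - κ₂) * T₂ + 2 * n^2 * Tp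
        - n^2 * κ₁ * Tp^2 / T₁)
    (hc : c = -(2 * n * (d₂ : ℝ) * T₂) + 2 * n * (d₂ : ℝ) * κ₁ * Tp * T₂ / T₁
        - n * (d₂ : ℝ) * κ₂ * Tp)
    (hd : d = -((d₂ : ℝ)^2 * κ₁ * T₂^2 / T₁) + κ₂ * (d₂ : ℝ)^2 * T₂)
    (Disc : ℝ)
    (hDisc : Disc = 18*a*b*c*d - 4*b^3*d + b^2*c^2 - 4*a*c^3 - 27*a^2*d^2)
    (Rt : ℝ) (hRt : Rt = -b / (3*a)) :
    (∃ p ∈ M0, (∀ v : ℝ × ℝ × ℝ, fderiv ℝ F p v = 0 → fderiv ℝ S p v = 0) ∧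
        ¬ IsLocalMaxOn S M0 p ∧ ¬ IsLocalMinOn S M0 p)
      ↔ (Disc = 0 ∧ b^2 = 3*a*c ∧ (d₂ : ℝ) * T₂ / (n * Tp) < Rt) := by
  have hd₁' : (0 : ℝ) < d₁ := Nat.cast_pos.mpr hd₁
  have hd₂' : (0 : ℝ) < d₂ := Nat.cast_pos.mpr hd₂
  have hn₀ : 0 < n := by
    have := sub_pos.mpr hκ₁1; have := sub_pos.mpr hκ₂1
    rw [hn]; positivity
  let θ : Params := ⟨d₁, d₂, κ₁, κ₂, n, Tp, T₁, T₂, hd₁', hd₂', hκ₂1, hn₀, hTp, hT₁, hT₂⟩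
  obtain rfl : S = θ.S := funext hS
  obtain rfl : F = θ.F := funext hF
  obtain rfl : M0 = θ.M0 := hM0
  have hcube (r : ℝ) :
      (∀ y, θ.P y = θ.a * (y - r) ^ 3) ↔ Disc = 0 ∧ b ^ 2 = 3 * a * c ∧ r = Rt := by
    subst ha hb hc hd hDisc hRt
    exact cubic_eq_cube_iff (b := θ.b) (c := θ.c) (d := θ.d) θ.a_pos.ne' r
  refine θ.exists_saddle_iff.trans ⟨?_, ?_⟩
  · rintro ⟨r, hr, hr'⟩
    obtain ⟨hDisc0, hb2, rfl⟩ := (hcube r).mp hr'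
    exact ⟨hDisc0, hb2, hr⟩
  · rintro ⟨hDisc0, hb2, hr⟩
    exact ⟨Rt, hr, (hcube Rt).mpr ⟨hDisc0, hb2, rfl⟩⟩

/-- Theorem 5.8 (1): `S|_{M⁰}` has a saddle point (a critical point that is neither a local
maximum nor a local minimum of `S|_{M⁰}`) iff `D = 0`, `b² = 3ac` and `d₂T₂/(nT_p) < R_t`. -/
theorem stmt_13 (d₁ d₂ : ℕ) (hd₁ : 0 < d₁) (hd₂ : 0 < d₂)
    (κ₁ κ₂ : ℝ) (hκ₁0 : 0 ≤ κ₁) (hκ₁1 : κ₁ < 1) (hκ₂0 : 0 ≤ κ₂) (hκ₂1 : κ₂ < 1)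
    (n : ℝ) (hn : n = 2 * ((d₁ : ℝ) * (1 - κ₁) + (d₂ : ℝ) * (1 - κ₂)))
    (Tp T₁ T₂ : ℝ) (hTp : 0 < Tp) (hT₁ : 0 < T₁) (hT₂ : 0 < T₂)
    (S F : ℝ × ℝ × ℝ → ℝ)
    (hS : ∀ p, S p = -(1/4) * ((d₁ : ℝ) * (1 - κ₁) * p.2.1 + (d₂ : ℝ) * (1 - κ₂) * p.2.2) / p.1^2
        - n / (2 * p.1) + (1/4) * ((d₁ : ℝ) * κ₁ / p.2.1 + (d₂ : ℝ) * κ₂ / p.2.2))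
    (hF : ∀ p, F p = -n * Tp / p.1 + (d₁ : ℝ) * T₁ / p.2.1 + (d₂ : ℝ) * T₂ / p.2.2)
    (M0 : Set (ℝ × ℝ × ℝ))
    (hM0 : M0 = {p | 0 < p.1 ∧ 0 < p.2.1 ∧ 0 < p.2.2 ∧ F p = 0})
    (a b c d : ℝ)
    (ha : a = n * (d₂ : ℝ) * (1 - κ₂) * Tp)
    (hb : b = (d₁ : ℝ)^2 * (1 - κ₁) * T₁ - (d₂ : ℝ)^2 * (1 - κ₂) * T₂ + 2 * n^2 * Tp
        - n^2 * κ₁ * Tp^2 / T₁)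
    (hc : c = -(2 * n * (d₂ : ℝ) * T₂) + 2 * n * (d₂ : ℝ) * κ₁ * Tp * T₂ / T₁
        - n * (d₂ : ℝ) * κ₂ * Tp)
    (hd : d = -((d₂ : ℝ)^2 * κ₁ * T₂^2 / T₁) + κ₂ * (d₂ : ℝ)^2 * T₂)
    (Disc : ℝ)
    (hDisc : Disc = 18*a*b*c*d - 4*b^3*d + b^2*c^2 - 4*a*c^3 - 27*a^2*d^2)
    (Rt : ℝ) (hRt : Rt = -b / (3*a)) :
    (∃ p ∈ M0, (∀ v : ℝ × ℝ × ℝ, fderiv ℝ F p v = 0 → fderiv ℝ S p v = 0) ∧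
        ¬ IsLocalMaxOn S M0 p ∧ ¬ IsLocalMinOn S M0 p)
      ↔ (Disc = 0 ∧ b^2 = 3*a*c ∧ (d₂ : ℝ) * T₂ / (n * Tp) < Rt) :=
  stmt_13_general d₁ d₂ hd₁ hd₂ κ₁ κ₂ hκ₁1 hκ₂1 n hn Tp T₁ T₂ hTp hT₁ hT₂ S F hS hF M0 hM0 a b c d
    ha hb hc hd Disc hDisc Rt hRt
end

section
/- S restricted to M⁰ attains its global maximum if and only if D = 0, b² ≠ 3ac, and R_s ≤ d_2T_2/(nT_p) < R_d, where R_d = (9ad − bc)/(2(b² − 3ac)) and R_s = (4abc − 9a²d − b³)/(a(b² − 3ac)). -/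
/-!
Solving `F = 0` for `α₁` parametrises `M⁰` by `β > 0` and `x = α₂/β > d₂T₂/(nT_p)`, and there
`S = -P(x) / (4βx(nT_p x - d₂T₂))`. As `S` scales like `1/β`, a maximum can only have the value
`0`, so it is attained iff `P ≥ 0` on `x > d₂T₂/(nT_p)` with a zero there. For `a > 0` such a zero
is a local minimum of `P`, hence a double root `r`, and `P = a(x - r)²(x - s)` with
`s ≤ d₂T₂/(nT_p) < r`. For a cubic of this shape `D = 0`, `b² - 3ac = a²(r - s)²`, `R_d = r` and
`R_s = s`.
-/

open Set Filter

section Cubic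

variable {K : Type*} [Field K] {a b c d r s : K}

theorem cubic_vieta_of_double_root (ha : a ≠ 0)
    (hr : a*r^3 + b*r^2 + c*r + d = 0) (hr' : 3*a*r^2 + 2*b*r + c = 0) :
    ∃ s, b = -(a*(2*r + s)) ∧ c = a*(r^2 + 2*r*s) ∧ d = -(a*r^2*s) := by
  refine ⟨-(b + 2*a*r)/a, ?_, ?_, ?_⟩
  · field_simp; ring
  · field_simp; linear_combination hr'
  · field_simp; linear_combination hr - r*hr'

theorem cubic_eq_of_vieta (hb : b = -(a*(2*r + s))) (hc : c = a*(r^2 + 2*r*s))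
    (hd : d = -(a*r^2*s)) (x : K) : a*x^3 + b*x^2 + c*x + d = a*(x - r)^2*(x - s) := by
  subst hb hc hd; ring

theorem cubic_disc_eq_zero_of_vieta (hb : b = -(a*(2*r + s))) (hc : c = a*(r^2 + 2*r*s))
    (hd : d = -(a*r^2*s)) :
    18*a*b*c*d - 4*b^3*d + b^2*c^2 - 4*a*c^3 - 27*a^2*d^2 = 0 := by
  subst hb hc hd; ring

theorem sq_sub_three_mul_of_vieta (hb : b = -(a*(2*r + s))) (hc : c = a*(r^2 + 2*r*s)) :
    b^2 - 3*a*c = (a*(r - s))^2 := by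
  subst hb hc; ring

theorem roots_eq_of_vieta [NeZero (2 : K)] (ha : a ≠ 0) (hrs : r ≠ s)
    (hb : b = -(a*(2*r + s))) (hc : c = a*(r^2 + 2*r*s)) (hd : d = -(a*r^2*s)) :
    (9*a*d - b*c) / (2*(b^2 - 3*a*c)) = r ∧ (4*a*b*c - 9*a^2*d - b^3) / (a*(b^2 - 3*a*c)) = s := by
  have hrs' : r - s ≠ 0 := sub_ne_zero.mpr hrs
  rw [sq_sub_three_mul_of_vieta hb hc]
  subst hb hc hd
  constructor <;> field_simp <;> ring

theorem cubic_double_root_of_disc_eq_zero [NeZero (2 : K)] (he : b^2 - 3*a*c ≠ 0)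
    (hD : 18*a*b*c*d - 4*b^3*d + b^2*c^2 - 4*a*c^3 - 27*a^2*d^2 = 0) {r : K}
    (hr : r = (9*a*d - b*c) / (2*(b^2 - 3*a*c))) :
    a*r^3 + b*r^2 + c*r + d = 0 ∧ 3*a*r^2 + 2*b*r + c = 0 := by
  have hP : (a*r^3 + b*r^2 + c*r + d) * (2*(b^2 - 3*a*c))^3
      = (-2*b^3 + 9*a*b*c - 27*a^2*d) *
          (18*a*b*c*d - 4*b^3*d + b^2*c^2 - 4*a*c^3 - 27*a^2*d^2) := by
    -- `field_simp` looks for the nonvanishing of the denominator in its own normal form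
    have he' : b^2 - a*c*3 ≠ 0 := by convert he using 2; ring
    subst hr; field_simp; ring
  have hP' : (3*a*r^2 + 2*b*r + c) * (2*(b^2 - 3*a*c))^2
      = -9*a * (18*a*b*c*d - 4*b^3*d + b^2*c^2 - 4*a*c^3 - 27*a^2*d^2) := by
    subst hr; field_simp; ring
  rw [hD, mul_zero] at hP hP'
  have h2e : 2*(b^2 - 3*a*c) ≠ 0 := mul_ne_zero two_ne_zero he
  exact ⟨(mul_eq_zero.mp hP).resolve_right (pow_ne_zero 3 h2e),
    (mul_eq_zero.mp hP').resolve_right (pow_ne_zero 2 h2e)⟩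

end Cubic

theorem cubic_deriv_eq_zero_of_isLocalMin {a b c d r : ℝ}
    (h : IsLocalMin (fun x => a*x^3 + b*x^2 + c*x + d) r) : 3*a*r^2 + 2*b*r + c = 0 := by
  have hf : HasDerivAt (fun x => a*x^3 + b*x^2 + c*x + d) (a*(3*r^2) + b*(2*r) + c) r := by
    simpa using ((((hasDerivAt_pow 3 r).const_mul a).add ((hasDerivAt_pow 2 r).const_mul b)).add
      ((hasDerivAt_id' r).const_mul c)).add_const d
  linear_combination h.hasDerivAt_eq_zero hf

theorem cubic_nonneg_on_Ioi_and_root_iff {a b c d x₀ : ℝ} (ha : 0 < a) :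
    ((∀ x ∈ Ioi x₀, 0 ≤ a*x^3 + b*x^2 + c*x + d) ∧ ∃ x ∈ Ioi x₀, a*x^3 + b*x^2 + c*x + d = 0) ↔
      18*a*b*c*d - 4*b^3*d + b^2*c^2 - 4*a*c^3 - 27*a^2*d^2 = 0 ∧ b^2 ≠ 3*a*c ∧
        (4*a*b*c - 9*a^2*d - b^3) / (a*(b^2 - 3*a*c)) ≤ x₀ ∧
        x₀ < (9*a*d - b*c) / (2*(b^2 - 3*a*c)) := by
  constructor
  · rintro ⟨hP, r, hr₀, hr⟩
    have hmin : IsLocalMin (fun x => a*x^3 + b*x^2 + c*x + d) r :=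
      eventually_of_mem (Ioi_mem_nhds hr₀) fun x hx => by simpa only [hr] using hP x hx
    obtain ⟨s, hb, hc, hd⟩ :=
      cubic_vieta_of_double_root ha.ne' hr (cubic_deriv_eq_zero_of_isLocalMin hmin)
    -- otherwise `a (x - r)² (x - s)` is negative just to the right of `x₀`
    have hs : s ≤ x₀ := by
      by_contra! hs
      have hy : x₀ < (x₀ + min r s) / 2 := by have := lt_min hr₀ hs; linarith
      have hneg : a*((x₀ + min r s)/2 - r)^2*((x₀ + min r s)/2 - s) < 0 := by
        have h1 : (x₀ + min r s)/2 < r := by linarith [min_le_left r s, lt_min hr₀ hs]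
        have h2 : (x₀ + min r s)/2 < s := by linarith [min_le_right r s, lt_min hr₀ hs]
        exact mul_neg_of_pos_of_neg (mul_pos ha (sq_pos_of_neg (sub_neg.mpr h1))) (sub_neg.mpr h2)
      linarith [hP _ hy, cubic_eq_of_vieta hb hc hd ((x₀ + min r s)/2)]
    have hrs : r ≠ s := (hs.trans_lt hr₀).ne'
    obtain ⟨hRd, hRs⟩ := roots_eq_of_vieta ha.ne' hrs hb hc hd
    refine ⟨cubic_disc_eq_zero_of_vieta hb hc hd, fun he => ?_, hRs ▸ hs, hRd ▸ hr₀⟩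
    have : (a*(r - s))^2 = 0 := by rw [← sq_sub_three_mul_of_vieta hb hc, he, sub_self]
    exact hrs (by simpa [ha.ne', sub_eq_zero] using this)
  · rintro ⟨hD, he, hRs, hRd⟩
    have he' : b^2 - 3*a*c ≠ 0 := sub_ne_zero.mpr he
    obtain ⟨hr, hr'⟩ := cubic_double_root_of_disc_eq_zero he' hD rfl
    obtain ⟨s, hb, hc, hd⟩ := cubic_vieta_of_double_root ha.ne' hr hr'
    have hrs : (9*a*d - b*c) / (2*(b^2 - 3*a*c)) ≠ s := by
      intro h
      exact he' (by rw [sq_sub_three_mul_of_vieta hb hc, h, sub_self, mul_zero, sq, mul_zero])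
    rw [(roots_eq_of_vieta ha.ne' hrs hb hc hd).2] at hRs
    refine ⟨fun x hx => ?_, _, hRd, hr⟩
    rw [cubic_eq_of_vieta hb hc hd]
    exact mul_nonneg (mul_nonneg ha.le (sq_nonneg _)) (by linarith [mem_Ioi.mp hx])

-- `(β, x) ↦ (β, α₁, α₂)` with `α₂ = βx` and `α₁` solved from `-A/β + C/α₁ + B/α₂ = 0`
noncomputable def constraintParam (A B C : ℝ) (q : ℝ × ℝ) : ℝ × ℝ × ℝ :=
  (q.1, C * q.1 * q.2 / (A * q.2 - B), q.1 * q.2)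

theorem constraint_surface_eq_image_constraintParam {A B C : ℝ} (hA : 0 < A) (hB : 0 < B)
    (hC : 0 < C) :
    {p : ℝ × ℝ × ℝ | 0 < p.1 ∧ 0 < p.2.1 ∧ 0 < p.2.2 ∧ -A / p.1 + C / p.2.1 + B / p.2.2 = 0} =
      constraintParam A B C '' (Ioi 0 ×ˢ Ioi (B / A)) := by
  ext ⟨β, α₁, α₂⟩
  simp only [constraintParam, mem_ofPred_eq, mem_image, mem_prod, mem_Ioi, Prod.exists,
    Prod.mk.injEq]
  constructor
  · rintro ⟨hβ, hα₁, hα₂, hF⟩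
    have hC' : C / α₁ = A / β - B / α₂ := by rw [neg_div] at hF; linarith
    have hu : 0 < A * α₂ - B * β := by
      have : 0 < A / β - B / α₂ := hC' ▸ div_pos hC hα₁
      rw [div_sub_div _ _ hβ.ne' hα₂.ne'] at this
      have := (div_pos_iff_of_pos_right (mul_pos hβ hα₂)).mp this
      linarith
    refine ⟨β, α₂ / β, ⟨hβ, ?_⟩, rfl, ?_, by field_simp⟩
    · rw [div_lt_div_iff₀ hA hβ]; linarith
    · have hu' : A * (α₂ / β) - B = (A * α₂ - B * β) / β := by field_simp
      rw [div_sub_div _ _ hβ.ne' hα₂.ne', div_eq_div_iff hα₁.ne' (by positivity)] at hC'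
      rw [div_eq_iff (by rw [hu']; positivity)]
      field_simp
      linarith
  · rintro ⟨β, x, ⟨hβ, hx⟩, rfl, rfl, rfl⟩
    have hx₀ : 0 < x := (div_pos hB hA).trans hx
    have hu : 0 < A * x - B := by rw [div_lt_iff₀ hA] at hx; linarith
    refine ⟨hβ, by positivity, by positivity, ?_⟩
    field_simp
    ring

theorem S_constraintParam {d₁ d₂ κ₁ κ₂ n Tp T₁ T₂ a b c d : ℝ} {S : ℝ × ℝ × ℝ → ℝ}
    (hS : ∀ p, S p = -(1/4) * (d₁ * (1 - κ₁) * p.2.1 + d₂ * (1 - κ₂) * p.2.2) / p.1^2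
        - n / (2 * p.1) + (1/4) * (d₁ * κ₁ / p.2.1 + d₂ * κ₂ / p.2.2))
    (ha : a = n * d₂ * (1 - κ₂) * Tp)
    (hb : b = d₁^2 * (1 - κ₁) * T₁ - d₂^2 * (1 - κ₂) * T₂ + 2 * n^2 * Tp - n^2 * κ₁ * Tp^2 / T₁)
    (hc : c = -(2 * n * d₂ * T₂) + 2 * n * d₂ * κ₁ * Tp * T₂ / T₁ - n * d₂ * κ₂ * Tp)
    (hd : d = -(d₂^2 * κ₁ * T₂^2 / T₁) + κ₂ * d₂^2 * T₂)
    (hd₁ : d₁ ≠ 0) (hT₁ : T₁ ≠ 0) {β x : ℝ} (hβ : β ≠ 0) (hx : x ≠ 0)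
    (hu : n * Tp * x - d₂ * T₂ ≠ 0) :
    S (constraintParam (n * Tp) (d₂ * T₂) (d₁ * T₁) (β, x)) =
      -(a*x^3 + b*x^2 + c*x + d) / (4 * x * (n * Tp * x - d₂ * T₂)) / β := by
  rw [hS, ha, hb, hc, hd]
  simp only [constraintParam]
  have hu' : x * n * Tp - d₂ * T₂ ≠ 0 := by convert hu using 2; ring
  field_simp
  ring

theorem exists_forall_div_le_iff {I : Set ℝ} {f : ℝ × ℝ → ℝ} {g : ℝ → ℝ}
    (hf : ∀ q ∈ Ioi 0 ×ˢ I, f q = g q.2 / q.1) :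
    (∃ q ∈ Ioi 0 ×ˢ I, ∀ q' ∈ Ioi 0 ×ˢ I, f q' ≤ f q) ↔
      (∀ x ∈ I, g x ≤ 0) ∧ ∃ x ∈ I, g x = 0 := by
  constructor
  · rintro ⟨⟨β, x⟩, ⟨hβ : 0 < β, hx⟩, hmax⟩
    have hle : ∀ t ∈ Ioi (0 : ℝ), g x / t ≤ g x / β := fun t ht => by
      simpa only [hf (t, x) ⟨ht, hx⟩, hf (β, x) ⟨hβ, hx⟩] using hmax (t, x) ⟨ht, hx⟩
    -- comparing with the points at `2β` and `β/2` forces the value `0`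
    have hgx : g x = 0 := by
      have h₁ := hle (2 * β) (mul_pos two_pos hβ)
      have h₂ := hle (β / 2) (half_pos hβ)
      rw [show g x / (2 * β) = g x / β / 2 by ring] at h₁
      rw [show g x / (β / 2) = 2 * (g x / β) by ring] at h₂
      have : g x / β = 0 := by linarith
      simpa [hβ.ne'] using this
    refine ⟨fun y hy => ?_, x, hx, hgx⟩
    have := hmax (1, y) ⟨mem_Ioi.2 one_pos, hy⟩
    rwa [hf (1, y) ⟨mem_Ioi.2 one_pos, hy⟩, hf (β, x) ⟨hβ, hx⟩, hgx, zero_div, div_one] at this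
  · rintro ⟨hg, x, hx, hgx⟩
    refine ⟨(1, x), ⟨mem_Ioi.2 one_pos, hx⟩, fun q hq => ?_⟩
    rw [hf _ hq, hf (1, x) ⟨mem_Ioi.2 one_pos, hx⟩, hgx, zero_div]
    exact div_nonpos_of_nonpos_of_nonneg (hg _ hq.2) hq.1.le

theorem neg_div_nonpos_and_eq_zero_iff {I : Set ℝ} {P h : ℝ → ℝ} (hh : ∀ x ∈ I, 0 < h x) :
    ((∀ x ∈ I, -P x / h x ≤ 0) ∧ ∃ x ∈ I, -P x / h x = 0) ↔
      (∀ x ∈ I, 0 ≤ P x) ∧ ∃ x ∈ I, P x = 0 := by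
  refine and_congr (forall₂_congr fun x hx => ?_)
    (exists_congr fun x => and_congr_right fun hx => ?_)
  · rw [neg_div, neg_nonpos, le_div_iff₀ (hh x hx), zero_mul]
  · rw [neg_div, neg_eq_zero, div_eq_zero_iff, or_iff_left (hh x hx).ne']

theorem stmt_14_general (d₁ d₂ : ℕ) (hd₁ : 0 < d₁) (hd₂ : 0 < d₂)
    (κ₁ κ₂ : ℝ) (hκ₁1 : κ₁ < 1) (hκ₂1 : κ₂ < 1)
    (n : ℝ) (hn : n = 2 * ((d₁ : ℝ) * (1 - κ₁) + (d₂ : ℝ) * (1 - κ₂)))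
    (Tp T₁ T₂ : ℝ) (hTp : 0 < Tp) (hT₁ : 0 < T₁) (hT₂ : 0 < T₂)
    (S F : ℝ × ℝ × ℝ → ℝ)
    (hS : ∀ p, S p = -(1/4) * ((d₁ : ℝ) * (1 - κ₁) * p.2.1 + (d₂ : ℝ) * (1 - κ₂) * p.2.2) / p.1^2
        - n / (2 * p.1) + (1/4) * ((d₁ : ℝ) * κ₁ / p.2.1 + (d₂ : ℝ) * κ₂ / p.2.2))
    (hF : ∀ p, F p = -n * Tp / p.1 + (d₁ : ℝ) * T₁ / p.2.1 + (d₂ : ℝ) * T₂ / p.2.2)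
    (M0 : Set (ℝ × ℝ × ℝ))
    (hM0 : M0 = {p | 0 < p.1 ∧ 0 < p.2.1 ∧ 0 < p.2.2 ∧ F p = 0})
    (a b c d : ℝ)
    (ha : a = n * (d₂ : ℝ) * (1 - κ₂) * Tp)
    (hb : b = (d₁ : ℝ)^2 * (1 - κ₁) * T₁ - (d₂ : ℝ)^2 * (1 - κ₂) * T₂ + 2 * n^2 * Tp
        - n^2 * κ₁ * Tp^2 / T₁)
    (hc : c = -(2 * n * (d₂ : ℝ) * T₂) + 2 * n * (d₂ : ℝ) * κ₁ * Tp * T₂ / T₁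
        - n * (d₂ : ℝ) * κ₂ * Tp)
    (hd : d = -((d₂ : ℝ)^2 * κ₁ * T₂^2 / T₁) + κ₂ * (d₂ : ℝ)^2 * T₂)
    (Disc : ℝ)
    (hDisc : Disc = 18*a*b*c*d - 4*b^3*d + b^2*c^2 - 4*a*c^3 - 27*a^2*d^2)
    (Rd Rs : ℝ)
    (hRd : Rd = (9*a*d - b*c) / (2*(b^2 - 3*a*c)))
    (hRs : Rs = (4*a*b*c - 9*a^2*d - b^3) / (a*(b^2 - 3*a*c))) :
    (∃ p ∈ M0, ∀ q ∈ M0, S q ≤ S p)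
      ↔ (Disc = 0 ∧ b^2 ≠ 3*a*c ∧ Rs ≤ (d₂ : ℝ) * T₂ / (n * Tp)
          ∧ (d₂ : ℝ) * T₂ / (n * Tp) < Rd) := by
  subst hDisc hRd hRs
  have hd₁' : (0 : ℝ) < d₁ := Nat.cast_pos.mpr hd₁
  have hd₂' : (0 : ℝ) < d₂ := Nat.cast_pos.mpr hd₂
  have hn₀ : 0 < n := by
    have := mul_pos hd₁' (sub_pos.mpr hκ₁1)
    have := mul_pos hd₂' (sub_pos.mpr hκ₂1)
    rw [hn]; linarith
  have ha₀ : 0 < a := ha ▸ mul_pos (mul_pos (mul_pos hn₀ hd₂') (sub_pos.mpr hκ₂1)) hTp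
  set x₀ := (d₂ : ℝ) * T₂ / (n * Tp)
  have hx₀ : 0 < x₀ := by positivity
  have hu : ∀ x ∈ Ioi x₀, 0 < n * Tp * x - d₂ * T₂ := fun x hx => by
    have := (div_lt_iff₀ (mul_pos hn₀ hTp)).mp hx; linarith
  have hM0' : M0 = constraintParam (n * Tp) (d₂ * T₂) (d₁ * T₁) '' (Ioi (0 : ℝ) ×ˢ Ioi x₀) := by
    rw [hM0, ← constraint_surface_eq_image_constraintParam (by positivity) (by positivity)
      (by positivity)]
    simp only [hF, neg_mul]
  calc (∃ p ∈ M0, ∀ q ∈ M0, S q ≤ S p)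
      ↔ ∃ q ∈ Ioi (0 : ℝ) ×ˢ Ioi x₀, ∀ q' ∈ Ioi (0 : ℝ) ×ˢ Ioi x₀,
          S (constraintParam (n * Tp) (d₂ * T₂) (d₁ * T₁) q') ≤
            S (constraintParam (n * Tp) (d₂ * T₂) (d₁ * T₁) q) := by
        simp only [hM0', exists_mem_image, forall_mem_image]
    _ ↔ (∀ x ∈ Ioi x₀, -(a*x^3 + b*x^2 + c*x + d) / (4 * x * (n * Tp * x - d₂ * T₂)) ≤ 0) ∧
          ∃ x ∈ Ioi x₀, -(a*x^3 + b*x^2 + c*x + d) / (4 * x * (n * Tp * x - d₂ * T₂)) = 0 :=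
        exists_forall_div_le_iff fun q hq => S_constraintParam hS ha hb hc hd hd₁'.ne' hT₁.ne'
          hq.1.ne' (hx₀.trans hq.2).ne' (hu _ hq.2).ne'
    _ ↔ (∀ x ∈ Ioi x₀, 0 ≤ a*x^3 + b*x^2 + c*x + d) ∧
          ∃ x ∈ Ioi x₀, a*x^3 + b*x^2 + c*x + d = 0 :=
        neg_div_nonpos_and_eq_zero_iff fun x hx =>
          mul_pos (mul_pos four_pos (hx₀.trans hx)) (hu x hx)
    _ ↔ _ := cubic_nonneg_on_Ioi_and_root_iff ha₀

/-- Theorem 5.8 (2): `S|_{M⁰}` attains its global maximum iff `D = 0`, `b² ≠ 3ac` and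
`R_s ≤ d₂T₂/(nT_p) < R_d`. -/
theorem stmt_14 (d₁ d₂ : ℕ) (hd₁ : 0 < d₁) (hd₂ : 0 < d₂)
    (κ₁ κ₂ : ℝ) (hκ₁0 : 0 ≤ κ₁) (hκ₁1 : κ₁ < 1) (hκ₂0 : 0 ≤ κ₂) (hκ₂1 : κ₂ < 1)
    (n : ℝ) (hn : n = 2 * ((d₁ : ℝ) * (1 - κ₁) + (d₂ : ℝ) * (1 - κ₂)))
    (Tp T₁ T₂ : ℝ) (hTp : 0 < Tp) (hT₁ : 0 < T₁) (hT₂ : 0 < T₂)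
    (S F : ℝ × ℝ × ℝ → ℝ)
    (hS : ∀ p, S p = -(1/4) * ((d₁ : ℝ) * (1 - κ₁) * p.2.1 + (d₂ : ℝ) * (1 - κ₂) * p.2.2) / p.1^2
        - n / (2 * p.1) + (1/4) * ((d₁ : ℝ) * κ₁ / p.2.1 + (d₂ : ℝ) * κ₂ / p.2.2))
    (hF : ∀ p, F p = -n * Tp / p.1 + (d₁ : ℝ) * T₁ / p.2.1 + (d₂ : ℝ) * T₂ / p.2.2)
    (M0 : Set (ℝ × ℝ × ℝ))
    (hM0 : M0 = {p | 0 < p.1 ∧ 0 < p.2.1 ∧ 0 < p.2.2 ∧ F p = 0})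
    (a b c d : ℝ)
    (ha : a = n * (d₂ : ℝ) * (1 - κ₂) * Tp)
    (hb : b = (d₁ : ℝ)^2 * (1 - κ₁) * T₁ - (d₂ : ℝ)^2 * (1 - κ₂) * T₂ + 2 * n^2 * Tp
        - n^2 * κ₁ * Tp^2 / T₁)
    (hc : c = -(2 * n * (d₂ : ℝ) * T₂) + 2 * n * (d₂ : ℝ) * κ₁ * Tp * T₂ / T₁
        - n * (d₂ : ℝ) * κ₂ * Tp)
    (hd : d = -((d₂ : ℝ)^2 * κ₁ * T₂^2 / T₁) + κ₂ * (d₂ : ℝ)^2 * T₂)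
    (Disc : ℝ)
    (hDisc : Disc = 18*a*b*c*d - 4*b^3*d + b^2*c^2 - 4*a*c^3 - 27*a^2*d^2)
    (Rd Rs : ℝ)
    (hRd : Rd = (9*a*d - b*c) / (2*(b^2 - 3*a*c)))
    (hRs : Rs = (4*a*b*c - 9*a^2*d - b^3) / (a*(b^2 - 3*a*c))) :
    (∃ p ∈ M0, ∀ q ∈ M0, S q ≤ S p)
      ↔ (Disc = 0 ∧ b^2 ≠ 3*a*c ∧ Rs ≤ (d₂ : ℝ) * T₂ / (n * Tp)
          ∧ (d₂ : ℝ) * T₂ / (n * Tp) < Rd) :=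
  stmt_14_general d₁ d₂ hd₁ hd₂ κ₁ κ₂ hκ₁1 hκ₂1 n hn Tp T₁ T₂ hTp hT₁ hT₂ S F hS hF M0 hM0 a b c d
    ha hb hc hd Disc hDisc Rd Rs hRd hRs
end

section
/- Critical points of S restricted to M⁰ are unique up to scaling: if (β,α_1,α_2) and (β′,α′_1,α′_2) are both critical points of S restricted to M⁰, then there exists τ > 0 such that β′ = τβ, α′_1 = τα_1 and α′_2 = τα_2. -/
/-!
`S` and `F` are both of the form `(E α₁ + G α₂) / β² + A / β + B / α₁ + C / α₂`, homogeneous of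
degree `-1`, so only the ratios `u = α₁ / β`, `v = α₂ / β` of a critical point matter. Writing
`a = d₁(1-κ₁)`, `b = d₂(1-κ₂)`, `cᵢ = dᵢκᵢ`, `tᵢ = dᵢTᵢ`, the tangency of `dS` and `dF` together
with `F = 0` gives, after eliminating `n T_p`,
`t₂ (a u² + c₁) = t₁ (b v² + c₂)` and `c₁ / u + c₂ / v = a u + b v + 2 n`.
The first equation makes `v` increase with `u`; along it the left side of the second decreases and
the right side increases, so there is at most one positive solution `(u, v)`.
-/

noncomputable def homogNegOne (E G A B C : ℝ) (q : ℝ × ℝ × ℝ) : ℝ :=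
  (E * q.2.1 + G * q.2.2) / q.1 ^ 2 + A / q.1 + B / q.2.1 + C / q.2.2

theorem fderiv_homogNegOne_apply (E G A B C : ℝ) {q : ℝ × ℝ × ℝ}
    (h₀ : q.1 ≠ 0) (h₁ : q.2.1 ≠ 0) (h₂ : q.2.2 ≠ 0) (v : ℝ × ℝ × ℝ) :
    fderiv ℝ (homogNegOne E G A B C) q v =
      (-2 * (E * q.2.1 + G * q.2.2) / q.1 ^ 3 - A / q.1 ^ 2) * v.1
        + (E / q.1 ^ 2 - B / q.2.1 ^ 2) * v.2.1 + (G / q.1 ^ 2 - C / q.2.2 ^ 2) * v.2.2 := by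
  have hβ : HasFDerivAt (fun q : ℝ × ℝ × ℝ => q.1) _ q := hasFDerivAt_fst (𝕜 := ℝ)
  have hα₁ : HasFDerivAt (fun q : ℝ × ℝ × ℝ => q.2.1) _ q := (hasFDerivAt_snd (𝕜 := ℝ)).fst
  have hα₂ : HasFDerivAt (fun q : ℝ × ℝ × ℝ => q.2.2) _ q := (hasFDerivAt_snd (𝕜 := ℝ)).snd
  have hβi := (hasFDerivAt_inv h₀).comp q hβ
  have h : HasFDerivAt (fun q : ℝ × ℝ × ℝ =>
      (E * q.2.1 + G * q.2.2) * (q.1⁻¹ * q.1⁻¹) + A * q.1⁻¹ + B * q.2.1⁻¹ + C * q.2.2⁻¹) _ q :=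
    ((((hα₁.const_mul E).add (hα₂.const_mul G)).mul (hβi.mul hβi)).add (hβi.const_mul A)).add
      (((hasFDerivAt_inv h₁).comp q hα₁).const_mul B) |>.add
      (((hasFDerivAt_inv h₂).comp q hα₂).const_mul C)
  have hf : homogNegOne E G A B C = fun q : ℝ × ℝ × ℝ =>
      (E * q.2.1 + G * q.2.2) * (q.1⁻¹ * q.1⁻¹) + A * q.1⁻¹ + B * q.2.1⁻¹ + C * q.2.2⁻¹ := by
    ext q; simp only [homogNegOne]; ring
  rw [hf, h.fderiv]
  simp only [Pi.add_apply, Function.comp_apply, smul_add, Pi.mul_apply, add_apply, smul_apply,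
    ContinuousLinearMap.comp_apply, ContinuousLinearMap.coe_fst', ContinuousLinearMap.coe_snd',
    ContinuousLinearMap.toSpanSingleton_apply, smul_eq_mul, mul_neg, neg_mul]
  field_simp
  ring

theorem mul_eq_mul_of_forall_imp {k₁ k₂ k₃ l₁ l₂ l₃ : ℝ}
    (h : ∀ v : ℝ × ℝ × ℝ, l₁ * v.1 + l₂ * v.2.1 + l₃ * v.2.2 = 0 →
      k₁ * v.1 + k₂ * v.2.1 + k₃ * v.2.2 = 0) :
    k₁ * l₂ = k₂ * l₁ ∧ k₁ * l₃ = k₃ * l₁ := by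
  constructor
  · linear_combination h (l₂, -l₁, 0) (by ring)
  · linear_combination h (l₃, 0, -l₁) (by ring)

theorem critical_equations {a b c₁ c₂ n N t₁ t₂ : ℝ} {q : ℝ × ℝ × ℝ}
    (h₀ : q.1 ≠ 0) (h₁ : q.2.1 ≠ 0) (h₂ : q.2.2 ≠ 0)
    (hcrit : ∀ v, fderiv ℝ (homogNegOne 0 0 (-N) t₁ t₂) q v = 0 →
      fderiv ℝ (homogNegOne (-a / 4) (-b / 4) (-n / 2) (c₁ / 4) (c₂ / 4)) q v = 0) :
    N * (a * (q.2.1 / q.1) ^ 2 + c₁) = 2 * t₁ * (a * (q.2.1 / q.1) + b * (q.2.2 / q.1) + n) ∧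
    N * (b * (q.2.2 / q.1) ^ 2 + c₂) = 2 * t₂ * (a * (q.2.1 / q.1) + b * (q.2.2 / q.1) + n) := by
  simp only [fderiv_homogNegOne_apply _ _ _ _ _ h₀ h₁ h₂] at hcrit
  obtain ⟨e₁, e₂⟩ := mul_eq_mul_of_forall_imp hcrit
  constructor
  · linear_combination (norm := (field_simp; ring)) (4 * q.2.1 ^ 2 * q.1 ^ 2) * e₁
  · linear_combination (norm := (field_simp; ring)) (4 * q.2.2 ^ 2 * q.1 ^ 2) * e₂

theorem constraint_equation {N t₁ t₂ : ℝ} {q : ℝ × ℝ × ℝ}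
    (h₀ : q.1 ≠ 0) (h₁ : q.2.1 ≠ 0) (h₂ : q.2.2 ≠ 0) (hF : homogNegOne 0 0 (-N) t₁ t₂ q = 0) :
    t₁ * (q.2.2 / q.1) + t₂ * (q.2.1 / q.1) = N * ((q.2.1 / q.1) * (q.2.2 / q.1)) := by
  simp only [homogNegOne] at hF
  linear_combination (norm := (field_simp; ring)) (q.2.1 * q.2.2 / q.1) * hF

def IsReducedCriticalPoint (a b c₁ c₂ n t₁ t₂ u v : ℝ) : Prop :=
  t₂ * (a * u ^ 2 + c₁) = t₁ * (b * v ^ 2 + c₂) ∧ c₁ / u + c₂ / v = a * u + b * v + 2 * n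

theorem isReducedCriticalPoint_of_critical {a b c₁ c₂ n N t₁ t₂ : ℝ} {q : ℝ × ℝ × ℝ}
    (hN : N ≠ 0) (h₀ : q.1 ≠ 0) (h₁ : q.2.1 ≠ 0) (h₂ : q.2.2 ≠ 0)
    (hF : homogNegOne 0 0 (-N) t₁ t₂ q = 0)
    (hcrit : ∀ v, fderiv ℝ (homogNegOne 0 0 (-N) t₁ t₂) q v = 0 →
      fderiv ℝ (homogNegOne (-a / 4) (-b / 4) (-n / 2) (c₁ / 4) (c₂ / 4)) q v = 0) :
    IsReducedCriticalPoint a b c₁ c₂ n t₁ t₂ (q.2.1 / q.1) (q.2.2 / q.1) := by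
  obtain ⟨e₁, e₂⟩ := critical_equations h₀ h₁ h₂ hcrit
  have hc := constraint_equation h₀ h₁ h₂ hF
  have hu : q.2.1 / q.1 ≠ 0 := div_ne_zero h₁ h₀
  have hv : q.2.2 / q.1 ≠ 0 := div_ne_zero h₂ h₀
  generalize q.2.1 / q.1 = u at *
  generalize q.2.2 / q.1 = v at *
  constructor
  · exact mul_left_cancel₀ hN (by linear_combination t₂ * e₁ - t₁ * e₂)
  · linear_combination (norm := (field_simp; ring))
      (v * e₁ + u * e₂ + 2 * (a * u + b * v + n) * hc) / (N * u * v)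

theorem IsReducedCriticalPoint.swap {a b c₁ c₂ n t₁ t₂ u v : ℝ}
    (h : IsReducedCriticalPoint a b c₁ c₂ n t₁ t₂ u v) :
    IsReducedCriticalPoint b a c₂ c₁ n t₂ t₁ v u :=
  ⟨h.1.symm, by linarith [h.2]⟩

theorem IsReducedCriticalPoint.le {a b c₁ c₂ n t₁ t₂ u v u' v' : ℝ}
    (ha : 0 < a) (hb : 0 < b) (hc₁ : 0 ≤ c₁) (hc₂ : 0 ≤ c₂) (ht₁ : 0 < t₁) (ht₂ : 0 < t₂)
    (hv : 0 < v) (hu' : 0 < u') (hv' : 0 < v')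
    (h : IsReducedCriticalPoint a b c₁ c₂ n t₁ t₂ u v)
    (h' : IsReducedCriticalPoint a b c₁ c₂ n t₁ t₂ u' v') : u ≤ u' := by
  by_contra! hlt
  have hvlt : v' < v := by
    by_contra! hle
    nlinarith [h.1, h'.1, mul_lt_mul_of_pos_left (sub_pos.2 hlt) (mul_pos ht₂ ha),
      mul_le_mul_of_nonneg_left (sub_nonneg.2 hle) (mul_pos ht₁ hb).le]
  have hc₁u : c₁ / u ≤ c₁ / u' := div_le_div_of_nonneg_left hc₁ hu' hlt.le
  have hc₂v : c₂ / v ≤ c₂ / v' := div_le_div_of_nonneg_left hc₂ hv' hvlt.le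
  nlinarith [h.2, h'.2]

theorem IsReducedCriticalPoint.unique {a b c₁ c₂ n t₁ t₂ u v u' v' : ℝ}
    (ha : 0 < a) (hb : 0 < b) (hc₁ : 0 ≤ c₁) (hc₂ : 0 ≤ c₂) (ht₁ : 0 < t₁) (ht₂ : 0 < t₂)
    (hu : 0 < u) (hv : 0 < v) (hu' : 0 < u') (hv' : 0 < v')
    (h : IsReducedCriticalPoint a b c₁ c₂ n t₁ t₂ u v)
    (h' : IsReducedCriticalPoint a b c₁ c₂ n t₁ t₂ u' v') : u = u' ∧ v = v' :=
  ⟨le_antisymm (h.le ha hb hc₁ hc₂ ht₁ ht₂ hv hu' hv' h')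
      (h'.le ha hb hc₁ hc₂ ht₁ ht₂ hv' hu hv h),
    le_antisymm (h.swap.le hb ha hc₂ hc₁ ht₂ ht₁ hu hv' hu' h'.swap)
      (h'.swap.le hb ha hc₂ hc₁ ht₂ ht₁ hu' hv hu h.swap)⟩

/-- Theorem 5.8, last assertion: critical points of `S|_{M⁰}` are unique up to scaling. -/
theorem stmt_16 (d₁ d₂ : ℕ) (hd₁ : 0 < d₁) (hd₂ : 0 < d₂)
    (κ₁ κ₂ : ℝ) (hκ₁0 : 0 ≤ κ₁) (hκ₁1 : κ₁ < 1) (hκ₂0 : 0 ≤ κ₂) (hκ₂1 : κ₂ < 1)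
    (n : ℝ) (hn : n = 2 * ((d₁ : ℝ) * (1 - κ₁) + (d₂ : ℝ) * (1 - κ₂)))
    (Tp T₁ T₂ : ℝ) (hTp : 0 < Tp) (hT₁ : 0 < T₁) (hT₂ : 0 < T₂)
    (S F : ℝ × ℝ × ℝ → ℝ)
    (hS : ∀ p, S p = -(1/4) * ((d₁ : ℝ) * (1 - κ₁) * p.2.1 + (d₂ : ℝ) * (1 - κ₂) * p.2.2) / p.1^2
        - n / (2 * p.1) + (1/4) * ((d₁ : ℝ) * κ₁ / p.2.1 + (d₂ : ℝ) * κ₂ / p.2.2))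
    (hF : ∀ p, F p = -n * Tp / p.1 + (d₁ : ℝ) * T₁ / p.2.1 + (d₂ : ℝ) * T₂ / p.2.2)
    (M0 : Set (ℝ × ℝ × ℝ))
    (hM0 : M0 = {p | 0 < p.1 ∧ 0 < p.2.1 ∧ 0 < p.2.2 ∧ F p = 0})
    (p p' : ℝ × ℝ × ℝ) (hp : p ∈ M0) (hp' : p' ∈ M0)
    (hcrit : ∀ v : ℝ × ℝ × ℝ, fderiv ℝ F p v = 0 → fderiv ℝ S p v = 0)
    (hcrit' : ∀ v : ℝ × ℝ × ℝ, fderiv ℝ F p' v = 0 → fderiv ℝ S p' v = 0) :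
    ∃ τ : ℝ, 0 < τ ∧ p'.1 = τ * p.1 ∧ p'.2.1 = τ * p.2.1 ∧ p'.2.2 = τ * p.2.2 := by
  subst hM0
  obtain ⟨hβ, hα₁, hα₂, hFp⟩ := hp
  obtain ⟨hβ', hα₁', hα₂', hFp'⟩ := hp'
  have hS' : S = homogNegOne (-(d₁ * (1 - κ₁)) / 4) (-(d₂ * (1 - κ₂)) / 4) (-n / 2)
      (d₁ * κ₁ / 4) (d₂ * κ₂ / 4) := by
    ext q; rw [hS, homogNegOne]; ring
  have hF' : F = homogNegOne 0 0 (-(n * Tp)) (d₁ * T₁) (d₂ * T₂) := by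
    ext q; rw [hF, homogNegOne]; ring
  subst hS' hF'
  have hnTp : n * Tp ≠ 0 := by subst hn; positivity
  have hred := isReducedCriticalPoint_of_critical hnTp hβ.ne' hα₁.ne' hα₂.ne' hFp hcrit
  have hred' := isReducedCriticalPoint_of_critical hnTp hβ'.ne' hα₁'.ne' hα₂'.ne' hFp' hcrit'
  obtain ⟨hratio₁, hratio₂⟩ := hred.unique (by positivity) (by positivity) (by positivity)
    (by positivity) (by positivity) (by positivity) (by positivity) (by positivity)
    (by positivity) (by positivity) hred'
  refine ⟨p'.1 / p.1, div_pos hβ' hβ, by field_simp, ?_, ?_⟩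
  · rw [div_eq_div_iff hβ.ne' hβ'.ne'] at hratio₁; field_simp; linarith
  · rw [div_eq_div_iff hβ.ne' hβ'.ne'] at hratio₂; field_simp; linarith
end

section
/- If condition (Z) holds, i.e. ∑_{i=1}^m (n²κ_iT_p² − d_i²(1−κ_i)T_i²)/(nT_pT_i) − 2n < 0, then there exist real numbers β > 0, α_1,…,α_m > 0 and c > 0 satisfying the system (∗_c): (1/4)((α_i/β)²(1−κ_i) + κ_i) = cT_i for i = 1,…,m and ∑_{i=1}^m (α_i/(2β) + 1)·d_i(1−κ_i)/n = cT_p. -/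
set_option maxHeartbeats 1000000 in
/-- Theorem 5.10 (1): under condition (Z) there exists a positive solution `(β, α, c)` of the
system (∗_c), i.e. a metric in `M_K` and `c > 0` with `Ric(g) = cT`. -/
theorem stmt_17 (m : ℕ) (hm : 1 ≤ m) (d : Fin m → ℕ) (hd : ∀ i, 0 < d i)
    (κ : Fin m → ℝ) (hκ0 : ∀ i, 0 ≤ κ i) (hκ1 : ∀ i, κ i < 1)
    (n : ℝ) (hn : n = 2 * ∑ i, (d i : ℝ) * (1 - κ i))
    (Tp : ℝ) (hTp : 0 < Tp) (T : Fin m → ℝ) (hT : ∀ i, 0 < T i)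
    (hZ : ∑ i, (n^2 * κ i * Tp^2 - (d i : ℝ)^2 * (1 - κ i) * (T i)^2) / (n * Tp * T i)
        - 2 * n < 0) :
    ∃ β : ℝ, ∃ α : Fin m → ℝ, ∃ c : ℝ, 0 < β ∧ (∀ i, 0 < α i) ∧ 0 < c ∧
      (∀ i, (1/4) * ((α i / β)^2 * (1 - κ i) + κ i) = c * T i) ∧
      (∑ i, (α i / (2*β) + 1) * ((d i : ℝ) * (1 - κ i)) / n = c * Tp) := by
  -- basic positivity
  have hmpos : 0 < m := hm
  haveI : Nonempty (Fin m) := Fin.pos_iff_nonempty.mp hmpos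
  have hκ1' : ∀ i, (0:ℝ) < 1 - κ i := fun i => by linarith [hκ1 i]
  have hdpos : ∀ i, (0:ℝ) < (d i : ℝ) := fun i => by exact_mod_cast hd i
  have hsum_pos : (0:ℝ) < ∑ i, (d i : ℝ) * (1 - κ i) :=
    Finset.sum_pos (fun i _ => mul_pos (hdpos i) (hκ1' i)) Finset.univ_nonempty
  have hnpos : 0 < n := by rw [hn]; linarith
  have hnTp : 0 < n * Tp := mul_pos hnpos hTp
  -- the quantities B i = d i * T i / (n * Tp)
  set B : Fin m → ℝ := fun i => (d i : ℝ) * T i / (n * Tp) with hBdef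
  have hBpos : ∀ i, 0 < B i := fun i => div_pos (mul_pos (hdpos i) (hT i)) hnTp
  -- argmax j0 of κ i / (4 T i)
  obtain ⟨j0, -, hj0⟩ := Finset.exists_max_image Finset.univ (fun i => κ i / (4 * T i))
    Finset.univ_nonempty
  have hj0' : ∀ i, κ i / (4 * T i) ≤ κ j0 / (4 * T j0) := fun i => hj0 i (Finset.mem_univ i)
  set c0 : ℝ := κ j0 / (4 * T j0) with hc0def
  have hc0nonneg : 0 ≤ c0 := div_nonneg (hκ0 j0) (by linarith [hT j0])
  -- key fact: for c > c0, 4*c*T i - κ i > 0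
  have hpos4 : ∀ c, c0 < c → ∀ i, 0 < 4 * c * T i - κ i := by
    intro c hc i
    have h1 : κ i / (4 * T i) < c := lt_of_le_of_lt (hj0' i) hc
    have h2 : 0 < 4 * T i := by linarith [hT i]
    rw [div_lt_iff₀ h2] at h1
    nlinarith
  set clo : ℝ := (κ j0 + (1 - κ j0) * (B j0)^2) / (4 * T j0) with hclodef
  have hcloc0 : c0 < clo := by
    have h2 : (0:ℝ) < 4 * T j0 := by linarith [hT j0]
    rw [hc0def, hclodef, div_lt_div_iff₀ h2 h2]
    nlinarith [mul_pos (hκ1' j0) (pow_pos (hBpos j0) 2)]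
  have hclopos : 0 < clo := lt_of_le_of_lt hc0nonneg hcloc0
  -- x c i
  set x : ℝ → Fin m → ℝ := fun c i => Real.sqrt ((4 * c * T i - κ i) / (1 - κ i)) with hxdef
  have hxpos : ∀ c, c0 < c → ∀ i, 0 < x c i := by
    intro c hc i
    exact Real.sqrt_pos.mpr (div_pos (hpos4 c hc i) (hκ1' i))
  have hxsq : ∀ c, c0 < c → ∀ i, (x c i)^2 = (4 * c * T i - κ i) / (1 - κ i) := by
    intro c hc i
    exact Real.sq_sqrt (le_of_lt (div_pos (hpos4 c hc i) (hκ1' i)))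
  set S : ℝ → ℝ := fun c => ∑ i, (d i : ℝ) * T i / x c i with hSdef
  -- S clo ≥ n Tp
  have hxclo : x clo j0 = B j0 := by
    have hT0 : T j0 ≠ 0 := (hT j0).ne'
    have hk0 : (1 : ℝ) - κ j0 ≠ 0 := (hκ1' j0).ne'
    have harg : (4 * clo * T j0 - κ j0) / (1 - κ j0) = (B j0)^2 := by
      rw [hclodef]; field_simp; ring
    simp only [hxdef]
    rw [harg]
    exact Real.sqrt_sq (le_of_lt (hBpos j0))
  have hBval : (d j0 : ℝ) * T j0 / B j0 = n * Tp := by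
    have hdT : (0:ℝ) < (d j0:ℝ) * T j0 := mul_pos (hdpos j0) (hT j0)
    simp only [hBdef]
    rw [div_div_eq_mul_div, mul_comm, mul_div_assoc, div_self hdT.ne', mul_one]
  have hSclo : n * Tp ≤ S clo := by
    simp only [hSdef]
    calc n * Tp = (d j0 : ℝ) * T j0 / x clo j0 := by rw [hxclo, hBval]
      _ ≤ ∑ i, (d i : ℝ) * T i / x clo i := by
          apply Finset.single_le_sum (fun i _ => ?_) (Finset.mem_univ j0)
          exact div_nonneg (mul_nonneg (hdpos i).le (hT i).le) (le_of_lt (hxpos clo hcloc0 i))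
  -- chi with S chi ≤ n Tp
  set chi : ℝ := clo + ∑ j, (κ j + (1 - κ j) * ((m : ℝ) * B j)^2) / (4 * T j) with hchidef
  have hterm_nonneg : ∀ j, 0 ≤ (κ j + (1 - κ j) * ((m : ℝ) * B j)^2) / (4 * T j) := by
    intro j
    apply div_nonneg ?_ (by linarith [hT j])
    have h1 := hκ0 j
    have h2 := (hκ1' j).le
    positivity
  have hchige : ∀ i, (κ i + (1 - κ i) * ((m : ℝ) * B i)^2) / (4 * T i) ≤ chi := by
    intro i
    have h1 : (κ i + (1 - κ i) * ((m : ℝ) * B i)^2) / (4 * T i)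
        ≤ ∑ j, (κ j + (1 - κ j) * ((m : ℝ) * B j)^2) / (4 * T j) :=
      Finset.single_le_sum (fun j _ => hterm_nonneg j) (Finset.mem_univ i)
    rw [hchidef]
    linarith
  have hclochi : clo ≤ chi := by
    have h1 : 0 ≤ ∑ j, (κ j + (1 - κ j) * ((m : ℝ) * B j)^2) / (4 * T j) :=
      Finset.sum_nonneg (fun j _ => hterm_nonneg j)
    rw [hchidef]
    linarith
  have hmBpos : ∀ i, 0 < (m : ℝ) * B i := by
    intro i
    have h1 : (0:ℝ) < (m:ℝ) := by exact_mod_cast hmpos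
    exact mul_pos h1 (hBpos i)
  have hxchi : ∀ i, (m : ℝ) * B i ≤ x chi i := by
    intro i
    have h2 : (0:ℝ) < 4 * T i := by linarith [hT i]
    have h3 : κ i + (1 - κ i) * ((m : ℝ) * B i)^2 ≤ 4 * chi * T i := by
      have h4 := hchige i
      rw [div_le_iff₀ h2] at h4
      linarith
    have h4 : ((m : ℝ) * B i)^2 ≤ (4 * chi * T i - κ i) / (1 - κ i) := by
      rw [le_div_iff₀ (hκ1' i)]
      nlinarith [hκ0 i, sq_nonneg ((m:ℝ) * B i)]
    calc (m : ℝ) * B i = Real.sqrt (((m : ℝ) * B i)^2) :=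
          (Real.sqrt_sq (hmBpos i).le).symm
      _ ≤ x chi i := Real.sqrt_le_sqrt h4
  have hSchi : S chi ≤ n * Tp := by
    simp only [hSdef]
    have key : ∀ i, (d i : ℝ) * T i / x chi i ≤ n * Tp / m := by
      intro i
      have h1 : (d i : ℝ) * T i / x chi i ≤ (d i : ℝ) * T i / ((m : ℝ) * B i) :=
        div_le_div_of_nonneg_left (mul_nonneg (hdpos i).le (hT i).le) (hmBpos i) (hxchi i)
      have hm0 : (m:ℝ) ≠ 0 := by positivity
      have hdT : (0:ℝ) < (d i:ℝ) * T i := mul_pos (hdpos i) (hT i)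
      have h2 : (d i : ℝ) * T i / ((m : ℝ) * B i) = n * Tp / m := by
        simp only [hBdef]
        rw [div_eq_div_iff (mul_pos (by positivity : (0:ℝ) < (m:ℝ)) (hBpos i)).ne' hm0]
        simp only [hBdef]
        field_simp
      linarith
    calc (∑ i, (d i : ℝ) * T i / x chi i) ≤ ∑ _i : Fin m, n * Tp / m :=
          Finset.sum_le_sum (fun i _ => key i)
      _ = n * Tp := by
          rw [Finset.sum_const, Finset.card_univ, Fintype.card_fin, nsmul_eq_mul]
          field_simp
  -- continuity of S on [clo, chi] and IVT
  have hxcont : ∀ i, Continuous (fun c => x c i) := by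
    intro i
    simp only [hxdef]
    apply Real.continuous_sqrt.comp
    fun_prop
  have hScont : ContinuousOn S (Set.Icc clo chi) := by
    simp only [hSdef]
    apply continuousOn_finset_sum
    intro i _
    apply ContinuousOn.div continuousOn_const (hxcont i).continuousOn
    intro c hc
    exact (hxpos c (lt_of_lt_of_le hcloc0 hc.1) i).ne'
  obtain ⟨cstar, hcsmem, hcseq⟩ :=
    intermediate_value_Icc' hclochi hScont ⟨hSchi, hSclo⟩
  have hcsge : clo ≤ cstar := hcsmem.1
  have hcsgt : c0 < cstar := lt_of_lt_of_le hcloc0 hcsge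
  have hcsnonneg : 0 ≤ cstar := (lt_of_le_of_lt hc0nonneg hcsgt).le
  -- at cstar : pointwise x cstar i ≥ B i
  have hxB : ∀ i, (d i : ℝ) * T i ≤ n * Tp * x cstar i := by
    intro i
    have hx := hxpos cstar hcsgt i
    have h1 : (d i : ℝ) * T i / x cstar i ≤ n * Tp := by
      rw [← hcseq]
      simp only [hSdef]
      apply Finset.single_le_sum (fun j _ => ?_) (Finset.mem_univ i)
      exact div_nonneg (mul_nonneg (hdpos j).le (hT j).le) (le_of_lt (hxpos cstar hcsgt j))
    rw [div_le_iff₀ hx] at h1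
    linarith
  -- the function G
  set G : ℝ → ℝ := fun c => (∑ i, (x c i / 2 + 1) * ((d i : ℝ) * (1 - κ i)) / n) - c * Tp
    with hGdef
  have hhalf : (∑ i, (d i : ℝ) * (1 - κ i) / n) = 1 / 2 := by
    rw [← Finset.sum_div, hn, div_eq_div_iff (by linarith) (by norm_num)]
    ring
  -- G cstar > 0 (uses condition Z)
  have hGcstar : 0 < G cstar := by
    have hxval : ∀ i, 4 * cstar * T i = (x cstar i)^2 * (1 - κ i) + κ i := by
      intro i
      have h1 := hxsq cstar hcsgt i
      rw [eq_div_iff (hκ1' i).ne'] at h1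
      linarith
    -- per-term lower bound
    have hpt : ∀ i, (d i : ℝ) * (1 - κ i) / n
        - (n^2 * κ i * Tp^2 - (d i : ℝ)^2 * (1 - κ i) * (T i)^2) / (n * Tp * T i) / (4 * n)
        ≤ (x cstar i / 2 + 1) * ((d i : ℝ) * (1 - κ i)) / n
          - cstar * ((d i : ℝ) * T i / x cstar i) / n := by
      intro i
      have hX : 0 < x cstar i := hxpos cstar hcsgt i
      have hn0 : n ≠ 0 := hnpos.ne'
      have hTp0 : Tp ≠ 0 := hTp.ne'
      have hT0 : T i ≠ 0 := (hT i).ne'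
      have hX0 : x cstar i ≠ 0 := hX.ne'
      have hc' : cstar * T i = ((x cstar i)^2 * (1 - κ i) + κ i) / 4 := by
        linarith [hxval i]
      have hsub : cstar * ((d i : ℝ) * T i / x cstar i) / n
          = ((x cstar i)^2 * (1 - κ i) + κ i) * (d i : ℝ) / (4 * x cstar i * n) := by
        calc cstar * ((d i : ℝ) * T i / x cstar i) / n
            = (cstar * T i) * ((d i : ℝ) / (x cstar i * n)) := by
              field_simp
          _ = (((x cstar i)^2 * (1 - κ i) + κ i) / 4) * ((d i : ℝ) / (x cstar i * n)) := by
              rw [hc']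
          _ = ((x cstar i)^2 * (1 - κ i) + κ i) * (d i : ℝ) / (4 * x cstar i * n) := by
              ring
      rw [hsub]
      have h7 : 0 ≤ n * Tp * x cstar i - (d i : ℝ) * T i := by linarith [hxB i]
      have h8 : 0 ≤ (1 - κ i) * x cstar i * (d i : ℝ) * T i + κ i * (n * Tp) := by
        have h9 : 0 ≤ (1 - κ i) * x cstar i * (d i : ℝ) * T i :=
          mul_nonneg (mul_nonneg (mul_nonneg (hκ1' i).le hX.le) (hdpos i).le) (hT i).le
        have h10 : 0 ≤ κ i * (n * Tp) := mul_nonneg (hκ0 i) hnTp.le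
        linarith
      have hPQ : 0 ≤ ((n * Tp * x cstar i - (d i : ℝ) * T i)
            * ((1 - κ i) * x cstar i * (d i : ℝ) * T i + κ i * (n * Tp)))
          / (4 * n^2 * Tp * T i * x cstar i) :=
        div_nonneg (mul_nonneg h7 h8)
          (mul_nonneg (mul_nonneg (mul_nonneg (by positivity) hTp.le) (hT i).le) hX.le)
      have hid : (d i : ℝ) * (1 - κ i) / n
          - (n^2 * κ i * Tp^2 - (d i : ℝ)^2 * (1 - κ i) * (T i)^2) / (n * Tp * T i) / (4 * n)
          = (x cstar i / 2 + 1) * ((d i : ℝ) * (1 - κ i)) / n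
            - ((x cstar i)^2 * (1 - κ i) + κ i) * (d i : ℝ) / (4 * x cstar i * n)
            - ((n * Tp * x cstar i - (d i : ℝ) * T i)
              * ((1 - κ i) * x cstar i * (d i : ℝ) * T i + κ i * (n * Tp)))
              / (4 * n^2 * Tp * T i * x cstar i) := by
        field_simp
        ring
      rw [hid]
      linarith
    -- summing up
    have hsumle : ∑ i, ((d i : ℝ) * (1 - κ i) / n
        - (n^2 * κ i * Tp^2 - (d i : ℝ)^2 * (1 - κ i) * (T i)^2) / (n * Tp * T i) / (4 * n))
        ≤ ∑ i, ((x cstar i / 2 + 1) * ((d i : ℝ) * (1 - κ i)) / n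
          - cstar * ((d i : ℝ) * T i / x cstar i) / n) :=
      Finset.sum_le_sum (fun i _ => hpt i)
    rw [Finset.sum_sub_distrib, Finset.sum_sub_distrib] at hsumle
    have hZsum : (∑ i, (n^2 * κ i * Tp^2 - (d i : ℝ)^2 * (1 - κ i) * (T i)^2)
        / (n * Tp * T i) / (4 * n)) < 1 / 2 := by
      rw [← Finset.sum_div, div_lt_iff₀ (by positivity : (0:ℝ) < 4 * n)]
      linarith [hZ]
    have hcsum : (∑ i, cstar * ((d i : ℝ) * T i / x cstar i) / n) = cstar * Tp := by
      have h1 : (∑ i, cstar * ((d i : ℝ) * T i / x cstar i) / n)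
          = (cstar * ∑ i, (d i : ℝ) * T i / x cstar i) / n := by
        rw [Finset.mul_sum, Finset.sum_div]
      rw [h1]
      have h2 : (∑ i, (d i : ℝ) * T i / x cstar i) = n * Tp := by
        rw [← hcseq]
      rw [h2]
      field_simp
    simp only [hGdef]
    rw [hhalf] at hsumle
    rw [hcsum] at hsumle
    linarith
  -- a large C with G C < 0
  set M : ℝ := ∑ i, (d i : ℝ) * (1 - κ i) / (2 * n) * Real.sqrt (4 * T i / (1 - κ i))
    with hMdef
  have hMnonneg : 0 ≤ M := by
    apply Finset.sum_nonneg
    intro i _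
    apply mul_nonneg ?_ (Real.sqrt_nonneg _)
    have := (hκ1' i).le
    positivity
  set C : ℝ := cstar + 1 + ((M + 1) / Tp)^2 with hCdef
  have hCnonneg : 0 ≤ C := by
    have := sq_nonneg ((M + 1) / Tp)
    rw [hCdef]
    nlinarith
  have hCge : cstar ≤ C := by
    have := sq_nonneg ((M + 1) / Tp)
    rw [hCdef]
    linarith
  have hsC1 : 1 ≤ Real.sqrt C := by
    rw [show (1:ℝ) = Real.sqrt 1 from Real.sqrt_one.symm]
    apply Real.sqrt_le_sqrt
    have := sq_nonneg ((M + 1) / Tp)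
    rw [hCdef]
    linarith
  have hsC2 : (M + 1) / Tp ≤ Real.sqrt C := by
    rw [show (M + 1) / Tp = Real.sqrt (((M + 1) / Tp)^2) from
      (Real.sqrt_sq (by positivity)).symm]
    apply Real.sqrt_le_sqrt
    rw [hCdef]
    linarith
  have hsCsq : Real.sqrt C * Real.sqrt C = C := Real.mul_self_sqrt hCnonneg
  have hGC : G C < 0 := by
    have hxle : ∀ i, x C i ≤ Real.sqrt C * Real.sqrt (4 * T i / (1 - κ i)) := by
      intro i
      simp only [hxdef]
      rw [← Real.sqrt_mul hCnonneg]
      apply Real.sqrt_le_sqrt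
      rw [show C * (4 * T i / (1 - κ i)) = (4 * C * T i) / (1 - κ i) by ring]
      exact (div_le_div_iff_of_pos_right (hκ1' i)).mpr (by linarith [hκ0 i])
    have hptC : ∀ i, (x C i / 2 + 1) * ((d i : ℝ) * (1 - κ i)) / n
        ≤ (d i : ℝ) * (1 - κ i) / n
          + Real.sqrt C * ((d i : ℝ) * (1 - κ i) / (2 * n) * Real.sqrt (4 * T i / (1 - κ i))) := by
      intro i
      have h1 : 0 ≤ (d i : ℝ) * (1 - κ i) := mul_nonneg (hdpos i).le (hκ1' i).le
      have h2 := hxle i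
      have h3 : (x C i / 2 + 1) * ((d i : ℝ) * (1 - κ i)) / n
          = (d i : ℝ) * (1 - κ i) / n + x C i * ((d i : ℝ) * (1 - κ i) / (2 * n)) := by
        field_simp
        ring
      rw [h3]
      have h4 : x C i * ((d i : ℝ) * (1 - κ i) / (2 * n))
          ≤ (Real.sqrt C * Real.sqrt (4 * T i / (1 - κ i))) * ((d i : ℝ) * (1 - κ i) / (2 * n)) := by
        apply mul_le_mul_of_nonneg_right h2
        positivity
      calc (d i : ℝ) * (1 - κ i) / n + x C i * ((d i : ℝ) * (1 - κ i) / (2 * n))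
          ≤ (d i : ℝ) * (1 - κ i) / n
            + (Real.sqrt C * Real.sqrt (4 * T i / (1 - κ i))) * ((d i : ℝ) * (1 - κ i) / (2 * n)) := by
            linarith
        _ = (d i : ℝ) * (1 - κ i) / n
            + Real.sqrt C * ((d i : ℝ) * (1 - κ i) / (2 * n) * Real.sqrt (4 * T i / (1 - κ i))) := by
            ring
    have hsumC : (∑ i, (x C i / 2 + 1) * ((d i : ℝ) * (1 - κ i)) / n)
        ≤ 1 / 2 + Real.sqrt C * M := by
      calc (∑ i, (x C i / 2 + 1) * ((d i : ℝ) * (1 - κ i)) / n)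
          ≤ ∑ i, ((d i : ℝ) * (1 - κ i) / n
            + Real.sqrt C * ((d i : ℝ) * (1 - κ i) / (2 * n) * Real.sqrt (4 * T i / (1 - κ i)))) :=
            Finset.sum_le_sum (fun i _ => hptC i)
        _ = 1 / 2 + Real.sqrt C * M := by
            rw [Finset.sum_add_distrib, hhalf, ← Finset.mul_sum, hMdef]
    have h5 : M + 1 ≤ Real.sqrt C * Tp := by
      rw [div_le_iff₀ hTp] at hsC2
      linarith
    have h6 : Real.sqrt C * M + 1 ≤ C * Tp := by
      have h7 : (M + 1) * Real.sqrt C ≤ (Real.sqrt C * Tp) * Real.sqrt C :=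
        mul_le_mul_of_nonneg_right h5 (Real.sqrt_nonneg C)
      nlinarith [Real.sqrt_nonneg C, hsC1, hsCsq]
    simp only [hGdef]
    clear_value C
    linarith
  -- IVT for G on [cstar, C]
  have hGcont : Continuous G := by
    simp only [hGdef]
    apply Continuous.sub ?_ (by fun_prop)
    apply continuous_finset_sum
    intro i _
    exact (((hxcont i).div_const 2).add continuous_const).mul continuous_const |>.div_const n
  obtain ⟨chat, hchatmem, hchateq⟩ :=
    intermediate_value_Icc' hCge hGcont.continuousOn ⟨hGC.le, hGcstar.le⟩
  have hchatgt : c0 < chat := lt_of_lt_of_le hcsgt hchatmem.1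
  have hchatpos : 0 < chat := lt_of_le_of_lt hc0nonneg hchatgt
  -- conclusion
  refine ⟨1, x chat, chat, one_pos, fun i => hxpos chat hchatgt i, hchatpos, ?_, ?_⟩
  · intro i
    rw [div_one, hxsq chat hchatgt i, div_mul_cancel₀ _ (hκ1' i).ne']
    ring
  · have h1 : (∑ i, (x chat i / 2 + 1) * ((d i : ℝ) * (1 - κ i)) / n) - chat * Tp = 0 := by
      rw [← hchateq]
    have h2 : ∀ i, x chat i / (2 * 1) = x chat i / 2 := by intro i; ring_nf
    calc ∑ i, (x chat i / (2 * 1) + 1) * ((d i : ℝ) * (1 - κ i)) / n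
        = ∑ i, (x chat i / 2 + 1) * ((d i : ℝ) * (1 - κ i)) / n := by
          apply Finset.sum_congr rfl
          intro i _
          rw [h2 i]
      _ = chat * Tp := by linarith
end
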